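/- arXiv:1107.6016 — 5 statements merged into one kernel-verified Lean document; each statement's English description precedes it below -/
import Mathlib

section
/- Let f : ℝ → ℝ be continuous and set F(t) = ∫₀ᵗ f(s) ds. Fix t₀ ∈ ℝ. Then the pseudo 2-microlocal frontier of F at t₀ is: (i) Σ_{F,t₀}(s') = min(1 + s', 1) for all s' ∈ ℝ, if f(t₀) ≠ 0; (ii) Σ_{F,t₀}(s') = min(Σ_{f,t₀}(s') + 1, 1) for all s' ∈ ℝ, if f(t₀) = 0 but f is not identically 0 on any neighbourhood of t₀; (iii) Σ_{F,t₀}(s') = +∞ for all s' ∈ ℝ, if f is identically 0 on some neighbourhood of t₀. -/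
open MeasureTheory Metric Set Filter

noncomputable section

/-- The `n`-fold iterated integral of `f`, starting from `t₀`. -/
def iterInt (t₀ : ℝ) (f : ℝ → ℝ) : ℕ → ℝ → ℝ
  | 0 => f
  | n + 1 => fun t => ∫ s in t₀..t, iterInt t₀ f n s

/-- Membership in the pseudo 2-microlocal space `C̃^{σ,s'}_{t₀}`, relative to a domain `D`. -/
def PseudoMemOn (D : Set ℝ) (f : ℝ → ℝ) (t₀ σ s' : ℝ) : Prop :=
  if 0 ≤ σ then
    ∃ C > (0:ℝ), ∃ ρ > (0:ℝ), ∀ u ∈ Metric.ball t₀ ρ ∩ D, ∀ v ∈ Metric.ball t₀ ρ ∩ D,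
      |f u - f v| ≤ C * |u - v| ^ σ * (|u - t₀| + |v - t₀|) ^ (-s')
  else
    ∃ C > (0:ℝ), ∃ ρ > (0:ℝ), ∀ u ∈ Metric.ball t₀ ρ ∩ D, ∀ v ∈ Metric.ball t₀ ρ ∩ D,
      |iterInt t₀ (fun s => f s - f t₀) (-⌊σ⌋).toNat u -
          iterInt t₀ (fun s => f s - f t₀) (-⌊σ⌋).toNat v| ≤
        C * |u - v| ^ (σ + ((-⌊σ⌋).toNat : ℝ)) * (|u - t₀| + |v - t₀|) ^ (-s')

/-- The pseudo 2-microlocal frontier `Σ_{f,t₀}(s')`, relative to a domain `D`. -/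
def pseudoFrontierOn (D : Set ℝ) (f : ℝ → ℝ) (t₀ s' : ℝ) : EReal :=
  sSup {x : EReal | ∃ σ : ℝ, x = (σ : EReal) ∧ PseudoMemOn D f t₀ σ s'}

/-- The pseudo pointwise Hölder exponent `ᾱ_{f,t₀}`, relative to a domain `D`. -/
def pseudoPointwiseExpOn (D : Set ℝ) (f : ℝ → ℝ) (t₀ : ℝ) : EReal :=
  sSup {x : EReal | ∃ α : ℝ, x = (α : EReal) ∧
    Filter.limsup
      (fun ρ : ℝ => ⨆ u ∈ Metric.ball t₀ ρ ∩ D, ⨆ v ∈ Metric.ball t₀ ρ ∩ D,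
        ENNReal.ofReal (|f u - f v| / ρ ^ α)) (nhdsWithin 0 (Set.Ioi 0)) < ⊤}

/-- The pseudo local Hölder exponent `α̃_{f,t₀}`, relative to a domain `D`. -/
def pseudoLocalExpOn (D : Set ℝ) (f : ℝ → ℝ) (t₀ : ℝ) : EReal :=
  sSup {x : EReal | ∃ α : ℝ, x = (α : EReal) ∧
    Filter.limsup
      (fun ρ : ℝ => ⨆ u ∈ Metric.ball t₀ ρ ∩ D, ⨆ v ∈ Metric.ball t₀ ρ ∩ D,
        ENNReal.ofReal (|f u - f v| / |u - v| ^ α)) (nhdsWithin 0 (Set.Ioi 0)) < ⊤}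


namespace PFP


def Raw (Φ : ℝ → ℝ) (t₀ ρ C e s' : ℝ) : Prop :=
  ∀ u ∈ Metric.ball t₀ ρ, ∀ v ∈ Metric.ball t₀ ρ,
    |Φ u - Φ v| ≤ C * |u - v| ^ e * (|u - t₀| + |v - t₀|) ^ (-s')

def RawEx (Φ : ℝ → ℝ) (t₀ e s' : ℝ) : Prop := ∃ C > (0:ℝ), ∃ ρ > (0:ℝ), Raw Φ t₀ ρ C e s'

lemma memU_nonneg_iff {g : ℝ → ℝ} {t₀ σ s' : ℝ} (hσ : 0 ≤ σ) :
    PseudoMemOn Set.univ g t₀ σ s' ↔ RawEx g t₀ σ s' := by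
  unfold RawEx Raw
  rw [PseudoMemOn, if_pos hσ]
  simp only [Set.inter_univ]

lemma memU_neg_iff {g : ℝ → ℝ} {t₀ σ s' : ℝ} (hσ : ¬ 0 ≤ σ) :
    PseudoMemOn Set.univ g t₀ σ s' ↔
      RawEx (iterInt t₀ (fun s => g s - g t₀) (-⌊σ⌋).toNat) t₀ (σ + ((-⌊σ⌋).toNat : ℝ)) s' := by
  unfold RawEx Raw
  rw [PseudoMemOn, if_neg hσ]
  simp only [Set.inter_univ]

lemma raw_congr {Φ Ψ : ℝ → ℝ} {t₀ ρ C e s' : ℝ}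
    (h : ∀ u v, |Φ u - Φ v| = |Ψ u - Ψ v|) :
    Raw Φ t₀ ρ C e s' ↔ Raw Ψ t₀ ρ C e s' := by
  unfold Raw
  refine forall₂_congr fun u hu => forall₂_congr fun v hv => ?_
  rw [h]

lemma raw_mono_radius {Φ : ℝ → ℝ} {t₀ ρ ρ' C e s' : ℝ} (h : ρ' ≤ ρ)
    (hr : Raw Φ t₀ ρ C e s') : Raw Φ t₀ ρ' C e s' := fun u hu v hv =>
  hr u (Metric.ball_subset_ball h hu) v (Metric.ball_subset_ball h hv)


lemma iterInt_cont {g : ℝ → ℝ} (hg : Continuous g) (t₀ : ℝ) : ∀ n, Continuous (iterInt t₀ g n)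
  | 0 => hg
  | (n+1) => by
      have ih := iterInt_cont hg t₀ n
      exact intervalIntegral.continuous_primitive (fun a b => ih.intervalIntegrable a b) t₀

lemma iterInt_base {g : ℝ → ℝ} (t₀ : ℝ) (n : ℕ) : iterInt t₀ g (n+1) t₀ = 0 := by
  show (∫ s in t₀..t₀, iterInt t₀ g n s) = 0
  simp

lemma iterInt_succ_shift {g : ℝ → ℝ} (t₀ : ℝ) :
    ∀ n, iterInt t₀ g (n+1) = iterInt t₀ (fun t => ∫ s in t₀..t, g s) n
  | 0 => rfl
  | (n+1) => by
      have ih := iterInt_succ_shift (g := g) t₀ n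
      funext t
      show (∫ s in t₀..t, iterInt t₀ g (n+1) s) = ∫ s in t₀..t, iterInt t₀ (fun t => ∫ s in t₀..t, g s) n s
      rw [ih]

lemma iterInt_neg {g : ℝ → ℝ} (hg : Continuous g) (t₀ : ℝ) :
    ∀ n, iterInt t₀ (fun s => -(g s)) n = fun t => -(iterInt t₀ g n t)
  | 0 => rfl
  | (n+1) => by
      funext t
      show (∫ s in t₀..t, iterInt t₀ (fun s => -(g s)) n s) = -(∫ s in t₀..t, iterInt t₀ g n s)
      rw [iterInt_neg hg t₀ n, intervalIntegral.integral_neg]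

lemma abs_sub_le_max {u v t₀ x : ℝ} (hx : x ∈ Set.uIcc v u) :
    |x - t₀| ≤ max |u - t₀| |v - t₀| := by
  rcases Set.mem_uIcc.1 hx with ⟨h1, h2⟩ | ⟨h1, h2⟩ <;>
  · have a1 := le_abs_self (u - t₀)
    have a2 := le_abs_self (v - t₀)
    have a3 := neg_abs_le (u - t₀)
    have a4 := neg_abs_le (v - t₀)
    have m1 := le_max_left |u - t₀| |v - t₀|
    have m2 := le_max_right |u - t₀| |v - t₀|
    rw [abs_le]
    constructor <;> linarith

lemma mem_ball_of_uIcc {u v t₀ x ρ : ℝ} (hu : u ∈ Metric.ball t₀ ρ) (hv : v ∈ Metric.ball t₀ ρ)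
    (hx : x ∈ Set.uIcc v u) : x ∈ Metric.ball t₀ ρ := by
  rw [Metric.mem_ball, Real.dist_eq] at *
  exact lt_of_le_of_lt (abs_sub_le_max hx) (max_lt hu hv)

/-- the key exponent juggling inequality -/
lemma key_core {uv R ρ e b c : ℝ} (huv : 0 < uv) (h1 : uv ≤ R) (h2 : R ≤ 2*ρ)
    (he0 : 0 ≤ e) (he1 : e ≤ 1) (hc : 0 ≤ b + 1 - e - c) :
    uv * R ^ b ≤ (2*ρ) ^ (b + 1 - e - c) * (uv ^ e * R ^ c) := by
  have hR : 0 < R := lt_of_lt_of_le huv h1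
  have hρ : 0 < 2*ρ := lt_of_lt_of_le hR h2
  have e1 : uv * R ^ b = uv ^ e * (uv ^ (1-e) * R ^ b) := by
    rw [← mul_assoc, ← Real.rpow_add huv]; norm_num
  have e2 : uv ^ (1-e) ≤ R ^ (1-e) := Real.rpow_le_rpow huv.le h1 (by linarith)
  have e3 : R ^ (1-e) * R ^ b = R ^ c * R ^ (b+1-e-c) := by
    rw [← Real.rpow_add hR, ← Real.rpow_add hR]; congr 1; ring
  have e4 : R ^ (b+1-e-c) ≤ (2*ρ) ^ (b+1-e-c) := Real.rpow_le_rpow hR.le h2 hc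
  calc uv * R ^ b = uv ^ e * (uv ^ (1-e) * R ^ b) := e1
    _ ≤ uv ^ e * (R ^ (1-e) * R ^ b) := by
        gcongr
    _ = uv ^ e * (R ^ c * R ^ (b+1-e-c)) := by rw [e3]
    _ ≤ uv ^ e * (R ^ c * (2*ρ) ^ (b+1-e-c)) := by
        gcongr
    _ = _ := by ring

lemma rpow_le_endpoints {d R P e : ℝ} (hd : 0 < d) (h1 : d ≤ R) (h2 : R ≤ P) :
    R ^ e ≤ d ^ e + P ^ e := by
  rcases le_total 0 e with he | he
  · have := Real.rpow_le_rpow (by linarith) h2 he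
    have := Real.rpow_nonneg hd.le e
    linarith
  · have := Real.rpow_le_rpow_of_nonpos hd h1 he
    have : 0 ≤ P ^ e := Real.rpow_nonneg (by linarith) e
    linarith

lemma exists_small_rpow {p ε r₀ : ℝ} (hp : 0 < p) (hε : 0 < ε) (hr₀ : 0 < r₀) :
    ∃ r : ℝ, 0 < r ∧ r < r₀ ∧ r ^ p < ε := by
  set r := min (r₀/2) (ε ^ p⁻¹ / 2) with hr
  have hεp : 0 < ε ^ p⁻¹ := Real.rpow_pos_of_pos hε _
  have hrpos : 0 < r := lt_min (by linarith) (by linarith)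
  refine ⟨r, hrpos, lt_of_le_of_lt (min_le_left _ _) (by linarith), ?_⟩
  have h1 : r < ε ^ p⁻¹ := lt_of_le_of_lt (min_le_right _ _) (by linarith)
  calc r ^ p < (ε ^ p⁻¹) ^ p := Real.rpow_lt_rpow hrpos.le h1 hp
    _ = ε := Real.rpow_inv_rpow hε.le hp.ne'

lemma le_sSup_of_dense {A : Set EReal} {M : EReal}
    (h : ∀ τ : ℝ, (τ : EReal) < M → (τ : EReal) ∈ A) : M ≤ sSup A := by
  by_contra hc
  push_neg at hc
  obtain ⟨r, hr1, hr2⟩ := EReal.exists_between_coe_real hc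
  exact absurd (le_sSup (h r hr2)) (not_le.2 hr1)


lemma iterInt_bound {g : ℝ → ℝ} (hg : Continuous g) {t₀ ρ M : ℝ} {k : ℕ} (hM : 0 ≤ M)
    (h : ∀ s ∈ Metric.ball t₀ ρ, |g s| ≤ M * |s - t₀| ^ k) :
    ∀ n, ∀ t ∈ Metric.ball t₀ ρ, |iterInt t₀ g n t| ≤ M * |t - t₀| ^ (k + n)
  | 0 => by simpa [iterInt] using h
  | (n+1) => by
    intro t ht
    have hρ0 : 0 < ρ := lt_of_le_of_lt dist_nonneg (Metric.mem_ball.1 ht)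
    have ih := iterInt_bound hg hM h n
    have hb : ∀ x ∈ Set.uIoc t₀ t, ‖iterInt t₀ g n x‖ ≤ M * |t - t₀| ^ (k+n) := by
      intro x hx
      have hx' : x ∈ Set.uIcc t₀ t := Set.uIoc_subset_uIcc hx
      have hxb : x ∈ Metric.ball t₀ ρ :=
        mem_ball_of_uIcc ht (Metric.mem_ball_self hρ0) hx'
      have h1 : |x - t₀| ≤ |t - t₀| := by
        have := abs_sub_le_max (u := t) (v := t₀) (t₀ := t₀) hx'
        simpa using this
      calc ‖iterInt t₀ g n x‖ = |iterInt t₀ g n x| := rfl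
        _ ≤ M * |x - t₀| ^ (k+n) := ih x hxb
        _ ≤ M * |t - t₀| ^ (k+n) := by
            have := pow_le_pow_left₀ (abs_nonneg _) h1 (k+n)
            nlinarith
    calc |iterInt t₀ g (n+1) t| ≤ (M * |t - t₀| ^ (k+n)) * |t - t₀| := by
          simpa [Real.norm_eq_abs, iterInt] using intervalIntegral.norm_integral_le_of_norm_le_const hb
      _ = M * |t - t₀| ^ (k + (n+1)) := by rw [show k + (n+1) = (k+n)+1 from rfl, pow_succ]; ring

lemma iterInt_lower {g : ℝ → ℝ} (hg : Continuous g) {t₀ ρ c : ℝ} (hρ : 0 < ρ)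
    (h : ∀ s ∈ Metric.ball t₀ ρ, c ≤ g s) {b : ℝ} (hb0 : t₀ ≤ b) (hbρ : b - t₀ < ρ) :
    ∀ n, ∀ t ∈ Set.Icc t₀ b, c * (t - t₀) ^ n / (n.factorial : ℝ) ≤ iterInt t₀ g n t
  | 0 => by
      intro t ht
      simp only [pow_zero, Nat.factorial_zero, Nat.cast_one, mul_one, div_one]
      have : t ∈ Metric.ball t₀ ρ := by
        rw [Metric.mem_ball, Real.dist_eq, abs_of_nonneg (by linarith [ht.1])]
        linarith [ht.2]
      exact h t this
  | (n+1) => by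
      intro t ht
      have ih := iterInt_lower hg hρ h hb0 hbρ n
      show c * (t - t₀)^(n+1) / ((n+1).factorial : ℝ) ≤ ∫ s in t₀..t, iterInt t₀ g n s
      have hint : (∫ s in t₀..t, c * (s - t₀) ^ n / (n.factorial : ℝ))
          ≤ ∫ s in t₀..t, iterInt t₀ g n s := by
        apply intervalIntegral.integral_mono_on ht.1 _
          ((iterInt_cont hg t₀ n).intervalIntegrable _ _)
        · intro x hx
          exact ih x ⟨hx.1, le_trans hx.2 ht.2⟩
        · apply Continuous.intervalIntegrable
          continuity
      refine le_trans (le_of_eq ?_) hint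
      have h2 : (∫ s in t₀..t, c * (s - t₀) ^ n / (n.factorial : ℝ))
          = (c / (n.factorial : ℝ)) * ∫ s in t₀..t, (s - t₀)^n := by
        rw [← intervalIntegral.integral_const_mul]
        congr 1; funext s; ring
      rw [h2, intervalIntegral.integral_comp_sub_right (fun x => x^n) t₀, sub_self,
        integral_pow]
      have hfact : (((n+1).factorial : ℕ) : ℝ) = ((n:ℝ)+1) * (n.factorial : ℝ) := by
        rw [Nat.factorial_succ]; push_cast; ring
      have hf0 : (n.factorial : ℝ) ≠ 0 := Nat.cast_ne_zero.2 n.factorial_ne_zero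
      have hn0 : ((n:ℝ)+1) ≠ 0 := by positivity
      rw [hfact, zero_pow (Nat.succ_ne_zero n), sub_zero]
      rw [div_mul_div_comm, mul_comm ((n.factorial : ℝ))]

lemma ball_facts {u v t₀ ρ : ℝ} (hu : u ∈ Metric.ball t₀ ρ) (hv : v ∈ Metric.ball t₀ ρ) :
    |u - v| ≤ |u - t₀| + |v - t₀| ∧ |u - t₀| + |v - t₀| ≤ 2 * ρ := by
  rw [Metric.mem_ball, Real.dist_eq] at hu hv
  have h1 := abs_sub_le u t₀ v
  rw [abs_sub_comm t₀ v] at h1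
  exact ⟨h1, by linarith⟩

lemma raw_weaken {Φ : ℝ → ℝ} {t₀ ρ C e s' : ℝ} (hρ : 0 < ρ) (hC : 0 < C)
    (hraw : Raw Φ t₀ ρ C e s') {e'' : ℝ} (h0 : 0 ≤ e'') (h1 : e'' ≤ e) :
    Raw Φ t₀ ρ (C * (2*ρ) ^ (e - e'')) e'' s' := by
  intro u hu v hv
  rcases eq_or_ne u v with rfl | huv
  · simp only [sub_self, abs_zero]
    positivity
  have h2 : 0 < |u - v| := abs_pos.2 (sub_ne_zero.2 huv)
  obtain ⟨hb1, hb2⟩ := ball_facts hu hv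
  have h3 : |u - v| ≤ 2*ρ := le_trans hb1 hb2
  have hRn : (0:ℝ) ≤ (|u - t₀| + |v - t₀|) ^ (-s') := Real.rpow_nonneg (by positivity) _
  refine le_trans (hraw u hu v hv) ?_
  have h4 : |u - v| ^ e ≤ (2*ρ)^(e-e'') * |u - v| ^ e'' := by
    have h6 : |u-v| ^ e = |u-v|^e'' * |u-v|^(e-e'') := by
      rw [← Real.rpow_add h2]; congr 1; ring
    have h5 := Real.rpow_le_rpow h2.le h3 (by linarith : 0 ≤ e - e'')
    rw [h6]
    have := Real.rpow_nonneg h2.le e''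
    nlinarith
  calc C * |u - v| ^ e * (|u - t₀| + |v - t₀|) ^ (-s')
      ≤ C * ((2*ρ)^(e-e'') * |u - v| ^ e'') * (|u - t₀| + |v - t₀|) ^ (-s') := by
        have := mul_le_mul_of_nonneg_left h4 hC.le
        exact mul_le_mul_of_nonneg_right this hRn
    _ = C * (2*ρ) ^ (e - e'') * |u - v| ^ e'' * (|u - t₀| + |v - t₀|) ^ (-s') := by ring

lemma raw_step {Φ : ℝ → ℝ} (hΦc : Continuous Φ) {t₀ ρ C e s' : ℝ} (hρ : 0 < ρ) (hC : 0 < C)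
    (hΦ0 : Φ t₀ = 0) (hs' : s' ≤ 0) (he : 0 ≤ e)
    (hraw : Raw Φ t₀ ρ C e s') {e' : ℝ} (he'0 : 0 ≤ e') (he'1 : e' ≤ 1) (he'e : e' ≤ e + 1) :
    Raw (fun t => ∫ s in t₀..t, Φ s) t₀ ρ (C * (2*ρ) ^ (e + 1 - e')) e' s' := by
  intro u hu v hv
  rcases eq_or_ne u v with rfl | huv
  · simp only [sub_self, abs_zero]
    positivity
  have h2 : 0 < |u - v| := abs_pos.2 (sub_ne_zero.2 huv)
  obtain ⟨hb1, hb2⟩ := ball_facts hu hv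
  set R := |u - t₀| + |v - t₀| with hR
  have hR0 : 0 < R := lt_of_lt_of_le h2 hb1
  have hdiff : (∫ s in t₀..u, Φ s) - ∫ s in t₀..v, Φ s = ∫ s in v..u, Φ s :=
    intervalIntegral.integral_interval_sub_left (hΦc.intervalIntegrable t₀ u)
      (hΦc.intervalIntegrable t₀ v)
  have hbd : ∀ x ∈ Set.uIoc v u, ‖Φ x‖ ≤ C * R ^ e * R ^ (-s') := by
    intro x hx
    have hx' : x ∈ Set.uIcc v u := Set.uIoc_subset_uIcc hx
    have hxb : x ∈ Metric.ball t₀ ρ := mem_ball_of_uIcc hu hv hx'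
    have hxt : |x - t₀| ≤ R := by
      refine le_trans (abs_sub_le_max hx') ?_
      exact max_le (le_add_of_nonneg_right (abs_nonneg _)) (le_add_of_nonneg_left (abs_nonneg _))
    have := hraw x hxb t₀ (Metric.mem_ball_self hρ)
    rw [hΦ0, sub_zero, sub_self, abs_zero, add_zero] at this
    refine le_trans this ?_
    have g1 : |x - t₀| ^ e ≤ R ^ e := Real.rpow_le_rpow (abs_nonneg _) hxt he
    have g2 : |x - t₀| ^ (-s') ≤ R ^ (-s') := Real.rpow_le_rpow (abs_nonneg _) hxt (by linarith)
    have g3 : (0:ℝ) ≤ |x - t₀| ^ (-s') := Real.rpow_nonneg (abs_nonneg _) _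
    have g4 : (0:ℝ) ≤ R ^ e := Real.rpow_nonneg hR0.le _
    nlinarith [mul_le_mul g1 g2 g3 g4, hC.le]
  have habs : |(∫ s in t₀..u, Φ s) - ∫ s in t₀..v, Φ s| ≤ (C * R ^ e * R ^ (-s')) * |u - v| := by
    rw [hdiff]
    simpa [Real.norm_eq_abs] using intervalIntegral.norm_integral_le_of_norm_le_const hbd
  refine le_trans habs ?_
  have hkey : |u - v| * R ^ e ≤ (2*ρ) ^ (e + 1 - e') * (|u - v| ^ e' * R ^ (0:ℝ)) := by
    have := key_core h2 hb1 hb2 he'0 he'1 (by linarith : (0:ℝ) ≤ e + 1 - e' - 0)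
    simpa using this
  rw [Real.rpow_zero, mul_one] at hkey
  have hRn : (0:ℝ) ≤ R ^ (-s') := Real.rpow_nonneg hR0.le _
  calc C * R ^ e * R ^ (-s') * |u - v| = (C * R ^ (-s')) * (|u - v| * R ^ e) := by ring
    _ ≤ (C * R ^ (-s')) * ((2*ρ) ^ (e + 1 - e') * |u - v| ^ e') := by
        have hCR : (0:ℝ) ≤ C * R ^ (-s') := by positivity
        exact mul_le_mul_of_nonneg_left hkey hCR
    _ = C * (2*ρ) ^ (e + 1 - e') * |u - v| ^ e' * R ^ (-s') := by ring


lemma iterInt_f'_zero (f : ℝ → ℝ) (t₀ : ℝ) :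
    ∀ n, iterInt t₀ (fun s => f s - f t₀) n t₀ = 0
  | 0 => sub_self _
  | (n+1) => iterInt_base t₀ n

lemma rawEx_step {Φ : ℝ → ℝ} {t₀ s' e : ℝ} (hΦc : Continuous Φ) (hΦ0 : Φ t₀ = 0)
    (hs' : s' ≤ 0) (he : 0 ≤ e) (h : RawEx Φ t₀ e s') {e' : ℝ}
    (he'0 : 0 ≤ e') (he'1 : e' ≤ 1) (he'e : e' ≤ e + 1) :
    RawEx (fun t => ∫ s in t₀..t, Φ s) t₀ e' s' := by
  obtain ⟨C, hC, ρ, hρ, hraw⟩ := h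
  exact ⟨_, by positivity, ρ, hρ, raw_step hΦc hρ hC hΦ0 hs' he hraw he'0 he'1 he'e⟩

lemma rawEx_weaken {Φ : ℝ → ℝ} {t₀ s' e : ℝ} (h : RawEx Φ t₀ e s') {e'' : ℝ}
    (h0 : 0 ≤ e'') (h1 : e'' ≤ e) : RawEx Φ t₀ e'' s' := by
  obtain ⟨C, hC, ρ, hρ, hraw⟩ := h
  exact ⟨_, by positivity, ρ, hρ, raw_weaken hρ hC hraw h0 h1⟩

lemma reach {f : ℝ → ℝ} (hf : Continuous f) (t₀ s' : ℝ) (hs' : s' ≤ 0) :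
    ∀ (k n : ℕ) (e e' : ℝ), 0 ≤ e → 0 ≤ e' →
      e' ≤ e + k → (k = 0 → e' ≤ e) → (k ≠ 0 → e' ≤ 1) →
      RawEx (iterInt t₀ (fun s => f s - f t₀) n) t₀ e s' →
      RawEx (iterInt t₀ (fun s => f s - f t₀) (n + k)) t₀ e' s'
  | 0 => by
      intro n e e' he he' _ h0 _ hex
      exact rawEx_weaken hex he' (h0 rfl)
  | (k+1) => by
      intro n e e' he he' hsum _ h1 hex
      have hf' : Continuous (fun s => f s - f t₀) := hf.sub continuous_const
      have hemin : (0:ℝ) ≤ min (e + k) 1 := le_min (by positivity) zero_le_one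
      have ih := reach hf t₀ s' hs' k n e (min (e + (k:ℝ)) 1) he hemin
        (min_le_left _ _)
        (fun hk0 => by
          subst hk0
          exact le_trans (min_le_left _ _) (by norm_num))
        (fun _ => min_le_right _ _) hex
      have hstep := rawEx_step (Φ := iterInt t₀ (fun s => f s - f t₀) (n + k))
        (iterInt_cont hf' t₀ (n+k)) (iterInt_f'_zero f t₀ (n+k)) hs' hemin ih he'
        (h1 (Nat.succ_ne_zero k))
        (by
          rcases le_total (e + (k:ℝ)) 1 with hm | hm
          · rw [min_eq_left hm]
            push_cast at hsum ⊢
            linarith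
          · rw [min_eq_right hm]
            linarith [h1 (Nat.succ_ne_zero k)])
      exact hstep

lemma floor_facts {τ : ℝ} (hτ : τ < 0) :
    1 ≤ (-⌊τ⌋).toNat ∧ (((-⌊τ⌋).toNat : ℕ) : ℝ) = -(⌊τ⌋:ℝ) ∧
      0 ≤ τ + (((-⌊τ⌋).toNat : ℕ) : ℝ) ∧ τ + (((-⌊τ⌋).toNat : ℕ) : ℝ) < 1 := by
  have h1 : ⌊τ⌋ < 0 := Int.floor_lt.2 (by exact_mod_cast hτ)
  have h2 : (0:ℤ) ≤ -⌊τ⌋ := by omega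
  have h3' : ((-⌊τ⌋).toNat : ℤ) = -⌊τ⌋ := Int.toNat_of_nonneg h2
  have h3 : (((-⌊τ⌋).toNat : ℕ) : ℝ) = -(⌊τ⌋:ℝ) := by exact_mod_cast h3'
  have h4 : (⌊τ⌋:ℝ) ≤ τ := Int.floor_le τ
  have h5 : τ < (⌊τ⌋:ℝ) + 1 := Int.lt_floor_add_one τ
  exact ⟨by omega, h3, by linarith, by linarith⟩

lemma descend {f : ℝ → ℝ} (hf : Continuous f) {t₀ σ' τ s' : ℝ} (hs' : s' ≤ 0)
    (hτ : τ < 0) (hτσ : τ ≤ σ') (h : PseudoMemOn Set.univ f t₀ σ' s') :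
    PseudoMemOn Set.univ f t₀ τ s' := by
  obtain ⟨hM1, hcast, he0, he1⟩ := floor_facts hτ
  rcases le_or_gt 0 σ' with hσ | hσ
  · rw [memU_nonneg_iff hσ] at h
    rw [memU_neg_iff (not_le.2 hτ)]
    have h0 : RawEx (iterInt t₀ (fun s => f s - f t₀) 0) t₀ σ' s' := by
      obtain ⟨C, hC, ρ, hρ, hraw⟩ := h
      refine ⟨C, hC, ρ, hρ, (raw_congr (fun u v => ?_) ).2 hraw⟩
      show |(f u - f t₀) - (f v - f t₀)| = |f u - f v|
      rw [sub_sub_sub_cancel_right]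
    have hr := reach hf t₀ s' hs' ((-⌊τ⌋).toNat) 0 σ' (τ + (((-⌊τ⌋).toNat : ℕ) : ℝ)) hσ he0
      (by linarith) (fun hk0 => absurd hk0 (by omega)) (fun _ => he1.le) h0
    rwa [Nat.zero_add] at hr
  · obtain ⟨hM1σ, hcastσ, he0σ, he1σ⟩ := floor_facts hσ
    rw [memU_neg_iff (not_le.2 hσ)] at h
    rw [memU_neg_iff (not_le.2 hτ)]
    have hfl : ⌊τ⌋ ≤ ⌊σ'⌋ := Int.floor_le_floor hτσ
    have hflσ : ⌊σ'⌋ < 0 := Int.floor_lt.2 (by exact_mod_cast hσ)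
    have hk : (-⌊σ'⌋).toNat ≤ (-⌊τ⌋).toNat := by omega
    have hkcast : ((((-⌊τ⌋).toNat - (-⌊σ'⌋).toNat : ℕ)) : ℝ)
        = (((-⌊τ⌋).toNat : ℕ) : ℝ) - (((-⌊σ'⌋).toNat : ℕ) : ℝ) := by
      push_cast [Nat.cast_sub hk]
      ring
    have hr := reach hf t₀ s' hs' ((-⌊τ⌋).toNat - (-⌊σ'⌋).toNat) ((-⌊σ'⌋).toNat)
      (σ' + (((-⌊σ'⌋).toNat : ℕ) : ℝ)) (τ + (((-⌊τ⌋).toNat : ℕ) : ℝ)) he0σ he0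
      (by rw [hkcast]; linarith)
      (fun hk0 => by
        have : (-⌊σ'⌋).toNat = (-⌊τ⌋).toNat := by omega
        rw [this] at *
        linarith)
      (fun _ => he1.le) h
    rwa [Nat.add_sub_cancel' hk] at hr


lemma F_cont {f F : ℝ → ℝ} (hf : Continuous f) (hF : ∀ t, F t = ∫ s in (0:ℝ)..t, f s) :
    Continuous F := by
  have h : F = fun t => ∫ s in (0:ℝ)..t, f s := funext hF
  rw [h]
  exact intervalIntegral.continuous_primitive (fun a b => hf.intervalIntegrable a b) 0

lemma F_sub {f F : ℝ → ℝ} (hf : Continuous f) (hF : ∀ t, F t = ∫ s in (0:ℝ)..t, f s)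
    (u v : ℝ) : F u - F v = ∫ s in v..u, f s := by
  rw [hF u, hF v]
  exact intervalIntegral.integral_interval_sub_left (hf.intervalIntegrable 0 u)
    (hf.intervalIntegrable 0 v)

lemma f_bound {f : ℝ → ℝ} (hf : Continuous f) (t₀ : ℝ) :
    ∃ L > (0:ℝ), ∀ s ∈ Metric.ball t₀ 1, |f s| ≤ L := by
  obtain ⟨L, hL⟩ := (isCompact_Icc (a := t₀-1) (b := t₀+1)).exists_bound_of_continuousOn
    hf.continuousOn
  refine ⟨max L 1, lt_of_lt_of_le one_pos (le_max_right _ _), fun s hs => ?_⟩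
  rw [Metric.mem_ball, Real.dist_eq] at hs
  have h1 := abs_lt.1 hs
  have h2 := hL s ⟨by linarith [h1.1], by linarith [h1.2]⟩
  exact le_trans (by simpa [Real.norm_eq_abs] using h2) (le_max_left _ _)

lemma F_lip {f F : ℝ → ℝ} {t₀ : ℝ} (hf : Continuous f)
    (hF : ∀ t, F t = ∫ s in (0:ℝ)..t, f s) {L : ℝ}
    (hL : ∀ s ∈ Metric.ball t₀ 1, |f s| ≤ L) :
    ∀ u ∈ Metric.ball t₀ 1, ∀ v ∈ Metric.ball t₀ 1, |F u - F v| ≤ L * |u - v| := by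
  intro u hu v hv
  rw [F_sub hf hF u v]
  have h : ∀ x ∈ Set.uIoc v u, ‖f x‖ ≤ L := fun x hx =>
    hL x (mem_ball_of_uIcc hu hv (Set.uIoc_subset_uIcc hx))
  simpa [Real.norm_eq_abs] using intervalIntegral.norm_integral_le_of_norm_le_const h

lemma memF_low {f F : ℝ → ℝ} (hf : Continuous f) (hF : ∀ t, F t = ∫ s in (0:ℝ)..t, f s)
    (t₀ : ℝ) {σ s' : ℝ} (h1 : σ ≤ 1) (h2 : σ ≤ 1 + s') :
    PseudoMemOn Set.univ F t₀ σ s' := by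
  obtain ⟨L, hL0, hL⟩ := f_bound hf t₀
  rcases le_or_gt 0 σ with hσ | hσ
  · rw [memU_nonneg_iff hσ]
    refine ⟨L * (2*(1:ℝ)) ^ ((0:ℝ) + 1 - σ - (-s')), by positivity, 1, one_pos, ?_⟩
    intro u hu v hv
    rcases eq_or_ne u v with rfl | huv
    · simp only [sub_self, abs_zero]
      positivity
    obtain ⟨hb1, hb2⟩ := ball_facts hu hv
    have h2' : 0 < |u - v| := abs_pos.2 (sub_ne_zero.2 huv)
    have hlip := F_lip hf hF hL u hu v hv
    refine le_trans hlip ?_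
    have hkey := key_core (ρ := 1) (b := (0:ℝ)) (c := -s') h2' hb1 hb2 hσ h1
      (by linarith : (0:ℝ) ≤ 0 + 1 - σ - (-s'))
    rw [Real.rpow_zero, mul_one] at hkey
    refine le_trans (mul_le_mul_of_nonneg_left hkey hL0.le) (le_of_eq ?_)
    ring
  · rw [memU_neg_iff (not_le.2 hσ)]
    obtain ⟨hM1, hcast, he0, he1⟩ := floor_facts hσ
    set m := (-⌊σ⌋).toNat with hmdef
    obtain ⟨k, hk⟩ : ∃ k, m = k + 1 := ⟨m - 1, by omega⟩
    have hmc : (m:ℝ) = (k:ℝ) + 1 := by exact_mod_cast congrArg (Nat.cast : ℕ → ℝ) hk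
    have hFc := F_cont hf hF
    have hgc : Continuous (fun s => F s - F t₀) := hFc.sub continuous_const
    have hgb : ∀ s ∈ Metric.ball t₀ 1, |F s - F t₀| ≤ L * |s - t₀| ^ 1 := by
      intro s hs
      simpa using F_lip hf hF hL s hs t₀ (Metric.mem_ball_self one_pos)
    have hbnd := iterInt_bound hgc hL0.le hgb
    refine ⟨L * (2*(1:ℝ)) ^ ((((1+k:ℕ)):ℝ) + 1 - (σ + (m:ℝ)) - (-s')), by positivity,
      1, one_pos, ?_⟩
    intro u hu v hv
    rcases eq_or_ne u v with rfl | huv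
    · simp only [sub_self, abs_zero]
      positivity
    obtain ⟨hb1, hb2⟩ := ball_facts hu hv
    have h2' : 0 < |u - v| := abs_pos.2 (sub_ne_zero.2 huv)
    have hR0 : 0 < |u - t₀| + |v - t₀| := lt_of_lt_of_le h2' hb1
    have hdiff : iterInt t₀ (fun s => F s - F t₀) m u - iterInt t₀ (fun s => F s - F t₀) m v
        = ∫ s in v..u, iterInt t₀ (fun s => F s - F t₀) k s := by
      rw [hk]
      exact intervalIntegral.integral_interval_sub_left
        ((iterInt_cont hgc t₀ k).intervalIntegrable _ _)
        ((iterInt_cont hgc t₀ k).intervalIntegrable _ _)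
    have hbd : ∀ x ∈ Set.uIoc v u, ‖iterInt t₀ (fun s => F s - F t₀) k x‖
        ≤ L * (|u - t₀| + |v - t₀|) ^ (1+k) := by
      intro x hx
      have hx' : x ∈ Set.uIcc v u := Set.uIoc_subset_uIcc hx
      have hxb : x ∈ Metric.ball t₀ 1 := mem_ball_of_uIcc hu hv hx'
      have hxt : |x - t₀| ≤ |u - t₀| + |v - t₀| := by
        refine le_trans (abs_sub_le_max hx') ?_
        exact max_le (le_add_of_nonneg_right (abs_nonneg _))
          (le_add_of_nonneg_left (abs_nonneg _))
      refine le_trans (hbnd k x hxb) ?_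
      have := pow_le_pow_left₀ (abs_nonneg _) hxt (1+k)
      nlinarith
    have habs : |iterInt t₀ (fun s => F s - F t₀) m u - iterInt t₀ (fun s => F s - F t₀) m v|
        ≤ (L * (|u - t₀| + |v - t₀|) ^ (1+k)) * |u - v| := by
      rw [hdiff]
      simpa [Real.norm_eq_abs] using intervalIntegral.norm_integral_le_of_norm_le_const hbd
    refine le_trans habs ?_
    have hkey := key_core (ρ := 1) (b := (((1+k:ℕ)):ℝ)) (c := -s') (e := σ + (m:ℝ))
      h2' hb1 hb2 he0 he1.le (by push_cast; linarith : (0:ℝ) ≤ (((1+k:ℕ)):ℝ) + 1 - (σ + (m:ℝ)) - (-s'))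
    rw [Real.rpow_natCast] at hkey
    calc L * (|u - t₀| + |v - t₀|) ^ (1+k) * |u - v|
        = L * (|u - v| * (|u - t₀| + |v - t₀|) ^ (1+k)) := by ring
      _ ≤ L * ((2*(1:ℝ)) ^ ((((1+k:ℕ)):ℝ) + 1 - (σ + (m:ℝ)) - (-s'))
            * (|u - v| ^ (σ + (m:ℝ)) * (|u - t₀| + |v - t₀|) ^ (-s'))) :=
          mul_le_mul_of_nonneg_left hkey hL0.le
      _ = _ := by ring

lemma iterInt_shift_F {f F : ℝ → ℝ} {t₀ : ℝ} (hf : Continuous f)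
    (hF : ∀ t, F t = ∫ s in (0:ℝ)..t, f s) (h0 : f t₀ = 0) (n : ℕ) :
    iterInt t₀ (fun s => f s - f t₀) (n+1) = iterInt t₀ (fun s => F s - F t₀) n := by
  have h1 : (fun s => f s - f t₀) = f := by funext s; rw [h0, sub_zero]
  have h2 : (fun t => ∫ s in t₀..t, f s) = fun s => F s - F t₀ := by
    funext t
    exact (F_sub hf hF t t₀).symm
  rw [h1, iterInt_succ_shift, h2]

lemma rawEx_sub_const (Φ : ℝ → ℝ) (c t₀ e s' : ℝ) :
    RawEx (fun t => Φ t - c) t₀ e s' ↔ RawEx Φ t₀ e s' := by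
  unfold RawEx
  refine exists_congr fun C => and_congr_right fun _ =>
    exists_congr fun ρ => and_congr_right fun _ => raw_congr fun u v => ?_
  show |(Φ u - c) - (Φ v - c)| = _
  rw [sub_sub_sub_cancel_right]

lemma memA {f F : ℝ → ℝ} {t₀ : ℝ} (hf : Continuous f)
    (hF : ∀ t, F t = ∫ s in (0:ℝ)..t, f s) (h0 : f t₀ = 0) {σ s' : ℝ} (hσ1 : σ < 1) :
    PseudoMemOn Set.univ F t₀ σ s' ↔ PseudoMemOn Set.univ f t₀ (σ-1) s' := by
  have hτ : σ - 1 < 0 := by linarith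
  rcases le_or_gt 0 σ with hσ | hσ
  · have hfl : ⌊σ - 1⌋ = -1 := by
      rw [Int.floor_eq_iff]
      constructor <;> push_cast <;> linarith
    rw [memU_nonneg_iff hσ, memU_neg_iff (not_le.2 hτ), hfl]
    have ht1 : ((-(-1:ℤ)).toNat) = 1 := by decide
    rw [ht1]
    have he : σ - 1 + (((1:ℕ)):ℝ) = σ := by push_cast; ring
    rw [he]
    have hfun : iterInt t₀ (fun s => f s - f t₀) 1 = fun t => F t - F t₀ :=
      iterInt_shift_F hf hF h0 0
    rw [hfun]
    exact (rawEx_sub_const F (F t₀) t₀ σ s').symm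
  · have hflσ : ⌊σ⌋ < 0 := Int.floor_lt.2 (by exact_mod_cast hσ)
    have hfl : ⌊σ - 1⌋ = ⌊σ⌋ - 1 := by
      have := Int.floor_sub_intCast σ 1
      simpa using this
    rw [memU_neg_iff (not_le.2 hσ), memU_neg_iff (not_le.2 hτ), hfl]
    have h2 : (-(⌊σ⌋ - 1)).toNat = (-⌊σ⌋).toNat + 1 := by omega
    rw [h2]
    have he : σ - 1 + ((((-⌊σ⌋).toNat + 1 : ℕ)):ℝ) = σ + (((-⌊σ⌋).toNat : ℕ):ℝ) := by
      push_cast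
      ring
    rw [he, iterInt_shift_F hf hF h0 ((-⌊σ⌋).toNat)]


lemma integral_abs_lower {f : ℝ → ℝ} (hf : Continuous f) {a b c : ℝ} (hab : a ≤ b) (hc : 0 < c)
    (h : (∀ x ∈ Set.Icc a b, c ≤ f x) ∨ (∀ x ∈ Set.Icc a b, f x ≤ -c)) :
    c * (b - a) ≤ |∫ s in a..b, f s| := by
  rcases h with h | h
  · have h1 : (∫ _ in a..b, (c:ℝ)) ≤ ∫ s in a..b, f s :=
      intervalIntegral.integral_mono_on hab intervalIntegrable_const
        (hf.intervalIntegrable _ _) h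
    rw [intervalIntegral.integral_const, smul_eq_mul] at h1
    refine le_trans ?_ (le_abs_self _)
    nlinarith
  · have h1 : (∫ s in a..b, f s) ≤ ∫ _ in a..b, (-c:ℝ) :=
      intervalIntegral.integral_mono_on hab (hf.intervalIntegrable _ _)
        intervalIntegrable_const h
    rw [intervalIntegral.integral_const, smul_eq_mul] at h1
    refine le_trans ?_ (neg_le_abs _)
    nlinarith

lemma refute_a {f F : ℝ → ℝ} {t₀ ρ₀ c : ℝ} (hf : Continuous f)
    (hF : ∀ t, F t = ∫ s in (0:ℝ)..t, f s) (hc : 0 < c) (hρ₀ : 0 < ρ₀)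
    (hpos : ∀ s ∈ Metric.ball t₀ ρ₀, c ≤ f s) {σ s' : ℝ} (hσ : 0 ≤ σ)
    (hgt : 1 < σ - s') : ¬ PseudoMemOn Set.univ F t₀ σ s' := by
  rw [memU_nonneg_iff hσ]
  rintro ⟨C, hC, ρ, hρ, hraw⟩
  obtain ⟨r, hr0, hrlt, hrp⟩ := exists_small_rpow (p := σ - s' - 1) (ε := c / C)
    (by linarith) (by positivity) (lt_min hρ hρ₀)
  have hrρ : r < ρ := lt_of_lt_of_le hrlt (min_le_left _ _)
  have hrρ₀ : r < ρ₀ := lt_of_lt_of_le hrlt (min_le_right _ _)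
  have hu : t₀ + r ∈ Metric.ball t₀ ρ := by
    rw [Metric.mem_ball, Real.dist_eq, show t₀ + r - t₀ = r by ring, abs_of_pos hr0]
    exact hrρ
  have hlow : c * r ≤ F (t₀ + r) - F t₀ := by
    rw [F_sub hf hF]
    have h1 : (∫ _ in t₀..t₀+r, (c:ℝ)) ≤ ∫ s in t₀..t₀+r, f s :=
      intervalIntegral.integral_mono_on (by linarith) intervalIntegrable_const
        (hf.intervalIntegrable _ _) (fun x hx => hpos x (by
          rw [Metric.mem_ball, Real.dist_eq, abs_of_nonneg (by linarith [hx.1])]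
          linarith [hx.2]))
    rw [intervalIntegral.integral_const, smul_eq_mul] at h1
    nlinarith
  have hup := hraw (t₀+r) hu t₀ (Metric.mem_ball_self hρ)
  rw [show t₀ + r - t₀ = r by ring, sub_self, abs_zero, add_zero, abs_of_pos hr0] at hup
  have hsplit : r ^ σ * r ^ (-s') = r ^ (σ - s' - 1) * r ^ (1:ℝ) := by
    rw [← Real.rpow_add hr0, ← Real.rpow_add hr0]
    congr 1
    ring
  rw [Real.rpow_one] at hsplit
  have hchain : c * r ≤ C * (r ^ (σ - s' - 1) * r) :=
    calc c * r ≤ F (t₀ + r) - F t₀ := hlow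
      _ ≤ |F (t₀ + r) - F t₀| := le_abs_self _
      _ ≤ C * r ^ σ * r ^ (-s') := hup
      _ = C * (r ^ (σ - s' - 1) * r) := by rw [mul_assoc, hsplit]
  have hfin : r ^ (σ - s' - 1) * C < c := (lt_div_iff₀ hC).1 hrp
  nlinarith

lemma refute_c {f F : ℝ → ℝ} {t₀ ρ₀ c : ℝ} (hf : Continuous f)
    (hF : ∀ t, F t = ∫ s in (0:ℝ)..t, f s) (hc : 0 < c) (hρ₀ : 0 < ρ₀)
    (hpos : ∀ s ∈ Metric.ball t₀ ρ₀, c ≤ f s) {σ s' : ℝ} (hσ : σ < 0)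
    (hgt : 1 < σ - s') : ¬ PseudoMemOn Set.univ F t₀ σ s' := by
  rw [memU_neg_iff (not_le.2 hσ)]
  rintro ⟨C, hC, ρ, hρ, hraw⟩
  obtain ⟨hM1, hcast, he0, he1⟩ := floor_facts hσ
  set m := (-⌊σ⌋).toNat with hm
  have hshift : iterInt t₀ (fun s => F s - F t₀) m = iterInt t₀ f (m+1) := by
    have hfun : (fun t => ∫ s in t₀..t, f s) = fun s => F s - F t₀ := by
      funext t
      exact (F_sub hf hF t t₀).symm
    rw [iterInt_succ_shift, hfun]
  have hfac : (0:ℝ) < ((m+1).factorial : ℝ) := by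
    exact_mod_cast Nat.factorial_pos (m+1)
  obtain ⟨r, hr0, hrlt, hrp⟩ := exists_small_rpow (p := σ - s' - 1)
    (ε := c / (((m+1).factorial : ℝ) * C)) (by linarith) (by positivity) (lt_min hρ hρ₀)
  have hrρ : r < ρ := lt_of_lt_of_le hrlt (min_le_left _ _)
  have hrρ₀ : r < ρ₀ := lt_of_lt_of_le hrlt (min_le_right _ _)
  have hu : t₀ + r ∈ Metric.ball t₀ ρ := by
    rw [Metric.mem_ball, Real.dist_eq, show t₀ + r - t₀ = r by ring, abs_of_pos hr0]
    exact hrρ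
  have hlow := iterInt_lower hf hρ₀ hpos (b := t₀ + r) (by linarith)
    (by rw [show t₀ + r - t₀ = r by ring]; exact hrρ₀) (m+1) (t₀+r)
    ⟨by linarith, le_refl _⟩
  rw [show t₀ + r - t₀ = r by ring] at hlow
  have hup := hraw (t₀+r) hu t₀ (Metric.mem_ball_self hρ)
  rw [hshift, iterInt_base, sub_zero] at hup
  rw [show t₀ + r - t₀ = r by ring, sub_self, abs_zero, add_zero, abs_of_pos hr0] at hup
  have hsplit : r ^ (σ + (m:ℝ)) * r ^ (-s') = r ^ (σ - s' - 1) * r ^ (((m+1:ℕ)):ℝ) := by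
    rw [← Real.rpow_add hr0, ← Real.rpow_add hr0]
    congr 1
    push_cast
    ring
  rw [Real.rpow_natCast] at hsplit
  have hpow : (0:ℝ) < r ^ (m+1) := pow_pos hr0 _
  have hchain : c * r ^ (m+1) / ((m+1).factorial : ℝ) ≤ C * (r ^ (σ - s' - 1) * r ^ (m+1)) :=
    calc c * r ^ (m+1) / ((m+1).factorial : ℝ) ≤ iterInt t₀ f (m+1) (t₀+r) := hlow
      _ ≤ |iterInt t₀ f (m+1) (t₀+r)| := le_abs_self _
      _ ≤ C * r ^ (σ + (m:ℝ)) * r ^ (-s') := hup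
      _ = C * (r ^ (σ - s' - 1) * r ^ (m+1)) := by rw [mul_assoc, hsplit]
  have hfin : r ^ (σ - s' - 1) * (((m+1).factorial : ℝ) * C) < c := (lt_div_iff₀ (by positivity)).1 hrp
  rw [div_le_iff₀ hfac] at hchain
  nlinarith


lemma refute_b {f F : ℝ → ℝ} {t₀ : ℝ} (hf : Continuous f)
    (hF : ∀ t, F t = ∫ s in (0:ℝ)..t, f s)
    (hne : ∀ ρ' > (0:ℝ), ∃ t₁ ∈ Metric.ball t₀ ρ', t₁ ≠ t₀ ∧ f t₁ ≠ 0)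
    {σ s' : ℝ} (hσ : 1 < σ) : ¬ PseudoMemOn Set.univ F t₀ σ s' := by
  rw [memU_nonneg_iff (by linarith : (0:ℝ) ≤ σ)]
  rintro ⟨C, hC, ρ, hρ, hraw⟩
  obtain ⟨t₁, ht₁b, ht₁0, hft₁⟩ := hne (ρ/2) (by linarith)
  rw [Metric.mem_ball, Real.dist_eq] at ht₁b
  set c := |f t₁| / 2 with hcdef
  have habs : 0 < |f t₁| := abs_pos.2 hft₁
  have hc : 0 < c := by positivity
  obtain ⟨δ, hδ0, hδ⟩ := Metric.continuousAt_iff.1 hf.continuousAt c hc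
  set δ' := min δ (ρ/2) with hδ'def
  have hδ'0 : 0 < δ' := lt_min hδ0 (by linarith)
  have hsub : ∀ x : ℝ, |x - t₁| ≤ δ'/2 → x ∈ Metric.ball t₀ ρ := by
    intro x hx
    rw [Metric.mem_ball, Real.dist_eq]
    have h1 : |x - t₀| ≤ |x - t₁| + |t₁ - t₀| := abs_sub_le x t₁ t₀
    have h2 : δ' ≤ ρ/2 := min_le_right _ _
    linarith
  set d := |t₁ - t₀| with hddef
  have hd0 : 0 < d := abs_pos.2 (sub_ne_zero.2 ht₁0)
  set K := d ^ (-s') + (2*ρ) ^ (-s') with hKdef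
  have hK0 : 0 < K := by
    have := Real.rpow_pos_of_pos hd0 (-s')
    have := Real.rpow_nonneg (by linarith : (0:ℝ) ≤ 2*ρ) (-s')
    positivity
  obtain ⟨ε, hε0, hεlt, hεp⟩ := exists_small_rpow (p := σ - 1) (ε := c / (C * K))
    (by linarith) (by positivity) (half_pos hδ'0)
  set u := t₁ + ε with hudef
  have huv : |u - t₁| ≤ δ'/2 := by
    rw [show u - t₁ = ε by rw [hudef]; ring, abs_of_pos hε0]
    linarith
  have hub : u ∈ Metric.ball t₀ ρ := hsub u huv
  have hvb : t₁ ∈ Metric.ball t₀ ρ := hsub t₁ (by simpa using (by positivity : (0:ℝ) ≤ δ'/2))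
  -- lower bound on |F u - F t₁|
  have hsign : (∀ x ∈ Set.Icc t₁ u, c ≤ f x) ∨ (∀ x ∈ Set.Icc t₁ u, f x ≤ -c) := by
    have hclose : ∀ x ∈ Set.Icc t₁ u, |f x - f t₁| < c := by
      intro x hx
      have h1 : |x - t₁| ≤ δ'/2 := by
        rw [abs_of_nonneg (by linarith [hx.1])]
        have := hx.2
        rw [hudef] at this
        linarith
      have h2 : dist x t₁ < δ := by
        rw [Real.dist_eq]
        have : δ' ≤ δ := min_le_left _ _
        linarith
      have := hδ h2
      rwa [Real.dist_eq] at this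
    rcases lt_or_gt_of_ne hft₁ with hneg | hposi
    · refine Or.inr fun x hx => ?_
      have h1 := hclose x hx
      have h2 := abs_lt.1 h1
      have h3 : |f t₁| = -(f t₁) := abs_of_neg hneg
      rw [hcdef]
      linarith [h2.2, h3.symm.le]
    · refine Or.inl fun x hx => ?_
      have h1 := hclose x hx
      have h2 := abs_lt.1 h1
      have h3 : |f t₁| = f t₁ := abs_of_pos hposi
      rw [hcdef]
      linarith [h2.1]
  have hlow : c * ε ≤ |F u - F t₁| := by
    rw [F_sub hf hF]
    have := integral_abs_lower hf (a := t₁) (b := u) (by rw [hudef]; linarith) hc hsign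
    rw [show u - t₁ = ε by rw [hudef]; ring] at this
    exact this
  have hup := hraw u hub t₁ hvb
  rw [show u - t₁ = ε by rw [hudef]; ring, abs_of_pos hε0] at hup
  -- bound the R-factor
  set R := |u - t₀| + |t₁ - t₀| with hRdef
  have hdR : d ≤ R := le_add_of_nonneg_left (abs_nonneg _)
  have hR2ρ : R ≤ 2*ρ := (ball_facts hub hvb).2
  have hRK : R ^ (-s') ≤ K := rpow_le_endpoints hd0 hdR hR2ρ
  have hεσ : ε ^ (σ-1) * ε ^ (1:ℝ) = ε ^ σ := by
    rw [← Real.rpow_add hε0]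
    congr 1
    ring
  rw [Real.rpow_one] at hεσ
  have hεσ0 : 0 ≤ ε ^ σ := Real.rpow_nonneg hε0.le σ
  have hchain : c * ε ≤ C * (ε ^ (σ-1) * ε) * K := by
    calc c * ε ≤ |F u - F t₁| := hlow
      _ ≤ C * ε ^ σ * R ^ (-s') := hup
      _ ≤ C * ε ^ σ * K := mul_le_mul_of_nonneg_left hRK (mul_nonneg hC.le hεσ0)
      _ = C * (ε ^ (σ-1) * ε) * K := by rw [hεσ]
  have hfin : ε ^ (σ-1) * (C * K) < c := (lt_div_iff₀ (mul_pos hC hK0)).1 hεp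
  nlinarith

lemma rawEx_congr {Φ Ψ : ℝ → ℝ} {t₀ e s' : ℝ} (h : ∀ u v, |Φ u - Φ v| = |Ψ u - Ψ v|) :
    RawEx Φ t₀ e s' ↔ RawEx Ψ t₀ e s' := by
  unfold RawEx
  exact exists_congr fun C => and_congr_right fun _ => exists_congr fun ρ =>
    and_congr_right fun _ => raw_congr h

lemma memU_negfun {F : ℝ → ℝ} (hFc : Continuous F) {t₀ σ s' : ℝ} :
    PseudoMemOn Set.univ (fun t => -(F t)) t₀ σ s' ↔ PseudoMemOn Set.univ F t₀ σ s' := by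
  rcases le_or_gt 0 σ with hσ | hσ
  · rw [memU_nonneg_iff hσ, memU_nonneg_iff hσ]
    refine rawEx_congr fun u v => ?_
    rw [show -F u - -F v = -(F u - F v) by ring, abs_neg]
  · rw [memU_neg_iff (not_le.2 hσ), memU_neg_iff (not_le.2 hσ)]
    have hgc : Continuous (fun s => F s - F t₀) := hFc.sub continuous_const
    have hfun : (fun s => -(F s) - -(F t₀)) = (fun s => -((fun x => F x - F t₀) s)) := by
      funext s
      ring
    rw [hfun, iterInt_neg hgc]
    refine rawEx_congr fun u v => ?_
    rw [show -(iterInt t₀ (fun x => F x - F t₀) (-⌊σ⌋).toNat u) -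
        -(iterInt t₀ (fun x => F x - F t₀) (-⌊σ⌋).toNat v)
        = -(iterInt t₀ (fun x => F x - F t₀) (-⌊σ⌋).toNat u -
        iterInt t₀ (fun x => F x - F t₀) (-⌊σ⌋).toNat v) by ring, abs_neg]

lemma frontier_negfun {F : ℝ → ℝ} (hFc : Continuous F) (t₀ s' : ℝ) :
    pseudoFrontierOn Set.univ (fun t => -(F t)) t₀ s' = pseudoFrontierOn Set.univ F t₀ s' := by
  unfold pseudoFrontierOn
  congr 1
  ext x
  simp only [Set.mem_setOf_eq]
  exact exists_congr fun σ => and_congr_right fun _ => memU_negfun hFc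

lemma part1_pos {f F : ℝ → ℝ} (hf : Continuous f) (hF : ∀ t, F t = ∫ s in (0:ℝ)..t, f s)
    {t₀ : ℝ} (h0 : 0 < f t₀) (s' : ℝ) :
    pseudoFrontierOn Set.univ F t₀ s' = ((min (1 + s') 1 : ℝ) : EReal) := by
  obtain ⟨ρ₀, hρ₀, hpos⟩ : ∃ ρ₀ > (0:ℝ), ∀ s ∈ Metric.ball t₀ ρ₀, f t₀ / 2 ≤ f s := by
    obtain ⟨δ, hδ0, hδ⟩ := Metric.continuousAt_iff.1 hf.continuousAt (f t₀ / 2) (by linarith)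
    refine ⟨δ, hδ0, fun s hs => ?_⟩
    have h1 := hδ (by rwa [Metric.mem_ball] at hs)
    rw [Real.dist_eq] at h1
    have h2 := abs_lt.1 h1
    linarith [h2.1]
  have hc : (0:ℝ) < f t₀ / 2 := by linarith
  apply le_antisymm
  · apply sSup_le
    rintro x ⟨σ, rfl, hmem⟩
    rw [EReal.coe_le_coe_iff]
    by_contra hgt
    push_neg at hgt
    rcases le_or_gt 0 σ with hσ | hσ
    · rcases lt_or_ge (1 + s') σ with h1 | h1
      · exact refute_a hf hF hc hρ₀ hpos hσ (by linarith) hmem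
      · have hσ1 : 1 < σ := by
          rcases min_cases (1+s') 1 with ⟨hmeq, _⟩ | ⟨hmeq, _⟩ <;> rw [hmeq] at hgt <;> linarith
        refine refute_b hf hF ?_ hσ1 hmem
        intro ρ' hρ'
        have hm2 : 0 < min ρ' ρ₀ / 2 := by
          have := lt_min hρ' hρ₀
          positivity
        refine ⟨t₀ + min ρ' ρ₀ / 2, ?_, by linarith, ?_⟩
        · rw [Metric.mem_ball, Real.dist_eq, show t₀ + min ρ' ρ₀ / 2 - t₀ = min ρ' ρ₀ / 2 by ring,
            abs_of_pos hm2]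
          have := min_le_left ρ' ρ₀
          linarith
        · have hball : t₀ + min ρ' ρ₀ / 2 ∈ Metric.ball t₀ ρ₀ := by
            rw [Metric.mem_ball, Real.dist_eq,
              show t₀ + min ρ' ρ₀ / 2 - t₀ = min ρ' ρ₀ / 2 by ring, abs_of_pos hm2]
            have := min_le_right ρ' ρ₀
            linarith
          have := hpos _ hball
          exact ne_of_gt (lt_of_lt_of_le hc this)
    · have h1 : 1 + s' < σ := by
        rcases min_cases (1+s') 1 with ⟨hmeq, _⟩ | ⟨hmeq, hle⟩ <;> rw [hmeq] at hgt <;> linarith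
      exact refute_c hf hF hc hρ₀ hpos hσ (by linarith) hmem
  · apply le_sSup
    exact ⟨min (1 + s') 1, rfl, memF_low hf hF t₀ (min_le_right _ _) (min_le_left _ _)⟩

lemma part3 {f F : ℝ → ℝ} (hf : Continuous f) (hF : ∀ t, F t = ∫ s in (0:ℝ)..t, f s)
    {t₀ : ℝ} (hz : ∃ ρ > (0:ℝ), ∀ u ∈ Metric.ball t₀ ρ, f u = 0) (s' : ℝ) :
    pseudoFrontierOn Set.univ F t₀ s' = ⊤ := by
  obtain ⟨ρ₀, hρ₀, hzero⟩ := hz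
  have hmem : ∀ σ : ℝ, 0 ≤ σ → PseudoMemOn Set.univ F t₀ σ s' := by
    intro σ hσ
    rw [memU_nonneg_iff hσ]
    refine ⟨1, one_pos, ρ₀, hρ₀, fun u hu v hv => ?_⟩
    have hFuv : F u - F v = 0 := by
      rw [F_sub hf hF]
      have heq : Set.EqOn f 0 (Set.uIcc v u) := fun x hx => hzero x (mem_ball_of_uIcc hu hv hx)
      rw [intervalIntegral.integral_congr heq]
      simp
    rw [hFuv, abs_zero]
    positivity
  rw [pseudoFrontierOn, sSup_eq_top]
  intro b hb
  induction b using EReal.rec with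
  | bot => exact ⟨((0:ℝ):EReal), ⟨0, rfl, hmem 0 le_rfl⟩, EReal.bot_lt_coe 0⟩
  | coe x =>
      refine ⟨((max x 0 + 1 : ℝ):EReal), ⟨_, rfl, hmem _ (by positivity)⟩, ?_⟩
      rw [EReal.coe_lt_coe_iff]
      have := le_max_left x 0
      linarith
  | top => exact absurd hb (lt_irrefl ⊤)

lemma coe_lt_add_one {τ : ℝ} {T : EReal} (h : (τ:EReal) < T + 1) : ((τ - 1 : ℝ):EReal) < T := by
  induction T using EReal.rec with
  | bot =>
      rw [show (⊥ : EReal) + 1 = ⊥ from rfl] at h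
      exact absurd h (by simp)
  | coe x =>
      have h' : τ < x + 1 := by exact_mod_cast h
      exact_mod_cast (by linarith : τ - 1 < x)
  | top => exact EReal.coe_lt_top _

lemma memF_one_lower {f F : ℝ → ℝ} (hf : Continuous f)
    (hF : ∀ t, F t = ∫ s in (0:ℝ)..t, f s) {t₀ : ℝ} (h0 : f t₀ = 0) {s' : ℝ}
    (hm : PseudoMemOn Set.univ F t₀ 1 s') :
    ∀ τ : ℝ, -1 < τ → τ < 0 → PseudoMemOn Set.univ f t₀ τ s' := by
  intro τ hτ1 hτ0
  have h1 : PseudoMemOn Set.univ F t₀ (τ+1) s' := by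
    rw [memU_nonneg_iff (by linarith : (0:ℝ) ≤ τ+1)]
    rw [memU_nonneg_iff zero_le_one] at hm
    exact rawEx_weaken hm (by linarith) (by linarith)
  have h2 := (memA hf hF h0 (by linarith : τ+1 < 1)).1 h1
  rwa [show τ + 1 - 1 = τ by ring] at h2

lemma part2 {f F : ℝ → ℝ} (hf : Continuous f) (hF : ∀ t, F t = ∫ s in (0:ℝ)..t, f s)
    {t₀ : ℝ} (h0 : f t₀ = 0)
    (hne : ¬ (∃ ρ > (0:ℝ), ∀ u ∈ Metric.ball t₀ ρ, f u = 0)) (s' : ℝ) :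
    pseudoFrontierOn Set.univ F t₀ s'
      = min (pseudoFrontierOn Set.univ f t₀ s' + 1) 1 := by
  push_neg at hne
  have hne' : ∀ ρ' > (0:ℝ), ∃ t₁ ∈ Metric.ball t₀ ρ', t₁ ≠ t₀ ∧ f t₁ ≠ 0 := by
    intro ρ' hρ'
    obtain ⟨u, hu, hfu⟩ := hne ρ' hρ'
    exact ⟨u, hu, fun h => hfu (by rw [h, h0]), hfu⟩
  have hmem1T : PseudoMemOn Set.univ F t₀ 1 s' →
      (0:EReal) ≤ pseudoFrontierOn Set.univ f t₀ s' := by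
    intro hm
    by_contra hcon
    push_neg at hcon
    obtain ⟨r, hr1, hr2⟩ := EReal.exists_between_coe_real hcon
    have hr0 : r < 0 := by exact_mod_cast hr2
    set r' := max r (-1/2) with hr'def
    have h1 : PseudoMemOn Set.univ f t₀ r' s' :=
      memF_one_lower hf hF h0 hm r' (by rw [hr'def]; have := le_max_right r (-1/2 : ℝ); linarith)
        (by rw [hr'def]; exact max_lt hr0 (by norm_num))
    have h2 : (r':EReal) ≤ pseudoFrontierOn Set.univ f t₀ s' := le_sSup ⟨r', rfl, h1⟩
    have h3 : (r:EReal) ≤ (r':EReal) := EReal.coe_le_coe_iff.2 (le_max_left _ _)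
    exact absurd (le_trans h3 h2) (not_le.2 hr1)
  apply le_antisymm
  · apply sSup_le
    rintro x ⟨σ, rfl, hmem⟩
    rcases lt_trichotomy σ 1 with hσ1 | hσ1 | hσ1
    · have hmf := (memA hf hF h0 hσ1).1 hmem
      have h1 : ((σ - 1 : ℝ):EReal) ≤ pseudoFrontierOn Set.univ f t₀ s' :=
        le_sSup ⟨σ-1, rfl, hmf⟩
      refine le_min ?_ (EReal.coe_le_coe_iff.2 hσ1.le)
      calc ((σ:ℝ):EReal) = ((σ-1:ℝ):EReal) + (1:EReal) := by
            rw [← EReal.coe_one, ← EReal.coe_add]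
            norm_num
        _ ≤ pseudoFrontierOn Set.univ f t₀ s' + 1 := add_le_add_left h1 _
    · subst hσ1
      have hT0 := hmem1T hmem
      refine le_min ?_ (le_refl _)
      calc ((1:ℝ):EReal) = (0:EReal) + 1 := by norm_num
        _ ≤ pseudoFrontierOn Set.univ f t₀ s' + 1 := add_le_add_left hT0 _
    · exact absurd hmem (refute_b hf hF hne' hσ1)
  · apply le_sSup_of_dense
    intro τ hτ
    rw [lt_min_iff] at hτ
    obtain ⟨hτ1, hτ2⟩ := hτ
    have hτ2' : τ < 1 := by exact_mod_cast hτ2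
    rcases le_or_gt τ (1 + s') with hcase | hcase
    · exact ⟨τ, rfl, memF_low hf hF t₀ hτ2'.le hcase⟩
    · have hs'0 : s' ≤ 0 := by linarith
      have hτT := coe_lt_add_one hτ1
      obtain ⟨y, hy, hlty⟩ := lt_sSup_iff.1 hτT
      obtain ⟨σ', rfl, hmemσ'⟩ := hy
      have hle : τ - 1 ≤ σ' := by
        have : ((τ - 1 : ℝ):EReal) ≤ ((σ' : ℝ):EReal) := hlty.le
        exact_mod_cast this
      have hmf := descend hf hs'0 (by linarith : τ - 1 < 0) hle hmemσ'
      exact ⟨τ, rfl, (memA hf hF h0 hτ2').2 hmf⟩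


end PFP

/-- pseudo 2-microlocal frontier of the primitive `F(t) = ∫₀ᵗ f(s) ds`:
`min (1 + s') 1` if `f(t₀) ≠ 0`; `min (Σ_{f,t₀}(s') + 1) 1` if `f(t₀) = 0` but `f` is not
identically zero near `t₀`; and `+∞` if `f` vanishes on a neighbourhood of `t₀`. -/
theorem pseudoFrontier_primitive (f : ℝ → ℝ) (hf : Continuous f)
    (F : ℝ → ℝ) (hF : ∀ t, F t = ∫ s in (0:ℝ)..t, f s) (t₀ : ℝ) :
    (f t₀ ≠ 0 →
      ∀ s' : ℝ, pseudoFrontierOn Set.univ F t₀ s' = ((min (1 + s') 1 : ℝ) : EReal)) ∧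
    (f t₀ = 0 → ¬ (∃ ρ > (0:ℝ), ∀ u ∈ Metric.ball t₀ ρ, f u = 0) →
      ∀ s' : ℝ, pseudoFrontierOn Set.univ F t₀ s'
        = min (pseudoFrontierOn Set.univ f t₀ s' + 1) 1) ∧
    ((∃ ρ > (0:ℝ), ∀ u ∈ Metric.ball t₀ ρ, f u = 0) →
      ∀ s' : ℝ, pseudoFrontierOn Set.univ F t₀ s' = ⊤) := by
  refine ⟨?_, ?_, ?_⟩
  · intro hne s'
    rcases lt_or_gt_of_ne hne with hneg | hpos
    · have hFneg : ∀ t, (fun t => -(F t)) t = ∫ s in (0:ℝ)..t, (fun s => -(f s)) s := by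
        intro t
        show -(F t) = _
        rw [hF t, ← intervalIntegral.integral_neg]
      have h := PFP.part1_pos hf.neg hFneg (show (0:ℝ) < -(f t₀) by linarith) s'
      rwa [PFP.frontier_negfun (PFP.F_cont hf hF) t₀ s'] at h
    · exact PFP.part1_pos hf hF hpos s'
  · intro h0 hne s'
    exact PFP.part2 hf hF h0 hne s'
  · intro hz s'
    exact PFP.part3 hf hF hz s'


end
end

section
/- Let f, g : ℝ → ℝ be continuous, let h = g ∘ f, and let t ∈ ℝ. Assume the pseudo pointwise Hölder exponents ᾱ_{f,t} and ᾱ_{g,f(t)} are finite, and let s'_f ∈ [−ᾱ_{f,t}, +∞) and s'_g ∈ [−ᾱ_{g,f(t)}, 0] be such that Σ_{f,t}(s'_f) and Σ_{g,f(t)}(s'_g) are finite. Then the pseudo 2-microlocal frontier of h at t satisfies Σ_{h,t}(s'_f · Σ_{g,f(t)}(s'_g) + s'_g · ᾱ_{f,t}) ≥ Σ_{g,f(t)}(s'_g) · Σ_{f,t}(s'_f). -/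
open MeasureTheory Metric Set Filter

noncomputable section

/-- iff-characterization of the limsup condition in `pseudoPointwiseExpOn`. -/
lemma limsup_cond_iff (f : ℝ → ℝ) (t α : ℝ) :
    (Filter.limsup
      (fun ρ : ℝ => ⨆ u ∈ Metric.ball t ρ ∩ (Set.univ : Set ℝ), ⨆ v ∈ Metric.ball t ρ ∩ (Set.univ : Set ℝ),
        ENNReal.ofReal (|f u - f v| / ρ ^ α)) (nhdsWithin 0 (Set.Ioi 0)) < ⊤)
    ↔ ∃ T ρ₀ : ℝ, 0 < T ∧ 0 < ρ₀ ∧ ∀ ρ : ℝ, 0 < ρ → ρ < ρ₀ →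
        ∀ u ∈ Metric.ball t ρ, ∀ v ∈ Metric.ball t ρ, |f u - f v| ≤ T * ρ ^ α := by
  simp only [Set.inter_univ]
  constructor
  · intro hlt
    set L := Filter.limsup
      (fun ρ : ℝ => ⨆ u ∈ Metric.ball t ρ, ⨆ v ∈ Metric.ball t ρ,
        ENNReal.ofReal (|f u - f v| / ρ ^ α)) (nhdsWithin 0 (Set.Ioi 0)) with hL
    have hc : L < L + 1 := ENNReal.lt_add_right hlt.ne one_ne_zero
    have hev := Filter.eventually_lt_of_limsup_lt hc
    rcases mem_nhdsGT_iff_exists_Ioo_subset.mp hev with ⟨ρ₀, hρ₀, hsub⟩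
    refine ⟨(L + 1).toReal + 1, ρ₀, by positivity, hρ₀, ?_⟩
    intro ρ hρ hρ' u hu v hv
    have hmem : ρ ∈ Set.Ioo (0:ℝ) ρ₀ := ⟨hρ, hρ'⟩
    have h1 : (⨆ u ∈ Metric.ball t ρ, ⨆ v ∈ Metric.ball t ρ,
        ENNReal.ofReal (|f u - f v| / ρ ^ α)) < L + 1 := hsub hmem
    have h2 : ENNReal.ofReal (|f u - f v| / ρ ^ α) ≤
        ⨆ u ∈ Metric.ball t ρ, ⨆ v ∈ Metric.ball t ρ, ENNReal.ofReal (|f u - f v| / ρ ^ α) := by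
      have hin : ENNReal.ofReal (|f u - f v| / ρ ^ α) ≤
          ⨆ v ∈ Metric.ball t ρ, ENNReal.ofReal (|f u - f v| / ρ ^ α) :=
        le_iSup₂ (f := fun v (_ : v ∈ Metric.ball t ρ) =>
          ENNReal.ofReal (|f u - f v| / ρ ^ α)) v hv
      exact hin.trans (le_iSup₂ (f := fun u (_ : u ∈ Metric.ball t ρ) =>
        ⨆ v ∈ Metric.ball t ρ, ENNReal.ofReal (|f u - f v| / ρ ^ α)) u hu)
    have h3 : ENNReal.ofReal (|f u - f v| / ρ ^ α) ≤ L + 1 := h2.trans h1.le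
    have hne : L + 1 ≠ ⊤ := by
      exact ENNReal.add_ne_top.mpr ⟨hlt.ne, ENNReal.one_ne_top⟩
    have h4 : |f u - f v| / ρ ^ α ≤ (L + 1).toReal :=
      (ENNReal.ofReal_le_iff_le_toReal hne).mp h3
    have hρα : (0:ℝ) < ρ ^ α := Real.rpow_pos_of_pos hρ α
    rw [div_le_iff₀ hρα] at h4
    calc |f u - f v| ≤ (L + 1).toReal * ρ ^ α := h4
      _ ≤ ((L + 1).toReal + 1) * ρ ^ α := by
          apply mul_le_mul_of_nonneg_right (by linarith) hρα.le
  · rintro ⟨T, ρ₀, hT, hρ₀, hbd⟩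
    have hev : ∀ᶠ ρ in nhdsWithin (0:ℝ) (Set.Ioi 0),
        (⨆ u ∈ Metric.ball t ρ, ⨆ v ∈ Metric.ball t ρ,
          ENNReal.ofReal (|f u - f v| / ρ ^ α)) ≤ ENNReal.ofReal T := by
      have hIoo : Set.Ioo (0:ℝ) ρ₀ ∈ nhdsWithin (0:ℝ) (Set.Ioi 0) :=
        mem_nhdsGT_iff_exists_Ioo_subset.mpr ⟨ρ₀, hρ₀, subset_rfl⟩
      filter_upwards [hIoo] with ρ hρ
      refine iSup₂_le fun u hu => iSup₂_le fun v hv => ?_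
      have hρα : (0:ℝ) < ρ ^ α := Real.rpow_pos_of_pos hρ.1 α
      have := hbd ρ hρ.1 hρ.2 u hu v hv
      exact ENNReal.ofReal_le_ofReal (by rw [div_le_iff₀ hρα]; linarith)
    exact lt_of_le_of_lt (Filter.limsup_le_of_le (by isBoundedDefault) hev) ENNReal.ofReal_lt_top

/-- `0` belongs to the pointwise-exponent set of any continuous function. -/
lemma zero_limsup_cond {f : ℝ → ℝ} (hf : Continuous f) (t : ℝ) :
    ∃ T ρ₀ : ℝ, 0 < T ∧ 0 < ρ₀ ∧ ∀ ρ : ℝ, 0 < ρ → ρ < ρ₀ →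
        ∀ u ∈ Metric.ball t ρ, ∀ v ∈ Metric.ball t ρ, |f u - f v| ≤ T * ρ ^ (0:ℝ) := by
  obtain ⟨M, hM⟩ := (isCompact_closedBall t 1).exists_bound_of_continuousOn hf.continuousOn
  refine ⟨2 * M + 1, 1, ?_, one_pos, ?_⟩
  · have : (0:ℝ) ≤ M := le_trans (norm_nonneg _) (hM t (Metric.mem_closedBall_self one_pos.le))
    linarith
  · intro ρ hρ hρ' u hu v hv
    have hub : u ∈ Metric.closedBall t 1 :=
      Metric.closedBall_subset_closedBall hρ'.le (Metric.ball_subset_closedBall hu)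
    have hvb : v ∈ Metric.closedBall t 1 :=
      Metric.closedBall_subset_closedBall hρ'.le (Metric.ball_subset_closedBall hv)
    have h1 := hM u hub
    have h2 := hM v hvb
    rw [Real.norm_eq_abs] at h1 h2
    rw [Real.rpow_zero]
    have : |f u - f v| ≤ |f u| + |f v| := abs_sub _ _
    linarith

/-- Any exponent in the pointwise set is at most the sup `a`. -/
lemma pt_le {f : ℝ → ℝ} {t a : ℝ} (hE : pseudoPointwiseExpOn Set.univ f t = (a : EReal))
    {α : ℝ} (hα : ∃ T ρ₀ : ℝ, 0 < T ∧ 0 < ρ₀ ∧ ∀ ρ : ℝ, 0 < ρ → ρ < ρ₀ →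
        ∀ u ∈ Metric.ball t ρ, ∀ v ∈ Metric.ball t ρ, |f u - f v| ≤ T * ρ ^ α) :
    α ≤ a := by
  have hmem : ((α:ℝ) : EReal) ∈ {x : EReal | ∃ β : ℝ, x = (β : EReal) ∧
      Filter.limsup
        (fun ρ : ℝ => ⨆ u ∈ Metric.ball t ρ ∩ (Set.univ : Set ℝ),
          ⨆ v ∈ Metric.ball t ρ ∩ (Set.univ : Set ℝ),
          ENNReal.ofReal (|f u - f v| / ρ ^ β)) (nhdsWithin 0 (Set.Ioi 0)) < ⊤} :=
    ⟨α, rfl, (limsup_cond_iff f t α).mpr hα⟩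
  have := le_sSup hmem
  rw [show sSup _ = pseudoPointwiseExpOn Set.univ f t from rfl, hE] at this
  exact_mod_cast this

/-- `0 ≤ a` for the pointwise exponent of a continuous function. -/
lemma pt_nonneg {f : ℝ → ℝ} (hf : Continuous f) {t a : ℝ}
    (hE : pseudoPointwiseExpOn Set.univ f t = (a : EReal)) : 0 ≤ a :=
  pt_le hE (zero_limsup_cond hf t)

/-- From the limsup condition with exponent `α ≥ 0`, extract a pointwise bound at `t`. -/
lemma pointwise_of_cond {f : ℝ → ℝ} {t α : ℝ} (hα : 0 ≤ α)
    (h : ∃ T ρ₀ : ℝ, 0 < T ∧ 0 < ρ₀ ∧ ∀ ρ : ℝ, 0 < ρ → ρ < ρ₀ →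
        ∀ u ∈ Metric.ball t ρ, ∀ v ∈ Metric.ball t ρ, |f u - f v| ≤ T * ρ ^ α) :
    ∃ C ρ : ℝ, 0 < C ∧ 0 < ρ ∧ ∀ s ∈ Metric.ball t ρ, |f s - f t| ≤ C * |s - t| ^ α := by
  obtain ⟨T, ρ₀, hT, hρ₀, hbd⟩ := h
  refine ⟨T * (3/2) ^ α + 1, ρ₀ / 2, by positivity, by positivity, ?_⟩
  intro s hs
  rcases eq_or_ne s t with rfl | hst
  · simp only [sub_self, abs_zero]
    positivity
  · have hd : (0:ℝ) < |s - t| := abs_pos.mpr (sub_ne_zero.mpr hst)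
    set ρ := (3/2) * |s - t| with hρdef
    have hρpos : 0 < ρ := by positivity
    have hsb : |s - t| < ρ₀ / 2 := by
      have := Metric.mem_ball.mp hs
      rwa [Real.dist_eq] at this
    have hρlt : ρ < ρ₀ := by rw [hρdef]; linarith
    have hsmem : s ∈ Metric.ball t ρ := by
      rw [Metric.mem_ball, Real.dist_eq]; rw [hρdef]; linarith
    have htmem : t ∈ Metric.ball t ρ := Metric.mem_ball_self hρpos
    have := hbd ρ hρpos hρlt s hsmem t htmem
    calc |f s - f t| ≤ T * ρ ^ α := this
      _ = T * ((3/2) ^ α * |s - t| ^ α) := by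
          rw [hρdef, Real.mul_rpow (by norm_num) (abs_nonneg _)]
      _ = T * (3/2) ^ α * |s - t| ^ α := by ring
      _ ≤ (T * (3/2) ^ α + 1) * |s - t| ^ α := by
          apply mul_le_mul_of_nonneg_right (by linarith) (Real.rpow_nonneg (abs_nonneg _) α)

/-- Main pointwise extraction: exponents arbitrarily close to `a`. -/
lemma exists_pointwise_bound {f : ℝ → ℝ} (hf : Continuous f) {t a : ℝ}
    (hE : pseudoPointwiseExpOn Set.univ f t = (a : EReal)) {δ : ℝ} (hδ : 0 < δ) :
    ∃ γ C ρ : ℝ, 0 ≤ γ ∧ γ ≤ a ∧ a - δ < γ ∧ 0 < C ∧ 0 < ρ ∧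
      ∀ s ∈ Metric.ball t ρ, |f s - f t| ≤ C * |s - t| ^ γ := by
  rcases lt_or_ge a δ with hle | hlt
  · -- use γ = 0
    obtain ⟨C, ρ, hC, hρ, hbd⟩ := pointwise_of_cond le_rfl (zero_limsup_cond hf t)
    exact ⟨0, C, ρ, le_rfl, pt_nonneg hf hE, by linarith, hC, hρ, hbd⟩
  · -- find α ∈ set with α > a - δ > 0
    have hlt' : ((a - δ : ℝ) : EReal) < pseudoPointwiseExpOn Set.univ f t := by
      rw [hE]; exact_mod_cast (by linarith : a - δ < a)
    rw [pseudoPointwiseExpOn] at hlt'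
    rcases lt_sSup_iff.mp hlt' with ⟨x, hxmem, hxlt⟩
    obtain ⟨α, rfl, hcond⟩ := hxmem
    have hαgt : a - δ < α := by exact_mod_cast hxlt
    have hcond' := (limsup_cond_iff f t α).mp hcond
    have hαle : α ≤ a := pt_le hE hcond'
    have hα0 : 0 ≤ α := by linarith
    obtain ⟨C, ρ, hC, hρ, hbd⟩ := pointwise_of_cond hα0 hcond'
    exact ⟨α, C, ρ, hα0, hαle, hαgt, hC, hρ, hbd⟩

/-- Frontier membership gives `σ ≤ S`. -/
lemma mem_le_frontier {f : ℝ → ℝ} {t s' S : ℝ}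
    (hS : pseudoFrontierOn Set.univ f t s' = (S : EReal))
    {σ : ℝ} (hσ : PseudoMemOn Set.univ f t σ s') : σ ≤ S := by
  have hmem : ((σ:ℝ) : EReal) ∈ {x : EReal | ∃ τ : ℝ, x = (τ : EReal) ∧
      PseudoMemOn Set.univ f t τ s'} := ⟨σ, rfl, hσ⟩
  have := le_sSup hmem
  rw [show sSup _ = pseudoFrontierOn Set.univ f t s' from rfl, hS] at this
  exact_mod_cast this

/-- Frontier sup is approached by memberships. -/
lemma exists_mem_near {f : ℝ → ℝ} {t s' S : ℝ}
    (hS : pseudoFrontierOn Set.univ f t s' = (S : EReal)) {δ : ℝ} (hδ : 0 < δ) :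
    ∃ σ : ℝ, PseudoMemOn Set.univ f t σ s' ∧ S - δ < σ ∧ σ ≤ S := by
  have hlt : ((S - δ : ℝ) : EReal) < pseudoFrontierOn Set.univ f t s' := by
    rw [hS]; exact_mod_cast (by linarith : S - δ < S)
  rw [pseudoFrontierOn] at hlt
  rcases lt_sSup_iff.mp hlt with ⟨x, hxmem, hxlt⟩
  obtain ⟨σ, rfl, hmem⟩ := hxmem
  exact ⟨σ, hmem, by exact_mod_cast hxlt, mem_le_frontier hS hmem⟩

/-- Negative-σ membership from a pointwise Hölder-type bound, for `σ ∈ (-1,0)`. -/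
lemma neg_mem {φ : ℝ → ℝ} (hφ : Continuous φ) {t γ C ρ : ℝ} (hγ : 0 ≤ γ) (hC : 0 < C)
    (hρ : 0 < ρ) (hpt : ∀ s ∈ Metric.ball t ρ, |φ s - φ t| ≤ C * |s - t| ^ γ)
    {σ s' : ℝ} (hσ1 : -1 < σ) (hσ0 : σ < 0) (hσs : σ ≤ γ + s') :
    PseudoMemOn Set.univ φ t σ s' := by
  have hfl : ⌊σ⌋ = -1 := by
    rw [Int.floor_eq_iff]
    constructor
    · exact_mod_cast hσ1.le
    · push_cast; linarith
  rw [PseudoMemOn, if_neg (not_le.mpr hσ0), hfl]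
  have hm : ((-(-1) : ℤ)).toNat = 1 := rfl
  rw [hm]
  set F : ℝ → ℝ := fun s => φ s - φ t with hF
  have hFc : Continuous F := hφ.sub continuous_const
  have hiter : ∀ w : ℝ, iterInt t F 1 w = ∫ s in t..w, F s := fun w => rfl
  refine ⟨C, hC, min ρ (1/2), lt_min hρ (by norm_num), ?_⟩
  intro u hu v hv
  simp only [Set.inter_univ] at hu hv
  have hu' : |u - t| < min ρ (1/2) := by
    have := Metric.mem_ball.mp hu; rwa [Real.dist_eq] at this
  have hv' : |v - t| < min ρ (1/2) := by
    have := Metric.mem_ball.mp hv; rwa [Real.dist_eq] at this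
  set S : ℝ := |u - t| + |v - t| with hSdef
  have hS1 : S ≤ 1 := by
    have h1 := lt_of_lt_of_le hu' (min_le_right _ _)
    have h2 := lt_of_lt_of_le hv' (min_le_right _ _)
    simp only [hSdef]; linarith
  -- bound on the integrand over the segment
  have hseg : ∀ x ∈ Set.uIoc v u, ‖F x‖ ≤ C * S ^ γ := by
    intro x hx
    have hxm : |x - t| ≤ max (|u - t|) (|v - t|) := by
      have hx1 : v ⊓ u ≤ x := le_of_lt hx.1
      have hx2 : x ≤ v ⊔ u := hx.2
      rw [abs_le]
      constructor
      · have hlo : -(max (|u - t|) (|v - t|)) ≤ v ⊓ u - t := by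
          rcases le_total v u with h | h
          · rw [inf_eq_left.mpr h]
            have h1 := neg_abs_le (v - t)
            have h2 := le_max_right (|u - t|) (|v - t|); linarith
          · rw [inf_eq_right.mpr h]
            have h1 := neg_abs_le (u - t)
            have h2 := le_max_left (|u - t|) (|v - t|); linarith
        linarith
      · have hhi : v ⊔ u - t ≤ max (|u - t|) (|v - t|) := by
          rcases le_total v u with h | h
          · rw [sup_eq_right.mpr h]
            have h1 := le_abs_self (u - t)
            have h2 := le_max_left (|u - t|) (|v - t|); linarith
          · rw [sup_eq_left.mpr h]
            have h1 := le_abs_self (v - t)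
            have h2 := le_max_right (|u - t|) (|v - t|); linarith
        linarith
    have hxb : x ∈ Metric.ball t ρ := by
      rw [Metric.mem_ball, Real.dist_eq]
      have : max (|u - t|) (|v - t|) < min ρ (1/2) := max_lt hu' hv'
      exact lt_of_le_of_lt hxm (this.trans_le (min_le_left _ _))
    have h1 := hpt x hxb
    have h2 : |x - t| ^ γ ≤ S ^ γ := by
      apply Real.rpow_le_rpow (abs_nonneg _) _ hγ
      refine hxm.trans (max_le ?_ ?_)
      · have := abs_nonneg (v - t); simp only [hSdef]; linarith
      · have := abs_nonneg (u - t); simp only [hSdef]; linarith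
    rw [Real.norm_eq_abs]
    calc |F x| ≤ C * |x - t| ^ γ := h1
      _ ≤ C * S ^ γ := by apply mul_le_mul_of_nonneg_left h2 hC.le
  have hint : ∀ a b : ℝ, IntervalIntegrable F volume a b := fun a b =>
    hFc.intervalIntegrable a b
  have hdiff : iterInt t F 1 u - iterInt t F 1 v = ∫ s in v..u, F s := by
    rw [hiter, hiter]
    exact intervalIntegral.integral_interval_sub_left (hint t u) (hint t v)
  have hbound : |iterInt t F 1 u - iterInt t F 1 v| ≤ (C * S ^ γ) * |u - v| := by
    rw [hdiff, ← Real.norm_eq_abs]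
    exact intervalIntegral.norm_integral_le_of_norm_le_const hseg
  refine hbound.trans ?_
  -- now the pure rpow calculation
  push_cast
  rcases eq_or_ne u v with rfl | huv
  · simp only [sub_self, abs_zero]
    have : (0:ℝ) ^ (σ + 1) = 0 := by
      rw [Real.zero_rpow]; linarith
    simp [this]
  · have hd : (0:ℝ) < |u - v| := abs_pos.mpr (sub_ne_zero.mpr huv)
    have hdS : |u - v| ≤ S := by
      simp only [hSdef]
      calc |u - v| = |(u - t) - (v - t)| := by ring_nf
        _ ≤ |u - t| + |v - t| := abs_sub _ _
    have hS0 : (0:ℝ) < S := lt_of_lt_of_le hd hdS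
    have key : |u - v| ≤ |u - v| ^ (σ + 1) * S ^ (-σ) := by
      have e1 : |u - v| = |u - v| ^ (σ + 1) * |u - v| ^ (-σ) := by
        rw [← Real.rpow_add hd]
        norm_num
      calc |u - v| = |u - v| ^ (σ + 1) * |u - v| ^ (-σ) := e1
        _ ≤ |u - v| ^ (σ + 1) * S ^ (-σ) :=
          mul_le_mul_of_nonneg_left
            (Real.rpow_le_rpow hd.le hdS (by linarith))
            (Real.rpow_nonneg (abs_nonneg _) _)
    calc C * S ^ γ * |u - v| ≤ C * S ^ γ * (|u - v| ^ (σ + 1) * S ^ (-σ)) := by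
          apply mul_le_mul_of_nonneg_left key (by positivity)
      _ = C * |u - v| ^ (σ + 1) * (S ^ γ * S ^ (-σ)) := by ring
      _ = C * |u - v| ^ (σ + 1) * S ^ (γ + -σ) := by rw [Real.rpow_add hS0]
      _ ≤ C * |u - v| ^ (σ + 1) * S ^ (-s') := by
          apply mul_le_mul_of_nonneg_left _ (by positivity)
          exact Real.rpow_le_rpow_of_exponent_ge hS0 hS1 (by linarith)

/-- Memberships with `σ` close to `0⁻` from a family of pointwise bounds. -/
lemma exists_mem_near_zero {φ : ℝ → ℝ} (hφ : Continuous φ) {t A s' : ℝ}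
    (hfam : ∀ δ : ℝ, 0 < δ → ∃ γ C ρ : ℝ, 0 ≤ γ ∧ A - δ < γ ∧ 0 < C ∧ 0 < ρ ∧
      ∀ s ∈ Metric.ball t ρ, |φ s - φ t| ≤ C * |s - t| ^ γ)
    (hs' : -A ≤ s') :
    ∀ δ : ℝ, 0 < δ → δ ≤ 1 → ∃ σ : ℝ, -δ ≤ σ ∧ PseudoMemOn Set.univ φ t σ s' := by
  intro δ hδ hδ1
  obtain ⟨γ, C, ρ, hγ0, hγgt, hC, hρ, hpt⟩ := hfam (δ/2) (by linarith)
  have h1 : -(δ/2) < γ + s' := by linarith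
  refine ⟨min (-(δ/2)) (γ + s'), ?_, neg_mem hφ hγ0 hC hρ hpt ?_ ?_ (min_le_right _ _)⟩
  · apply le_min <;> linarith
  · apply lt_min <;> linarith
  · exact lt_of_le_of_lt (min_le_left _ _) (by linarith)

/-- The frontier value is nonnegative, given pointwise bounds approaching `A` and `s' ≥ -A`. -/
lemma frontier_nonneg {φ : ℝ → ℝ} (hφ : Continuous φ) {t A s' S : ℝ}
    (hfam : ∀ δ : ℝ, 0 < δ → ∃ γ C ρ : ℝ, 0 ≤ γ ∧ A - δ < γ ∧ 0 < C ∧ 0 < ρ ∧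
      ∀ s ∈ Metric.ball t ρ, |φ s - φ t| ≤ C * |s - t| ^ γ)
    (hs' : -A ≤ s')
    (hS : pseudoFrontierOn Set.univ φ t s' = (S : EReal)) : 0 ≤ S := by
  by_contra hneg
  push_neg at hneg
  set δ := min 1 (-S/2) with hδdef
  have hδpos : 0 < δ := lt_min one_pos (by linarith)
  obtain ⟨σ, hσge, hσmem⟩ := exists_mem_near_zero hφ hfam hs' δ hδpos (min_le_left _ _)
  have hle := mem_le_frontier hS hσmem
  have : -δ ≤ S := le_trans hσge hle
  rcases min_cases 1 (-S/2) with ⟨heq, hge⟩ | ⟨heq, hc⟩ <;>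
    rw [hδdef, heq] at this <;> linarith

/-- `S ≤ a + s'` : frontier bounded by pointwise exponent plus `s'`. -/
lemma frontier_le_exp_add {g : ℝ → ℝ} {t s' S a : ℝ}
    (hE : pseudoPointwiseExpOn Set.univ g t = (a : EReal))
    (hS : pseudoFrontierOn Set.univ g t s' = (S : EReal))
    (hs'ub : s' ≤ 0) (hs'lb : -a ≤ s') : S ≤ a + s' := by
  have key : ∀ σ : ℝ, PseudoMemOn Set.univ g t σ s' → σ ≤ a + s' := by
    intro σ hmem
    rcases lt_or_ge σ 0 with hσneg | hσpos
    · linarith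
    · rw [PseudoMemOn, if_pos hσpos] at hmem
      obtain ⟨C, hC, ρ₀, hρ₀, hbd⟩ := hmem
      have hcond : ∃ T ρ₁ : ℝ, 0 < T ∧ 0 < ρ₁ ∧ ∀ ρ : ℝ, 0 < ρ → ρ < ρ₁ →
          ∀ u ∈ Metric.ball t ρ, ∀ v ∈ Metric.ball t ρ,
            |g u - g v| ≤ T * ρ ^ (σ - s') := by
        refine ⟨C * 2 ^ (σ - s') + 1, ρ₀, by positivity, hρ₀, ?_⟩
        intro ρ hρ hρlt u hu v hv
        have hu' : u ∈ Metric.ball t ρ₀ ∩ Set.univ :=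
          ⟨Metric.ball_subset_ball hρlt.le hu, trivial⟩
        have hv' : v ∈ Metric.ball t ρ₀ ∩ Set.univ :=
          ⟨Metric.ball_subset_ball hρlt.le hv, trivial⟩
        have h1 := hbd u hu' v hv'
        have hut : |u - t| < ρ := by have := Metric.mem_ball.mp hu; rwa [Real.dist_eq] at this
        have hvt : |v - t| < ρ := by have := Metric.mem_ball.mp hv; rwa [Real.dist_eq] at this
        have huv : |u - v| ≤ 2 * ρ := by
          calc |u - v| = |(u - t) - (v - t)| := by ring_nf
            _ ≤ |u - t| + |v - t| := abs_sub _ _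
            _ ≤ 2 * ρ := by linarith
        have h2 : |u - v| ^ σ ≤ (2 * ρ) ^ σ :=
          Real.rpow_le_rpow (abs_nonneg _) huv hσpos
        have h3 : (|u - t| + |v - t|) ^ (-s') ≤ (2 * ρ) ^ (-s') :=
          Real.rpow_le_rpow (by positivity) (by linarith) (by linarith)
        have h4 : |g u - g v| ≤ C * (2 * ρ) ^ σ * (2 * ρ) ^ (-s') := by
          calc |g u - g v| ≤ C * |u - v| ^ σ * (|u - t| + |v - t|) ^ (-s') := h1
            _ ≤ C * (2 * ρ) ^ σ * (2 * ρ) ^ (-s') := by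
                apply mul_le_mul (mul_le_mul_of_nonneg_left h2 hC.le) h3
                  (by positivity) (by positivity)
        have h5 : C * (2 * ρ) ^ σ * (2 * ρ) ^ (-s') = C * 2 ^ (σ - s') * ρ ^ (σ - s') := by
          rw [mul_assoc, ← Real.rpow_add (by linarith : (0:ℝ) < 2 * ρ),
            show σ + -s' = σ - s' by ring,
            Real.mul_rpow (by norm_num : (0:ℝ) ≤ 2) hρ.le, ← mul_assoc]
        calc |g u - g v| ≤ C * 2 ^ (σ - s') * ρ ^ (σ - s') := h4.trans_eq h5
          _ ≤ (C * 2 ^ (σ - s') + 1) * ρ ^ (σ - s') := by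
              apply mul_le_mul_of_nonneg_right (by linarith)
                (Real.rpow_nonneg hρ.le _)
      have := pt_le hE hcond
      linarith
  by_contra hc
  push_neg at hc
  obtain ⟨σ, hmem, hgt, _⟩ := exists_mem_near hS (show (0:ℝ) < (S - (a + s'))/2 by linarith)
  have := key σ hmem
  linarith

/-- Passing to the limit in `EReal`. -/
lemma EReal_le_of_forall_sub {x : ℝ} {y : EReal}
    (h : ∀ ε : ℝ, 0 < ε → ((x - ε : ℝ) : EReal) ≤ y) : (x : EReal) ≤ y := by
  induction y using EReal.rec with
  | bot =>
      exact absurd (le_bot_iff.mp (h 1 one_pos)) (EReal.coe_ne_bot _)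
  | coe r =>
      rw [EReal.coe_le_coe_iff]
      by_contra hc
      push_neg at hc
      have := (EReal.coe_le_coe_iff).mp (h ((x - r)/2) (by linarith))
      linarith
  | top => exact le_top

set_option maxHeartbeats 2000000 in
/-- pseudo 2-microlocal frontier of a composition `h = g ∘ f`:
`Σ_{h,t}(s'_f · Σ_{g,f(t)}(s'_g) + s'_g · ᾱ_{f,t}) ≥ Σ_{g,f(t)}(s'_g) · Σ_{f,t}(s'_f)`,
under finiteness of the relevant exponents and frontier values. -/
theorem pseudoFrontier_comp (f g : ℝ → ℝ) (hf : Continuous f) (hg : Continuous g) (t : ℝ)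
    (af ag Sf Sg s'f s'g : ℝ)
    (haf : pseudoPointwiseExpOn Set.univ f t = (af : EReal))
    (hag : pseudoPointwiseExpOn Set.univ g (f t) = (ag : EReal))
    (hs'f : -af ≤ s'f) (hs'g_lb : -ag ≤ s'g) (hs'g_ub : s'g ≤ 0)
    (hSf : pseudoFrontierOn Set.univ f t s'f = (Sf : EReal))
    (hSg : pseudoFrontierOn Set.univ g (f t) s'g = (Sg : EReal)) :
    ((Sg * Sf : ℝ) : EReal)
      ≤ pseudoFrontierOn Set.univ (g ∘ f) t (s'f * Sg + s'g * af) := by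
  set s'' : ℝ := s'f * Sg + s'g * af with hs''def
  have hgf : Continuous (g ∘ f) := hg.comp hf
  have haf0 : 0 ≤ af := pt_nonneg hf haf
  have hag0 : 0 ≤ ag := pt_nonneg hg hag
  -- pointwise families
  have hfamf : ∀ δ : ℝ, 0 < δ → ∃ γ C ρ : ℝ, 0 ≤ γ ∧ af - δ < γ ∧ 0 < C ∧ 0 < ρ ∧
      ∀ s ∈ Metric.ball t ρ, |f s - f t| ≤ C * |s - t| ^ γ := by
    intro δ hδ
    obtain ⟨γ, C, ρ, h1, _, h3, h4, h5, h6⟩ := exists_pointwise_bound hf haf hδ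
    exact ⟨γ, C, ρ, h1, h3, h4, h5, h6⟩
  have hfamg : ∀ δ : ℝ, 0 < δ → ∃ γ C ρ : ℝ, 0 ≤ γ ∧ ag - δ < γ ∧ 0 < C ∧ 0 < ρ ∧
      ∀ s ∈ Metric.ball (f t) ρ, |g s - g (f t)| ≤ C * |s - f t| ^ γ := by
    intro δ hδ
    obtain ⟨γ, C, ρ, h1, _, h3, h4, h5, h6⟩ := exists_pointwise_bound hg hag hδ
    exact ⟨γ, C, ρ, h1, h3, h4, h5, h6⟩
  have hSf0 : 0 ≤ Sf := frontier_nonneg hf hfamf hs'f hSf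
  have hSg0 : 0 ≤ Sg := frontier_nonneg hg hfamg hs'g_lb hSg
  have hSgub : Sg ≤ ag + s'g := frontier_le_exp_add hag hSg hs'g_ub hs'g_lb
  -- pointwise family for the composition, with exponents approaching af*ag
  have hfamh : ∀ δ : ℝ, 0 < δ → ∃ γ C ρ : ℝ, 0 ≤ γ ∧ af * ag - δ < γ ∧ 0 < C ∧ 0 < ρ ∧
      ∀ s ∈ Metric.ball t ρ, |(g ∘ f) s - (g ∘ f) t| ≤ C * |s - t| ^ γ := by
    intro δ hδ
    have hD : (0:ℝ) < af + ag + 1 := by linarith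
    set δ₁ := δ / (af + ag + 1) with hδ₁def
    have hδ₁ : 0 < δ₁ := by positivity
    obtain ⟨a₁, Ca, ρa, ha₁0, ha₁le, ha₁gt, hCa, hρa, hptf⟩ :=
      exists_pointwise_bound hf haf hδ₁
    obtain ⟨b₁, Cb, ρb, hb₁0, hb₁le, hb₁gt, hCb, hρb, hptg⟩ :=
      exists_pointwise_bound hg hag hδ₁
    obtain ⟨ρc, hρc, hcont⟩ := Metric.continuousAt_iff.mp hf.continuousAt ρb hρb
    refine ⟨a₁ * b₁, Cb * Ca ^ b₁, min ρa ρc, mul_nonneg ha₁0 hb₁0, ?_, by positivity,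
      lt_min hρa hρc, ?_⟩
    · have e1 : ag * (af - a₁) ≤ ag * δ₁ :=
        mul_le_mul_of_nonneg_left (by linarith) hag0
      have e2 : a₁ * (ag - b₁) ≤ a₁ * δ₁ :=
        mul_le_mul_of_nonneg_left (by linarith) ha₁0
      have e3 : a₁ * δ₁ ≤ af * δ₁ := mul_le_mul_of_nonneg_right ha₁le hδ₁.le
      have id1 : af * ag - a₁ * b₁ = ag * (af - a₁) + a₁ * (ag - b₁) := by ring
      have id2 : δ₁ * (af + ag + 1) = δ := by
        rw [hδ₁def]; field_simp
      nlinarith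
    · intro s hs
      have hs_a : s ∈ Metric.ball t ρa :=
        Metric.ball_subset_ball (min_le_left _ _) hs
      have hs_c : dist s t < ρc :=
        lt_of_lt_of_le (Metric.mem_ball.mp hs) (min_le_right _ _)
      have hfs : f s ∈ Metric.ball (f t) ρb := Metric.mem_ball.mpr (hcont hs_c)
      have h1 : |g (f s) - g (f t)| ≤ Cb * |f s - f t| ^ b₁ := hptg (f s) hfs
      have h2 : |f s - f t| ^ b₁ ≤ (Ca * |s - t| ^ a₁) ^ b₁ :=
        Real.rpow_le_rpow (abs_nonneg _) (hptf s hs_a) hb₁0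
      have h3 : (Ca * |s - t| ^ a₁) ^ b₁ = Ca ^ b₁ * |s - t| ^ (a₁ * b₁) := by
        rw [Real.mul_rpow hCa.le (Real.rpow_nonneg (abs_nonneg _) _),
          ← Real.rpow_mul (abs_nonneg _)]
      calc |(g ∘ f) s - (g ∘ f) t| = |g (f s) - g (f t)| := rfl
        _ ≤ Cb * (Ca * |s - t| ^ a₁) ^ b₁ := by
            refine h1.trans (mul_le_mul_of_nonneg_left h2 hCb.le)
        _ = Cb * Ca ^ b₁ * |s - t| ^ (a₁ * b₁) := by rw [h3]; ring
  -- s'' ≥ -(af*ag)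
  have hs''lb : -(af * ag) ≤ s'' := by
    have e1 : 0 ≤ af * (ag + s'g - Sg) := mul_nonneg haf0 (by linarith)
    have e2 : 0 ≤ (s'f + af) * Sg := mul_nonneg (by linarith) hSg0
    have id1 : af * ag + (s'f * Sg + s'g * af) =
        af * (ag + s'g - Sg) + (s'f + af) * Sg := by ring
    rw [hs''def]
    linarith
  -- key: memberships with σ arbitrarily close to Sg*Sf from below
  have key : ∀ ε : ℝ, 0 < ε → ∃ σ : ℝ, Sg * Sf - ε ≤ σ ∧
      PseudoMemOn Set.univ (g ∘ f) t σ s'' := by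
    intro ε hε
    by_cases hpos : 0 < Sg ∧ 0 < Sf
    · -- main case
      obtain ⟨hSgpos, hSfpos⟩ := hpos
      set D : ℝ := Sf + Sg + |s'f| + |s'g| + 1 with hDdef
      have hD : 0 < D := by positivity
      set ε' : ℝ := min ε (Sg * Sf) with hε'def
      have hε'pos : 0 < ε' := lt_min hε (mul_pos hSgpos hSfpos)
      have hε'le : ε' ≤ ε := min_le_left _ _
      have hε'le2 : ε' ≤ Sg * Sf := min_le_right _ _
      set δ : ℝ := min (min (Sf/2) (Sg/2)) (ε'/D) with hδdef
      have hδpos : 0 < δ :=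
        lt_min (lt_min (by linarith) (by linarith)) (by positivity)
      have hδSf : δ ≤ Sf/2 := le_trans (min_le_left _ _) (min_le_left _ _)
      have hδSg : δ ≤ Sg/2 := le_trans (min_le_left _ _) (min_le_right _ _)
      have hδε : δ * D ≤ ε' := by
        have h := min_le_right (min (Sf/2) (Sg/2)) (ε'/D)
        calc δ * D ≤ (ε'/D) * D := mul_le_mul_of_nonneg_right h hD.le
          _ = ε' := by field_simp
      obtain ⟨σf, hmemf, hσfgt, hσfle⟩ := exists_mem_near hSf hδpos
      obtain ⟨σg, hmemg, hσggt, hσgle⟩ := exists_mem_near hSg hδpos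
      obtain ⟨α, Ca, ρa, hα0, hαle, hαgt, hCa, hρa, hptf⟩ :=
        exists_pointwise_bound hf haf hδpos
      have hσf0 : 0 < σf := by linarith
      have hσg0 : 0 < σg := by linarith
      rw [PseudoMemOn, if_pos hσf0.le] at hmemf
      rw [PseudoMemOn, if_pos hσg0.le] at hmemg
      obtain ⟨Cf, hCf, ρf, hρf, bdf⟩ := hmemf
      obtain ⟨Cg, hCg, ρg, hρg, bdg⟩ := hmemg
      set ε₀ : ℝ := max 0 ((s'f*σg + s'g*α) - s'') with hε₀def
      set σh : ℝ := σf*σg - ε₀ with hσhdef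
      have hε₀0 : 0 ≤ ε₀ := le_max_left _ _
      have hε₀ge : (s'f*σg + s'g*α) - s'' ≤ ε₀ := le_max_right _ _
      have habs1 : s'f*(σg - Sg) ≤ |s'f| *δ := by
        calc s'f*(σg - Sg) ≤ |s'f*(σg - Sg)| := le_abs_self _
          _ = |s'f| *|σg - Sg| := abs_mul _ _
          _ ≤ |s'f| *δ := mul_le_mul_of_nonneg_left
              (abs_le.mpr ⟨by linarith, by linarith⟩) (abs_nonneg _)
      have habs2 : s'g*(α - af) ≤ |s'g| *δ := by
        calc s'g*(α - af) ≤ |s'g*(α - af)| := le_abs_self _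
          _ = |s'g| *|α - af| := abs_mul _ _
          _ ≤ |s'g| *δ := mul_le_mul_of_nonneg_left
              (abs_le.mpr ⟨by linarith, by linarith⟩) (abs_nonneg _)
      have hε₀le : ε₀ ≤ |s'f| *δ + |s'g| *δ := by
        rw [hε₀def]
        apply max_le (by positivity)
        have id1 : (s'f*σg + s'g*α) - s'' = s'f*(σg - Sg) + s'g*(α - af) := by
          rw [hs''def]; ring
        linarith
      have hσhge : Sg*Sf - ε' ≤ σh := by
        have hprod : (Sf - δ)*(Sg - δ) ≤ σf*σg :=
          mul_le_mul (by linarith) (by linarith) (by linarith) (by linarith)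
        have hexp : (Sf - δ)*(Sg - δ) = Sf*Sg - δ*(Sf+Sg) + δ*δ := by ring
        have hsum : δ*(Sf+Sg) + |s'f| *δ + |s'g| *δ = δ*D - δ := by
          rw [hDdef]; ring
        have hδδ : 0 ≤ δ*δ := mul_nonneg hδpos.le hδpos.le
        have hcomm : Sg*Sf = Sf*Sg := mul_comm _ _
        rw [hσhdef]
        linarith
      have hσh0 : 0 ≤ σh := by linarith
      refine ⟨σh, by linarith, ?_⟩
      rw [PseudoMemOn, if_pos hσh0]
      obtain ⟨ρc, hρc, hcont⟩ := Metric.continuousAt_iff.mp hf.continuousAt ρg hρg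
      refine ⟨Cg * Cf^σg * (2*Ca)^(-s'g), by positivity,
        min (min ρf ρa) (min ρc (1/4)),
        lt_min (lt_min hρf hρa) (lt_min hρc (by norm_num)), ?_⟩
      intro u hu v hv
      obtain ⟨hu, -⟩ := hu
      obtain ⟨hv, -⟩ := hv
      have hut : |u - t| < min (min ρf ρa) (min ρc (1/4)) := by
        have := Metric.mem_ball.mp hu; rwa [Real.dist_eq] at this
      have hvt : |v - t| < min (min ρf ρa) (min ρc (1/4)) := by
        have := Metric.mem_ball.mp hv; rwa [Real.dist_eq] at this
      have hut4 : |u - t| < 1/4 :=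
        lt_of_lt_of_le hut (le_trans (min_le_right _ _) (min_le_right _ _))
      have hvt4 : |v - t| < 1/4 :=
        lt_of_lt_of_le hvt (le_trans (min_le_right _ _) (min_le_right _ _))
      have huf : u ∈ Metric.ball t ρf ∩ Set.univ := by
        constructor
        · rw [Metric.mem_ball, Real.dist_eq]
          exact lt_of_lt_of_le hut (le_trans (min_le_left _ _) (min_le_left _ _))
        · trivial
      have hvf : v ∈ Metric.ball t ρf ∩ Set.univ := by
        constructor
        · rw [Metric.mem_ball, Real.dist_eq]
          exact lt_of_lt_of_le hvt (le_trans (min_le_left _ _) (min_le_left _ _))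
        · trivial
      have hua : u ∈ Metric.ball t ρa := by
        rw [Metric.mem_ball, Real.dist_eq]
        exact lt_of_lt_of_le hut (le_trans (min_le_left _ _) (min_le_right _ _))
      have hva : v ∈ Metric.ball t ρa := by
        rw [Metric.mem_ball, Real.dist_eq]
        exact lt_of_lt_of_le hvt (le_trans (min_le_left _ _) (min_le_right _ _))
      have hfu : f u ∈ Metric.ball (f t) ρg ∩ Set.univ := by
        refine ⟨Metric.mem_ball.mpr (hcont ?_), trivial⟩
        rw [Real.dist_eq]
        exact lt_of_lt_of_le hut (le_trans (min_le_right _ _) (min_le_left _ _))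
      have hfv : f v ∈ Metric.ball (f t) ρg ∩ Set.univ := by
        refine ⟨Metric.mem_ball.mpr (hcont ?_), trivial⟩
        rw [Real.dist_eq]
        exact lt_of_lt_of_le hvt (le_trans (min_le_right _ _) (min_le_left _ _))
      have step1 := bdg (f u) hfu (f v) hfv
      have step2 := bdf u huf v hvf
      have step3u := hptf u hua
      have step3v := hptf v hva
      rcases eq_or_ne u v with rfl | huv
      · simp only [sub_self, abs_zero]
        positivity
      · have hd : 0 < |u - v| := abs_pos.mpr (sub_ne_zero.mpr huv)
        have hdS : |u - v| ≤ |u - t| + |v - t| := by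
          calc |u - v| = |(u - t) - (v - t)| := by ring_nf
            _ ≤ |u - t| + |v - t| := abs_sub _ _
        have hS0 : 0 < |u - t| + |v - t| := lt_of_lt_of_le hd hdS
        have hS1 : |u - t| + |v - t| ≤ 1 := by linarith
        have hSau : |u - t|^α ≤ (|u - t| + |v - t|)^α :=
          Real.rpow_le_rpow (abs_nonneg _) (by linarith [abs_nonneg (v - t)]) hα0
        have hSav : |v - t|^α ≤ (|u - t| + |v - t|)^α :=
          Real.rpow_le_rpow (abs_nonneg _) (by linarith [abs_nonneg (u - t)]) hα0
        have step4 : |f u - f t| + |f v - f t| ≤ 2*Ca*(|u - t| + |v - t|)^α := by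
          have g1 : Ca*|u - t|^α ≤ Ca*(|u - t| + |v - t|)^α :=
            mul_le_mul_of_nonneg_left hSau hCa.le
          have g2 : Ca*|v - t|^α ≤ Ca*(|u - t| + |v - t|)^α :=
            mul_le_mul_of_nonneg_left hSav hCa.le
          linarith
        have A1 : |f u - f v|^σg
            ≤ (Cf*|u - v|^σf*(|u - t| + |v - t|)^(-s'f))^σg :=
          Real.rpow_le_rpow (abs_nonneg _) step2 hσg0.le
        have A2 : (|f u - f t| + |f v - f t|)^(-s'g)
            ≤ (2*Ca*(|u - t| + |v - t|)^α)^(-s'g) :=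
          Real.rpow_le_rpow (by positivity) step4 (by linarith)
        have E1 : (Cf*|u - v|^σf*(|u - t| + |v - t|)^(-s'f))^σg
            = Cf^σg * |u - v|^(σf*σg) * (|u - t| + |v - t|)^(-s'f*σg) := by
          rw [Real.mul_rpow (mul_nonneg hCf.le (Real.rpow_nonneg (abs_nonneg _) _))
              (Real.rpow_nonneg hS0.le _),
            Real.mul_rpow hCf.le (Real.rpow_nonneg (abs_nonneg _) _),
            ← Real.rpow_mul (abs_nonneg _), ← Real.rpow_mul hS0.le]
        have E2 : (2*Ca*(|u - t| + |v - t|)^α)^(-s'g)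
            = (2*Ca)^(-s'g) * (|u - t| + |v - t|)^(α*(-s'g)) := by
          rw [Real.mul_rpow (by positivity) (Real.rpow_nonneg hS0.le _),
            ← Real.rpow_mul hS0.le]
        have main1 : |g (f u) - g (f v)|
            ≤ Cg * (Cf*|u - v|^σf*(|u - t| + |v - t|)^(-s'f))^σg
              * (2*Ca*(|u - t| + |v - t|)^α)^(-s'g) := by
          refine step1.trans ?_
          apply mul_le_mul (mul_le_mul_of_nonneg_left A1 hCg.le) A2
            (Real.rpow_nonneg (by positivity) _) (by positivity)
        have main2 : Cg * (Cf*|u - v|^σf*(|u - t| + |v - t|)^(-s'f))^σg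
              * (2*Ca*(|u - t| + |v - t|)^α)^(-s'g)
            = Cg * Cf^σg * (2*Ca)^(-s'g) * |u - v|^(σf*σg)
              * (|u - t| + |v - t|)^(-s'f*σg + α*(-s'g)) := by
          rw [E1, E2, Real.rpow_add hS0]; ring
        have hsplit : σf*σg = σh + ε₀ := by rw [hσhdef]; ring
        have d1 : |u - v|^(σf*σg) = |u - v|^σh * |u - v|^ε₀ := by
          rw [hsplit, Real.rpow_add hd]
        have d2 : |u - v|^ε₀ ≤ (|u - t| + |v - t|)^ε₀ :=
          Real.rpow_le_rpow hd.le hdS hε₀0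
        have d4 : (|u - t| + |v - t|)^(ε₀ + (-s'f*σg + α*(-s'g)))
            ≤ (|u - t| + |v - t|)^(-s'') :=
          Real.rpow_le_rpow_of_exponent_ge hS0 hS1 (by linarith)
        have main3 : Cg * Cf^σg * (2*Ca)^(-s'g) * |u - v|^(σf*σg)
              * (|u - t| + |v - t|)^(-s'f*σg + α*(-s'g))
            ≤ Cg * Cf^σg * (2*Ca)^(-s'g) * |u - v|^σh
              * (|u - t| + |v - t|)^(-s'') := by
          calc Cg * Cf^σg * (2*Ca)^(-s'g) * |u - v|^(σf*σg)
              * (|u - t| + |v - t|)^(-s'f*σg + α*(-s'g))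
              = Cg * Cf^σg * (2*Ca)^(-s'g) * |u - v|^σh
                * (|u - v|^ε₀ * (|u - t| + |v - t|)^(-s'f*σg + α*(-s'g))) := by
                rw [d1]; ring
            _ ≤ Cg * Cf^σg * (2*Ca)^(-s'g) * |u - v|^σh
                * ((|u - t| + |v - t|)^ε₀ * (|u - t| + |v - t|)^(-s'f*σg + α*(-s'g))) := by
                apply mul_le_mul_of_nonneg_left
                  (mul_le_mul_of_nonneg_right d2 (Real.rpow_nonneg hS0.le _))
                  (by positivity)
            _ = Cg * Cf^σg * (2*Ca)^(-s'g) * |u - v|^σh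
                * (|u - t| + |v - t|)^(ε₀ + (-s'f*σg + α*(-s'g))) := by
                rw [← Real.rpow_add hS0]
            _ ≤ Cg * Cf^σg * (2*Ca)^(-s'g) * |u - v|^σh
                * (|u - t| + |v - t|)^(-s'') := by
                apply mul_le_mul_of_nonneg_left d4 (by positivity)
        calc |(g ∘ f) u - (g ∘ f) v| = |g (f u) - g (f v)| := rfl
          _ ≤ _ := main1
          _ = _ := main2
          _ ≤ _ := main3
    · -- degenerate case : Sg*Sf = 0
      have hzero : Sg * Sf = 0 := by
        rw [not_and_or] at hpos
        rcases hpos with h | h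
        · push_neg at h; rw [le_antisymm h hSg0, zero_mul]
        · push_neg at h; rw [le_antisymm h hSf0, mul_zero]
      obtain ⟨σ, hσge, hσmem⟩ := exists_mem_near_zero hgf hfamh hs''lb (min ε 1)
        (lt_min hε one_pos) (min_le_right _ _)
      refine ⟨σ, ?_, hσmem⟩
      have : -(min ε 1) ≥ -ε := by
        simp only [neg_le_neg_iff, ge_iff_le, neg_le]
        have := min_le_left ε 1
        linarith [neg_le_neg (min_le_left ε 1)]
      rw [hzero]
      have h1 := min_le_left ε 1
      linarith
  -- conclude by passing to the limit
  apply EReal_le_of_forall_sub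
  intro ε hε
  obtain ⟨σ, hσge, hσmem⟩ := key ε hε
  have h1 : ((Sg * Sf - ε : ℝ) : EReal) ≤ ((σ : ℝ) : EReal) := by exact_mod_cast hσge
  refine h1.trans ?_
  rw [pseudoFrontierOn]
  exact le_sSup ⟨σ, rfl, hσmem⟩

end
end

section
/- Let f, g : ℝ → ℝ be continuous, let h = g ∘ f, and let x ∈ ℝ. Then the pseudo pointwise and pseudo local Hölder exponents satisfy ᾱ_{h,x} ≥ ᾱ_{g,f(x)} · ᾱ_{f,x} and α̃_{h,x} ≥ α̃_{g,f(x)} · α̃_{f,x} (with the convention that products involving +∞ are interpreted in [0,+∞]). -/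
open MeasureTheory Metric Set Filter
open scoped ENNReal

noncomputable section

section Aux
namespace PseudoAux

/-- auxiliary limsup functional -/
def lsup (t₀ : ℝ) (q : ℝ → ℝ → ℝ → ℝ) : ℝ≥0∞ :=
  Filter.limsup (fun ρ : ℝ => ⨆ u ∈ Metric.ball t₀ ρ, ⨆ v ∈ Metric.ball t₀ ρ,
    ENNReal.ofReal (q ρ u v)) (nhdsWithin 0 (Set.Ioi 0))

lemma lsup_le {t₀ : ℝ} {q : ℝ → ℝ → ℝ → ℝ} {C : ℝ}
    (h : ∀ᶠ ρ in nhdsWithin (0:ℝ) (Set.Ioi 0),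
      ∀ u ∈ Metric.ball t₀ ρ, ∀ v ∈ Metric.ball t₀ ρ, q ρ u v ≤ C) :
    lsup t₀ q ≤ ENNReal.ofReal C := by
  apply Filter.limsup_le_of_le (by isBoundedDefault)
  filter_upwards [h] with ρ hρ
  exact iSup₂_le fun u hu => iSup₂_le fun v hv => ENNReal.ofReal_le_ofReal (hρ u hu v hv)

lemma lsup_lt_top {t₀ : ℝ} {q : ℝ → ℝ → ℝ → ℝ} {C : ℝ}
    (h : ∀ᶠ ρ in nhdsWithin (0:ℝ) (Set.Ioi 0),
      ∀ u ∈ Metric.ball t₀ ρ, ∀ v ∈ Metric.ball t₀ ρ, q ρ u v ≤ C) :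
    lsup t₀ q < ⊤ :=
  (lsup_le h).trans_lt ENNReal.ofReal_lt_top

lemma exists_bound {t₀ : ℝ} {q : ℝ → ℝ → ℝ → ℝ} (h : lsup t₀ q < ⊤) :
    ∃ M : ℝ, 0 < M ∧ ∃ ε > (0:ℝ), ∀ ρ ∈ Set.Ioo 0 ε,
      ∀ u ∈ Metric.ball t₀ ρ, ∀ v ∈ Metric.ball t₀ ρ, q ρ u v ≤ M := by
  obtain ⟨c, hc1, hc2⟩ := exists_between h
  have hev := Filter.eventually_lt_of_limsup_lt hc1 (by isBoundedDefault)
  rw [Filter.eventually_iff, mem_nhdsGT_iff_exists_Ioo_subset] at hev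
  obtain ⟨ε, hε, hsub⟩ := hev
  refine ⟨c.toReal + 1, by positivity, ε, hε, fun ρ hρ u hu v hv => ?_⟩
  have h1 : ENNReal.ofReal (q ρ u v) ≤ c := by
    refine le_trans ?_ (le_of_lt (hsub hρ))
    calc ENNReal.ofReal (q ρ u v)
        ≤ ⨆ v ∈ Metric.ball t₀ ρ, ENNReal.ofReal (q ρ u v) := le_biSup (fun v => ENNReal.ofReal (q ρ u v)) hv
      _ ≤ ⨆ u ∈ Metric.ball t₀ ρ, ⨆ v ∈ Metric.ball t₀ ρ, ENNReal.ofReal (q ρ u v) :=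
          le_biSup (fun u => ⨆ v ∈ Metric.ball t₀ ρ, ENNReal.ofReal (q ρ u v)) hu
  have := (ENNReal.ofReal_le_iff_le_toReal hc2.ne).mp h1
  linarith

lemma lsup_abs_lt_top {h : ℝ → ℝ} (hc : Continuous h) (t₀ : ℝ) :
    lsup t₀ (fun _ u v => |h u - h v|) < ⊤ := by
  obtain ⟨C, hC⟩ := (isCompact_closedBall t₀ 1).exists_bound_of_continuousOn hc.continuousOn
  apply lsup_lt_top (C := 2 * C)
  rw [Filter.eventually_iff, mem_nhdsGT_iff_exists_Ioo_subset]
  refine ⟨1, by norm_num, fun ρ hρ u hu v hv => ?_⟩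
  have hub : u ∈ Metric.closedBall t₀ 1 :=
    (Metric.ball_subset_closedBall.trans (Metric.closedBall_subset_closedBall hρ.2.le)) hu
  have hvb : v ∈ Metric.closedBall t₀ 1 :=
    (Metric.ball_subset_closedBall.trans (Metric.closedBall_subset_closedBall hρ.2.le)) hv
  have h1 := hC u hub
  have h2 := hC v hvb
  rw [Real.norm_eq_abs] at h1 h2
  calc |h u - h v| ≤ |h u| + |h v| := abs_sub _ _
    _ ≤ 2 * C := by linarith

/-- the pointwise exponent admissible set -/
def pwSet (f : ℝ → ℝ) (t₀ : ℝ) : Set ℝ :=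
  {α | lsup t₀ (fun ρ u v => |f u - f v| / ρ ^ α) < ⊤}

/-- the local exponent admissible set -/
def locSet (f : ℝ → ℝ) (t₀ : ℝ) : Set ℝ :=
  {α | lsup t₀ (fun _ u v => |f u - f v| / |u - v| ^ α) < ⊤}

lemma zero_mem_pwSet {f : ℝ → ℝ} (hf : Continuous f) (t₀ : ℝ) : (0:ℝ) ∈ pwSet f t₀ := by
  have := lsup_abs_lt_top hf t₀
  simpa [pwSet, lsup, Real.rpow_zero] using this

lemma zero_mem_locSet {f : ℝ → ℝ} (hf : Continuous f) (t₀ : ℝ) : (0:ℝ) ∈ locSet f t₀ := by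
  have := lsup_abs_lt_top hf t₀
  simpa [locSet, lsup, Real.rpow_zero] using this


lemma mem_ball_abs {t₀ ρ u : ℝ} (hu : u ∈ Metric.ball t₀ ρ) : |u - t₀| < ρ := by
  simpa [Real.dist_eq] using hu

lemma pwSet_dc {f : ℝ → ℝ} {t₀ : ℝ} {α β : ℝ} (hβ : β ≤ α) (hα : α ∈ pwSet f t₀) :
    β ∈ pwSet f t₀ := by
  obtain ⟨M, hM, ε, hε, hbd⟩ := exists_bound hα
  apply lsup_lt_top (C := M)
  rw [Filter.eventually_iff, mem_nhdsGT_iff_exists_Ioo_subset]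
  refine ⟨min ε 1, by simp [hε], fun ρ hρ u hu v hv => ?_⟩
  have hρ0 : 0 < ρ := hρ.1
  have hρε : ρ < ε := hρ.2.trans_le (min_le_left _ _)
  have hρ1 : ρ ≤ 1 := (hρ.2.trans_le (min_le_right _ _)).le
  have key := hbd ρ ⟨hρ0, hρε⟩ u hu v hv
  have hpow : ρ ^ α ≤ ρ ^ β := Real.rpow_le_rpow_of_exponent_ge hρ0 hρ1 hβ
  have hpos : (0:ℝ) < ρ ^ α := Real.rpow_pos_of_pos hρ0 _
  calc |f u - f v| / ρ ^ β ≤ |f u - f v| / ρ ^ α :=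
        div_le_div_of_nonneg_left (abs_nonneg _) hpos hpow
    _ ≤ M := key

lemma locSet_dc {f : ℝ → ℝ} {t₀ : ℝ} {α β : ℝ} (hβ : β ≤ α) (hα : α ∈ locSet f t₀) :
    β ∈ locSet f t₀ := by
  obtain ⟨M, hM, ε, hε, hbd⟩ := exists_bound hα
  apply lsup_lt_top (C := M)
  rw [Filter.eventually_iff, mem_nhdsGT_iff_exists_Ioo_subset]
  refine ⟨min ε (1/2), by simp [hε], fun ρ hρ u hu v hv => ?_⟩
  have hρ0 : 0 < ρ := hρ.1
  have hρε : ρ < ε := hρ.2.trans_le (min_le_left _ _)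
  have hρ1 : ρ ≤ 1/2 := (hρ.2.trans_le (min_le_right _ _)).le
  have key := hbd ρ ⟨hρ0, hρε⟩ u hu v hv
  rcases eq_or_ne u v with rfl | huv
  · simpa using hM.le
  have huv0 : 0 < |u - v| := abs_pos.mpr (sub_ne_zero.mpr huv)
  have huv1 : |u - v| ≤ 1 := by
    have h1 := mem_ball_abs hu
    have h2 := mem_ball_abs hv
    have : |u - v| ≤ |u - t₀| + |v - t₀| := by
      calc |u - v| = |(u - t₀) - (v - t₀)| := by ring_nf
        _ ≤ |u - t₀| + |v - t₀| := abs_sub _ _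
    linarith
  have hpow : |u - v| ^ α ≤ |u - v| ^ β := Real.rpow_le_rpow_of_exponent_ge huv0 huv1 hβ
  have hpos : (0:ℝ) < |u - v| ^ α := Real.rpow_pos_of_pos huv0 _
  calc |f u - f v| / |u - v| ^ β ≤ |f u - f v| / |u - v| ^ α :=
        div_le_div_of_nonneg_left (abs_nonneg _) hpos hpow
    _ ≤ M := key

lemma pwSet_comp {f g : ℝ → ℝ} {x a b : ℝ} (ha : 0 < a) (hb : 0 < b)
    (hag : a ∈ pwSet g (f x)) (hbf : b ∈ pwSet f x) : a * b ∈ pwSet (g ∘ f) x := by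
  obtain ⟨Mg, hMg, εg, hεg, hbg⟩ := exists_bound hag
  obtain ⟨Mf, hMf, εf, hεf, hbf'⟩ := exists_bound hbf
  -- bound in multiplied form
  have Gb : ∀ ρ' ∈ Set.Ioo (0:ℝ) εg, ∀ u' ∈ Metric.ball (f x) ρ', ∀ v' ∈ Metric.ball (f x) ρ',
      |g u' - g v'| ≤ Mg * ρ' ^ a := by
    intro ρ' hρ' u' hu' v' hv'
    have := hbg ρ' hρ' u' hu' v' hv'
    have hpos : (0:ℝ) < ρ' ^ a := Real.rpow_pos_of_pos hρ'.1 _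
    calc |g u' - g v'| = |g u' - g v'| / ρ' ^ a * ρ' ^ a := by field_simp
      _ ≤ Mg * ρ' ^ a := mul_le_mul_of_nonneg_right this hpos.le
  have Fb : ∀ ρ ∈ Set.Ioo (0:ℝ) εf, ∀ u ∈ Metric.ball x ρ, ∀ v ∈ Metric.ball x ρ,
      |f u - f v| ≤ Mf * ρ ^ b := by
    intro ρ hρ u hu v hv
    have := hbf' ρ hρ u hu v hv
    have hpos : (0:ℝ) < ρ ^ b := Real.rpow_pos_of_pos hρ.1 _
    calc |f u - f v| = |f u - f v| / ρ ^ b * ρ ^ b := by field_simp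
      _ ≤ Mf * ρ ^ b := mul_le_mul_of_nonneg_right this hpos.le
  set K : ℝ := 2 * Mf with hK
  have hK0 : 0 < K := by positivity
  set δ : ℝ := min εf ((εg / K) ^ b⁻¹) with hδ
  have hδ0 : 0 < δ := by
    apply lt_min hεf
    exact Real.rpow_pos_of_pos (div_pos hεg hK0) _
  apply lsup_lt_top (C := Mg * K ^ a)
  rw [Filter.eventually_iff, mem_nhdsGT_iff_exists_Ioo_subset]
  refine ⟨δ, hδ0, fun ρ hρ u hu v hv => ?_⟩
  have hρ0 : 0 < ρ := hρ.1
  have hρεf : ρ < εf := hρ.2.trans_le (min_le_left _ _)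
  have hρδ2 : ρ < (εg / K) ^ b⁻¹ := hρ.2.trans_le (min_le_right _ _)
  have hρb : (0:ℝ) < ρ ^ b := Real.rpow_pos_of_pos hρ0 _
  have hρ'lt : K * ρ ^ b < εg := by
    have h1 : ρ ^ b < ((εg / K) ^ b⁻¹) ^ b := Real.rpow_lt_rpow hρ0.le hρδ2 hb
    rw [Real.rpow_inv_rpow (div_pos hεg hK0).le hb.ne'] at h1
    calc K * ρ ^ b < K * (εg / K) := by nlinarith
      _ = εg := by field_simp
  set ρ' : ℝ := K * ρ ^ b with hρ'
  have hρ'0 : 0 < ρ' := by positivity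
  have hmem : ∀ w ∈ Metric.ball x ρ, f w ∈ Metric.ball (f x) ρ' := by
    intro w hw
    have := Fb ρ ⟨hρ0, hρεf⟩ w hw x (Metric.mem_ball_self hρ0)
    rw [Metric.mem_ball, Real.dist_eq]
    calc |f w - f x| ≤ Mf * ρ ^ b := this
      _ < K * ρ ^ b := by nlinarith
  have hg := Gb ρ' ⟨hρ'0, hρ'lt⟩ (f u) (hmem u hu) (f v) (hmem v hv)
  have hpow : ρ' ^ a = K ^ a * ρ ^ (a * b) := by
    rw [hρ', Real.mul_rpow hK0.le hρb.le, mul_comm a b, Real.rpow_mul hρ0.le]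
  have hρab : (0:ℝ) < ρ ^ (a * b) := Real.rpow_pos_of_pos hρ0 _
  rw [div_le_iff₀ hρab]
  calc |(g ∘ f) u - (g ∘ f) v| ≤ Mg * ρ' ^ a := hg
    _ = Mg * K ^ a * ρ ^ (a * b) := by rw [hpow]; ring

lemma locSet_comp {f g : ℝ → ℝ} {x a b : ℝ} (hf : Continuous f) (ha : 0 < a) (hb : 0 < b)
    (hag : a ∈ locSet g (f x)) (hbf : b ∈ locSet f x) : a * b ∈ locSet (g ∘ f) x := by
  obtain ⟨Mg, hMg, εg, hεg, hbg⟩ := exists_bound hag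
  obtain ⟨Mf, hMf, εf, hεf, hbf'⟩ := exists_bound hbf
  have Gb : ∀ u' ∈ Metric.ball (f x) (εg/2), ∀ v' ∈ Metric.ball (f x) (εg/2),
      |g u' - g v'| ≤ Mg * |u' - v'| ^ a := by
    intro u' hu' v' hv'
    rcases eq_or_ne u' v' with rfl | huv
    · simp [Real.zero_rpow ha.ne']
    have this' := hbg (εg/2) ⟨by linarith, by linarith⟩ u' hu' v' hv'
    have hpos : (0:ℝ) < |u' - v'| ^ a :=
      Real.rpow_pos_of_pos (abs_pos.mpr (sub_ne_zero.mpr huv)) _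
    calc |g u' - g v'| = |g u' - g v'| / |u' - v'| ^ a * |u' - v'| ^ a := by field_simp
      _ ≤ Mg * |u' - v'| ^ a := mul_le_mul_of_nonneg_right this' hpos.le
  obtain ⟨δ₁, hδ₁, hcont⟩ := Metric.continuous_iff.mp hf x (εg/2) (by linarith)
  set δ : ℝ := min εf δ₁ with hδ
  have hδ0 : 0 < δ := lt_min hεf hδ₁
  apply lsup_lt_top (C := Mg * Mf ^ a)
  rw [Filter.eventually_iff, mem_nhdsGT_iff_exists_Ioo_subset]
  refine ⟨δ, hδ0, fun ρ hρ u hu v hv => ?_⟩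
  have hρ0 : 0 < ρ := hρ.1
  have hρεf : ρ < εf := hρ.2.trans_le (min_le_left _ _)
  have hρδ1 : ρ < δ₁ := hρ.2.trans_le (min_le_right _ _)
  have hFuv : |f u - f v| ≤ Mf * |u - v| ^ b := by
    rcases eq_or_ne u v with rfl | huv
    · simp [Real.zero_rpow hb.ne']
    have this' := hbf' ρ ⟨hρ0, hρεf⟩ u hu v hv
    have hpos : (0:ℝ) < |u - v| ^ b :=
      Real.rpow_pos_of_pos (abs_pos.mpr (sub_ne_zero.mpr huv)) _
    calc |f u - f v| = |f u - f v| / |u - v| ^ b * |u - v| ^ b := by field_simp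
      _ ≤ Mf * |u - v| ^ b := mul_le_mul_of_nonneg_right this' hpos.le
  have hmem : ∀ w ∈ Metric.ball x ρ, f w ∈ Metric.ball (f x) (εg/2) := by
    intro w hw
    exact Metric.mem_ball.mpr (hcont w (lt_trans (Metric.mem_ball.mp hw) hρδ1))
  have hg := Gb (f u) (hmem u hu) (f v) (hmem v hv)
  have hkey : |(g ∘ f) u - (g ∘ f) v| ≤ Mg * Mf ^ a * |u - v| ^ (a * b) := by
    calc |(g ∘ f) u - (g ∘ f) v| ≤ Mg * |f u - f v| ^ a := hg
      _ ≤ Mg * (Mf * |u - v| ^ b) ^ a := by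
          apply mul_le_mul_of_nonneg_left _ hMg.le
          exact Real.rpow_le_rpow (abs_nonneg _) hFuv ha.le
      _ = Mg * Mf ^ a * |u - v| ^ (a * b) := by
          rw [Real.mul_rpow hMf.le (Real.rpow_nonneg (abs_nonneg _) _),
            mul_comm a b, Real.rpow_mul (abs_nonneg _)]; ring
  rcases eq_or_ne u v with rfl | huv
  · simpa using by positivity
  have hpos : (0:ℝ) < |u - v| ^ (a * b) :=
    Real.rpow_pos_of_pos (abs_pos.mpr (sub_ne_zero.mpr huv)) _
  rw [div_le_iff₀ hpos]
  exact hkey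

end PseudoAux


lemma ereal_mul_le {A B C : EReal} (hA : 0 ≤ A) (hB : 0 ≤ B) (hC : 0 ≤ C)
    (h : ∀ a b : ℝ, 0 < a → 0 < b → (a : EReal) < A → (b : EReal) < B →
      ((a * b : ℝ) : EReal) ≤ C) :
    A * B ≤ C := by
  rcases eq_or_lt_of_le hA with h0 | hA'
  · rw [← h0, zero_mul]; exact hC
  rcases eq_or_lt_of_le hB with h0 | hB'
  · rw [← h0, mul_zero]; exact hC
  apply le_of_forall_lt
  intro c hc
  induction c with
  | bot => exact lt_of_lt_of_le (by simp) hC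
  | top => exact absurd hc (not_lt.mpr le_top)
  | coe c₀ =>
    -- find reals 0 < a < A, 0 < b < B with c₀ < a*b
    suffices hs : ∃ a b : ℝ, 0 < a ∧ 0 < b ∧ (a:EReal) < A ∧ (b:EReal) < B ∧ c₀ < a * b by
      obtain ⟨a, b, ha, hb, haA, hbB, hab⟩ := hs
      calc (c₀ : EReal) < ((a*b : ℝ) : EReal) := EReal.coe_lt_coe_iff.mpr hab
        _ ≤ C := h a b ha hb haA hbB
    induction A with
    | bot => exact absurd hA' (by simp)
    | top =>
      obtain ⟨b, hb0, hbB⟩ := EReal.exists_between_coe_real hB'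
      have hb : (0:ℝ) < b := by exact_mod_cast hb0
      refine ⟨(max c₀ 0 + 1) / b, b, by positivity, hb, EReal.coe_lt_top _, hbB, ?_⟩
      have : (max c₀ 0 + 1) / b * b = max c₀ 0 + 1 := by field_simp
      rw [this]
      have := le_max_left c₀ 0
      linarith
    | coe a₀ =>
      have ha₀ : (0:ℝ) < a₀ := by exact_mod_cast hA'
      induction B with
      | bot => exact absurd hB' (by simp)
      | top =>
        refine ⟨a₀ / 2, (max c₀ 0 + 1) / (a₀ / 2), by positivity, by positivity,
          ?_, EReal.coe_lt_top _, ?_⟩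
        · exact_mod_cast by linarith
        · have : a₀ / 2 * ((max c₀ 0 + 1) / (a₀ / 2)) = max c₀ 0 + 1 := by
            field_simp
          rw [this]
          have := le_max_left c₀ 0
          linarith
      | coe b₀ =>
        have hb₀ : (0:ℝ) < b₀ := by exact_mod_cast hB'
        have hcab : c₀ < a₀ * b₀ := by
          have : (c₀ : EReal) < ((a₀ * b₀ : ℝ) : EReal) := by
            rw [EReal.coe_mul]; exact hc
          exact_mod_cast this
        set m : ℝ := max c₀ 0 with hm
        have hm0 : 0 ≤ m := le_max_right _ _
        have hmab : m < a₀ * b₀ := max_lt hcab (by positivity)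
        set r : ℝ := m / (a₀ * b₀) with hr
        have hr0 : 0 ≤ r := by positivity
        have hr1 : r < 1 := (div_lt_one (by positivity)).mpr hmab
        set θ : ℝ := (r + 1) / 2 with hθ
        have hθ0 : 0 < θ := by positivity
        have hθ1 : θ < 1 := by rw [hθ]; linarith
        refine ⟨θ * a₀, θ * b₀, by positivity, by positivity, ?_, ?_, ?_⟩
        · exact_mod_cast by nlinarith
        · exact_mod_cast by nlinarith
        · have hmr : m = r * (a₀ * b₀) := by rw [hr]; field_simp
          have hc₀m : c₀ ≤ m := le_max_left _ _
          have h1r : (0:ℝ) < 1 - r := by linarith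
          have hpos : (0:ℝ) < (1 - r)^2 / 4 * (a₀ * b₀) := by positivity
          have heq : θ * a₀ * (θ * b₀) = r * (a₀ * b₀) + (1 - r)^2 / 4 * (a₀ * b₀) := by
            rw [hθ]; ring
          linarith [hmr]

lemma sSup_key {Sg Sf Sh : Set ℝ}
    (hg0 : (0:ℝ) ∈ Sg) (hf0 : (0:ℝ) ∈ Sf) (hh0 : (0:ℝ) ∈ Sh)
    (hgdc : ∀ β α : ℝ, β ≤ α → α ∈ Sg → β ∈ Sg)
    (hfdc : ∀ β α : ℝ, β ≤ α → α ∈ Sf → β ∈ Sf)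
    (hcomp : ∀ a b : ℝ, 0 < a → 0 < b → a ∈ Sg → b ∈ Sf → a * b ∈ Sh) :
    sSup {x : EReal | ∃ α : ℝ, x = (α : EReal) ∧ α ∈ Sg} *
        sSup {x : EReal | ∃ α : ℝ, x = (α : EReal) ∧ α ∈ Sf} ≤
      sSup {x : EReal | ∃ α : ℝ, x = (α : EReal) ∧ α ∈ Sh} := by
  have h0 : ∀ {S : Set ℝ}, (0:ℝ) ∈ S →
      (0:EReal) ≤ sSup {x : EReal | ∃ α : ℝ, x = (α : EReal) ∧ α ∈ S} := by
    intro S hS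
    have : ((0:ℝ) : EReal) ∈ {x : EReal | ∃ α : ℝ, x = (α : EReal) ∧ α ∈ S} := ⟨0, rfl, hS⟩
    simpa using le_sSup this
  apply ereal_mul_le (h0 hg0) (h0 hf0) (h0 hh0)
  intro a b ha hb haA hbB
  obtain ⟨y, ⟨cg, rfl, hcg⟩, hay⟩ := lt_sSup_iff.mp haA
  obtain ⟨z, ⟨cf, rfl, hcf⟩, hbz⟩ := lt_sSup_iff.mp hbB
  have hag : a ∈ Sg := hgdc a cg (le_of_lt (EReal.coe_lt_coe_iff.mp hay)) hcg
  have haf : b ∈ Sf := hfdc b cf (le_of_lt (EReal.coe_lt_coe_iff.mp hbz)) hcf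
  exact le_sSup ⟨a * b, rfl, hcomp a b ha hb hag haf⟩

lemma pw_eq (f : ℝ → ℝ) (t₀ : ℝ) :
    pseudoPointwiseExpOn Set.univ f t₀ =
      sSup {x : EReal | ∃ α : ℝ, x = (α : EReal) ∧ α ∈ PseudoAux.pwSet f t₀} := by
  unfold pseudoPointwiseExpOn PseudoAux.pwSet PseudoAux.lsup
  simp only [Set.inter_univ]
  rfl

lemma loc_eq (f : ℝ → ℝ) (t₀ : ℝ) :
    pseudoLocalExpOn Set.univ f t₀ =
      sSup {x : EReal | ∃ α : ℝ, x = (α : EReal) ∧ α ∈ PseudoAux.locSet f t₀} := by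
  unfold pseudoLocalExpOn PseudoAux.locSet PseudoAux.lsup
  simp only [Set.inter_univ]
  rfl

end Aux

/-- the pseudo pointwise and pseudo local Hölder exponents of a composition
`h = g ∘ f` satisfy `ᾱ_{h,x} ≥ ᾱ_{g,f(x)} · ᾱ_{f,x}` and `α̃_{h,x} ≥ α̃_{g,f(x)} · α̃_{f,x}`
(the exponents of continuous functions lie in `[0,∞]`, and `EReal` multiplication realizes
the `[0,+∞]` convention for products involving `+∞`). -/

theorem pseudoExp_comp (f g : ℝ → ℝ) (hf : Continuous f) (hg : Continuous g) (x : ℝ) :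
    pseudoPointwiseExpOn Set.univ g (f x) * pseudoPointwiseExpOn Set.univ f x
        ≤ pseudoPointwiseExpOn Set.univ (g ∘ f) x ∧
      pseudoLocalExpOn Set.univ g (f x) * pseudoLocalExpOn Set.univ f x
        ≤ pseudoLocalExpOn Set.univ (g ∘ f) x := by
  constructor
  · rw [pw_eq g (f x), pw_eq f x, pw_eq (g ∘ f) x]
    exact sSup_key (PseudoAux.zero_mem_pwSet hg _) (PseudoAux.zero_mem_pwSet hf _)
      (PseudoAux.zero_mem_pwSet (hg.comp hf) _)
      (fun β α hβα hα => PseudoAux.pwSet_dc hβα hα)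
      (fun β α hβα hα => PseudoAux.pwSet_dc hβα hα)
      (fun a b ha hb hag hbf => PseudoAux.pwSet_comp ha hb hag hbf)
  · rw [loc_eq g (f x), loc_eq f x, loc_eq (g ∘ f) x]
    exact sSup_key (PseudoAux.zero_mem_locSet hg _) (PseudoAux.zero_mem_locSet hf _)
      (PseudoAux.zero_mem_locSet (hg.comp hf) _)
      (fun β α hβα hα => PseudoAux.locSet_dc hβα hα)
      (fun β α hβα hα => PseudoAux.locSet_dc hβα hα)
      (fun a b ha hb hag hbf => PseudoAux.locSet_comp hf ha hb hag hbf)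

end
end

section
/- Let f, g : ℝ → ℝ be continuous, t ∈ ℝ, and s' ∈ ℝ. Then the pseudo 2-microlocal frontier of the sum satisfies Σ_{f+g,t}(s') ≥ min(Σ_{f,t}(s'), Σ_{g,t}(s')). Moreover, if Σ_{f,t}(s') ≠ Σ_{g,t}(s'), then equality holds: Σ_{f+g,t}(s') = min(Σ_{f,t}(s'), Σ_{g,t}(s')). -/
open MeasureTheory Metric Set Filter

noncomputable section

lemma iterInt_continuous (t₀ : ℝ) (h : ℝ → ℝ) (hc : Continuous h) :
    ∀ k, Continuous (iterInt t₀ h k)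
  | 0 => hc
  | (k+1) => by
      have ih := iterInt_continuous t₀ h hc k
      exact intervalIntegral.continuous_primitive (fun a b => ih.intervalIntegrable a b) t₀

lemma iterInt_add (t₀ : ℝ) (h₁ h₂ : ℝ → ℝ) (hc1 : Continuous h₁) (hc2 : Continuous h₂) :
    ∀ k s, iterInt t₀ (fun x => h₁ x + h₂ x) k s = iterInt t₀ h₁ k s + iterInt t₀ h₂ k s
  | 0, s => rfl
  | (k+1), s => by
      have ih := iterInt_add t₀ h₁ h₂ hc1 hc2 k
      show (∫ x in t₀..s, iterInt t₀ (fun x => h₁ x + h₂ x) k x) = _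
      rw [show (fun x => iterInt t₀ (fun x => h₁ x + h₂ x) k x)
            = fun x => iterInt t₀ h₁ k x + iterInt t₀ h₂ k x from funext ih]
      exact intervalIntegral.integral_add
        ((iterInt_continuous t₀ h₁ hc1 k).intervalIntegrable _ _)
        ((iterInt_continuous t₀ h₂ hc2 k).intervalIntegrable _ _)

lemma iterInt_neg (t₀ : ℝ) (h : ℝ → ℝ) :
    ∀ k s, iterInt t₀ (fun x => -(h x)) k s = -(iterInt t₀ h k s)
  | 0, s => rfl
  | (k+1), s => by
      have ih := iterInt_neg t₀ h k
      show (∫ x in t₀..s, iterInt t₀ (fun x => -(h x)) k x) = _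
      rw [show (fun x => iterInt t₀ (fun x => -(h x)) k x)
            = fun x => -(iterInt t₀ h k x) from funext ih]
      exact intervalIntegral.integral_neg

lemma iterInt_base (t₀ : ℝ) (h : ℝ → ℝ) (k : ℕ) : iterInt t₀ h (k+1) t₀ = 0 := by
  show (∫ x in t₀..t₀, iterInt t₀ h k x) = 0
  exact intervalIntegral.integral_same

lemma iterInt_comp (t₀ : ℝ) (h : ℝ → ℝ) (j : ℕ) :
    ∀ i s, iterInt t₀ h (j + i) s = iterInt t₀ (iterInt t₀ h j) i s
  | 0, s => rfl
  | (i+1), s => by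
      have ih := iterInt_comp t₀ h j i
      show (∫ x in t₀..s, iterInt t₀ h (j + i) x) = ∫ x in t₀..s, iterInt t₀ (iterInt t₀ h j) i x
      rw [show (fun x => iterInt t₀ h (j + i) x) = fun x => iterInt t₀ (iterInt t₀ h j) i x
        from funext ih]

lemma seg_abs_le {u v t₀ x : ℝ} (hx : x ∈ Set.uIcc v u) :
    |x - t₀| ≤ max |u - t₀| |v - t₀| := by
  rw [Set.mem_uIcc] at hx
  have h1 := le_abs_self (u - t₀); have h2 := neg_abs_le (u - t₀)
  have h3 := le_abs_self (v - t₀); have h4 := neg_abs_le (v - t₀)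
  have h5 := le_max_left |u - t₀| |v - t₀|; have h6 := le_max_right |u - t₀| |v - t₀|
  rcases hx with ⟨ha, hb⟩ | ⟨ha, hb⟩ <;> rw [abs_le] <;> constructor <;> linarith

lemma core_bound (h : ℝ → ℝ) (hc : Continuous h) (t₀ ρ e K : ℝ) (he : 0 ≤ e) (hK : 0 ≤ K)
    (hb : ∀ s ∈ Metric.ball t₀ ρ, |h s| ≤ K * |s - t₀| ^ e) :
    ∀ k, ∀ s ∈ Metric.ball t₀ ρ, |iterInt t₀ h k s| ≤ K * |s - t₀| ^ (e + k) := by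
  intro k
  induction k with
  | zero => intro s hs; simpa [iterInt] using hb s hs
  | succ k ih =>
    intro s hs
    rcases eq_or_ne s t₀ with rfl | hst
    · rw [iterInt_base]
      have : (0:ℝ) ≤ K * |s - s| ^ (e + (k+1:ℕ)) :=
        mul_nonneg hK (Real.rpow_nonneg (abs_nonneg _) _)
      simpa using this
    · have habs : (0:ℝ) < |s - t₀| := abs_pos.mpr (sub_ne_zero.mpr hst)
      have hbound : ∀ x ∈ Set.uIoc t₀ s, ‖iterInt t₀ h k x‖ ≤ K * |s - t₀| ^ (e + k) := by
        intro x hx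
        have hx' : x ∈ Set.uIcc t₀ s := Set.uIoc_subset_uIcc hx
        have hxs : |x - t₀| ≤ |s - t₀| := by
          have := seg_abs_le (u := s) (v := t₀) (t₀ := t₀) (x := x) hx'
          simpa using this
        have hxball : x ∈ Metric.ball t₀ ρ := by
          rw [Metric.mem_ball, Real.dist_eq]
          exact lt_of_le_of_lt hxs (by rwa [Metric.mem_ball, Real.dist_eq] at hs)
        calc ‖iterInt t₀ h k x‖ = |iterInt t₀ h k x| := rfl
          _ ≤ K * |x - t₀| ^ (e + k) := ih x hxball
          _ ≤ K * |s - t₀| ^ (e + k) :=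
              mul_le_mul_of_nonneg_left
                (Real.rpow_le_rpow (abs_nonneg _) hxs (by positivity)) hK
      have hint := intervalIntegral.norm_integral_le_of_norm_le_const hbound
      have : |iterInt t₀ h (k+1) s| ≤ K * |s - t₀| ^ (e + k) * |s - t₀| := by
        show |∫ x in t₀..s, iterInt t₀ h k x| ≤ _
        exact hint
      calc |iterInt t₀ h (k+1) s| ≤ K * |s - t₀| ^ (e + k) * |s - t₀| := this
        _ = K * |s - t₀| ^ (e + (k+1:ℕ)) := by
            rw [mul_assoc, ← Real.rpow_add_one (ne_of_gt habs)]
            push_cast; ring_nf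

def Q (t₀ s' : ℝ) (F : ℝ → ℝ) (a : ℝ) : Prop :=
  ∃ C > (0:ℝ), ∃ ρ > (0:ℝ), ∀ u ∈ Metric.ball t₀ ρ, ∀ v ∈ Metric.ball t₀ ρ,
    |F u - F v| ≤ C * |u - v| ^ a * (|u - t₀| + |v - t₀|) ^ (-s')

lemma q_mono {t₀ s' a b : ℝ} {F : ℝ → ℝ} (hba : b ≤ a) (h : Q t₀ s' F a) : Q t₀ s' F b := by
  obtain ⟨C, hC, ρ, hρ, H⟩ := h
  refine ⟨C * (2*ρ) ^ (a - b), by positivity, ρ, hρ, ?_⟩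
  intro u hu v hv
  rcases eq_or_ne u v with rfl | huv
  · have h0 : |F u - F u| = 0 := by simp
    rw [h0]; positivity
  · have huv' : (0:ℝ) < |u - v| := abs_pos.mpr (sub_ne_zero.mpr huv)
    have h2ρ : |u - v| ≤ 2 * ρ := by
      rw [Metric.mem_ball, Real.dist_eq] at hu hv
      have h1 := abs_sub_le u t₀ v
      have h2 : |t₀ - v| = |v - t₀| := abs_sub_comm _ _
      linarith
    have e1 : |u - v| ^ a = |u - v| ^ b * |u - v| ^ (a - b) := by
      rw [← Real.rpow_add huv']
      congr 1
      ring
    have hYZ : |u - v| ^ (a - b) ≤ (2*ρ) ^ (a - b) :=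
      Real.rpow_le_rpow huv'.le h2ρ (sub_nonneg.mpr hba)
    have hW : (0:ℝ) ≤ (|u - t₀| + |v - t₀|) ^ (-s') := Real.rpow_nonneg (by positivity) _
    calc |F u - F v| ≤ C * |u - v| ^ a * (|u - t₀| + |v - t₀|) ^ (-s') := H u hu v hv
      _ = C * |u - v| ^ (a-b) * (|u - v| ^ b * (|u - t₀| + |v - t₀|) ^ (-s')) := by
          rw [e1]; ring
      _ ≤ C * (2*ρ) ^ (a-b) * (|u - v| ^ b * (|u - t₀| + |v - t₀|) ^ (-s')) := by
          apply mul_le_mul_of_nonneg_right (mul_le_mul_of_nonneg_left hYZ hC.le)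
          positivity
      _ = C * (2*ρ) ^ (a - b) * |u - v| ^ b * (|u - t₀| + |v - t₀|) ^ (-s') := by ring

lemma q_add {t₀ s' a : ℝ} {F G : ℝ → ℝ} (hF : Q t₀ s' F a) (hG : Q t₀ s' G a) :
    Q t₀ s' (fun u => F u + G u) a := by
  obtain ⟨C₁, hC₁, ρ₁, hρ₁, H₁⟩ := hF
  obtain ⟨C₂, hC₂, ρ₂, hρ₂, H₂⟩ := hG
  refine ⟨C₁ + C₂, by positivity, min ρ₁ ρ₂, lt_min hρ₁ hρ₂, ?_⟩
  intro u hu v hv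
  have hu1 : u ∈ Metric.ball t₀ ρ₁ := Metric.ball_subset_ball (min_le_left _ _) hu
  have hu2 : u ∈ Metric.ball t₀ ρ₂ := Metric.ball_subset_ball (min_le_right _ _) hu
  have hv1 : v ∈ Metric.ball t₀ ρ₁ := Metric.ball_subset_ball (min_le_left _ _) hv
  have hv2 : v ∈ Metric.ball t₀ ρ₂ := Metric.ball_subset_ball (min_le_right _ _) hv
  have := H₁ u hu1 v hv1; have := H₂ u hu2 v hv2
  have htri : |F u + G u - (F v + G v)| ≤ |F u - F v| + |G u - G v| := by
    have : F u + G u - (F v + G v) = (F u - F v) + (G u - G v) := by ring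
    rw [this]; exact abs_add_le _ _
  calc |F u + G u - (F v + G v)| ≤ |F u - F v| + |G u - G v| := htri
    _ ≤ C₁ * |u - v| ^ a * (|u - t₀| + |v - t₀|) ^ (-s')
        + C₂ * |u - v| ^ a * (|u - t₀| + |v - t₀|) ^ (-s') := by
        exact add_le_add (H₁ u hu1 v hv1) (H₂ u hu2 v hv2)
    _ = (C₁ + C₂) * |u - v| ^ a * (|u - t₀| + |v - t₀|) ^ (-s') := by ring

lemma q_neg {t₀ s' a : ℝ} {F : ℝ → ℝ} (hF : Q t₀ s' F a) : Q t₀ s' (fun u => -(F u)) a := by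
  obtain ⟨C, hC, ρ, hρ, H⟩ := hF
  refine ⟨C, hC, ρ, hρ, ?_⟩
  intro u hu v hv
  have : |-(F u) - -(F v)| = |F u - F v| := by rw [show -(F u) - -(F v) = -(F u - F v) by ring, abs_neg]
  rw [this]; exact H u hu v hv

/-- Main technical step: from a pointwise bound at level 0, membership at level `n`. -/
lemma q_iter (h : ℝ → ℝ) (hc : Continuous h) (t₀ ρ K e s' a : ℝ) (n : ℕ) (hn : 1 ≤ n)
    (he : 0 ≤ e) (hK : 0 ≤ K) (hρ : 0 < ρ) (ha1 : a ≤ 1) (hcond : 0 ≤ e + n - a + s')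
    (hb : ∀ s ∈ Metric.ball t₀ ρ, |h s| ≤ K * |s - t₀| ^ e) :
    Q t₀ s' (iterInt t₀ h n) a := by
  obtain ⟨k, rfl⟩ : ∃ k, n = k + 1 := ⟨n - 1, by omega⟩
  refine ⟨(K + 1) * (2*ρ) ^ (e + (k+1:ℕ) - a + s'), by positivity, ρ, hρ, ?_⟩
  intro u hu v hv
  rcases eq_or_ne u v with rfl | huv
  · have h0 : |iterInt t₀ h (k+1) u - iterInt t₀ h (k+1) u| = 0 := by simp
    rw [h0]; positivity
  · have huv' : (0:ℝ) < |u - v| := abs_pos.mpr (sub_ne_zero.mpr huv)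
    set d := |u - t₀| + |v - t₀| with hd
    have hud : |u - v| ≤ d := by
      have h1 := abs_sub_le u t₀ v
      have h2 : |t₀ - v| = |v - t₀| := abs_sub_comm _ _
      rw [hd]; linarith
    have hdpos : (0:ℝ) < d := lt_of_lt_of_le huv' hud
    have hdρ : d ≤ 2 * ρ := by
      rw [Metric.mem_ball, Real.dist_eq] at hu hv
      rw [hd]; linarith
    -- increment identity
    have hcont := iterInt_continuous t₀ h hc k
    have hinc : iterInt t₀ h (k+1) u - iterInt t₀ h (k+1) v
        = ∫ x in v..u, iterInt t₀ h k x := by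
      show (∫ x in t₀..u, iterInt t₀ h k x) - (∫ x in t₀..v, iterInt t₀ h k x) = _
      exact intervalIntegral.integral_interval_sub_left
        (hcont.intervalIntegrable _ _) (hcont.intervalIntegrable _ _)
    have hcore := core_bound h hc t₀ ρ e K he hK hb k
    have hmaxd : max |u - t₀| |v - t₀| ≤ d := by
      rw [hd]
      exact max_le (le_add_of_nonneg_right (abs_nonneg _)) (le_add_of_nonneg_left (abs_nonneg _))
    have hboundseg : ∀ x ∈ Set.uIoc v u, ‖iterInt t₀ h k x‖ ≤ K * d ^ (e + (k:ℝ)) := by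
      intro x hx
      have hx' : x ∈ Set.uIcc v u := Set.uIoc_subset_uIcc hx
      have hxm : |x - t₀| ≤ max |u - t₀| |v - t₀| := seg_abs_le hx'
      have hxd : |x - t₀| ≤ d := le_trans hxm hmaxd
      have hxball : x ∈ Metric.ball t₀ ρ := by
        rw [Metric.mem_ball, Real.dist_eq] at hu hv ⊢
        exact lt_of_le_of_lt hxm (max_lt hu hv)
      calc ‖iterInt t₀ h k x‖ = |iterInt t₀ h k x| := Real.norm_eq_abs _
        _ ≤ K * |x - t₀| ^ (e + (k:ℝ)) := hcore x hxball
        _ ≤ K * d ^ (e + (k:ℝ)) :=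
            mul_le_mul_of_nonneg_left (Real.rpow_le_rpow (abs_nonneg _) hxd (by positivity)) hK
    have hcond' : (0:ℝ) ≤ e + (k:ℝ) + 1 - a + s' := by push_cast at hcond; linarith
    have s1 : |u - v| = |u - v| ^ a * |u - v| ^ (1 - a) := by
      have h1 : a + (1 - a) = 1 := by ring
      rw [← Real.rpow_add huv', h1, Real.rpow_one]
    have s2 : |u - v| ^ (1 - a) ≤ d ^ (1 - a) := Real.rpow_le_rpow huv'.le hud (by linarith)
    have s3 : d ^ (e + (k:ℝ)) * d ^ (1 - a) = d ^ (-s') * d ^ (e + (k:ℝ) + 1 - a + s') := by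
      rw [← Real.rpow_add hdpos, ← Real.rpow_add hdpos]; ring_nf
    have s4 : d ^ (e + (k:ℝ) + 1 - a + s') ≤ (2*ρ) ^ (e + (k:ℝ) + 1 - a + s') :=
      Real.rpow_le_rpow hdpos.le hdρ hcond'
    have hcast : e + (k:ℝ) + 1 - a + s' = e + ((k+1:ℕ):ℝ) - a + s' := by push_cast; ring
    calc |iterInt t₀ h (k+1) u - iterInt t₀ h (k+1) v|
        = ‖∫ x in v..u, iterInt t₀ h k x‖ := by rw [hinc, Real.norm_eq_abs]
      _ ≤ K * d ^ (e + (k:ℝ)) * |u - v| :=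
          intervalIntegral.norm_integral_le_of_norm_le_const hboundseg
      _ = K * d ^ (e + (k:ℝ)) * (|u - v| ^ a * |u - v| ^ (1 - a)) := by rw [← s1]
      _ ≤ K * d ^ (e + (k:ℝ)) * (|u - v| ^ a * d ^ (1 - a)) := by
          apply mul_le_mul_of_nonneg_left
            (mul_le_mul_of_nonneg_left s2 (Real.rpow_nonneg huv'.le a))
          positivity
      _ = K * (d ^ (e + (k:ℝ)) * d ^ (1 - a)) * |u - v| ^ a := by ring
      _ = K * d ^ (e + (k:ℝ) + 1 - a + s') * |u - v| ^ a * d ^ (-s') := by rw [s3]; ring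
      _ ≤ (K + 1) * (2*ρ) ^ (e + ((k+1:ℕ)) - a + s') * |u - v| ^ a * d ^ (-s') := by
          rw [← hcast]
          have hx1 : (0:ℝ) ≤ |u - v| ^ a := Real.rpow_nonneg huv'.le a
          have hx2 : (0:ℝ) ≤ d ^ (-s') := Real.rpow_nonneg hdpos.le _
          have : K * d ^ (e + (k:ℝ) + 1 - a + s')
              ≤ (K + 1) * (2*ρ) ^ (e + (k:ℝ) + 1 - a + s') := by
            apply mul_le_mul (by linarith) s4 (Real.rpow_nonneg hdpos.le _) (by linarith)
          exact mul_le_mul_of_nonneg_right (mul_le_mul_of_nonneg_right this hx1) hx2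
-- floor facts for σ < 0
lemma floor_neg_facts {σ : ℝ} (hσ : σ < 0) :
    1 ≤ (-⌊σ⌋).toNat ∧ (((-⌊σ⌋).toNat : ℝ)) = -(⌊σ⌋ : ℝ) ∧
      0 ≤ σ + ((-⌊σ⌋).toNat : ℝ) ∧ σ + ((-⌊σ⌋).toNat : ℝ) < 1 := by
  have h1 : ⌊σ⌋ < 0 := by
    have := Int.floor_le σ
    by_contra hcon
    push_neg at hcon
    have : (0:ℝ) ≤ (⌊σ⌋:ℝ) := by exact_mod_cast hcon
    linarith
  have h2 : (1:ℤ) ≤ -⌊σ⌋ := by omega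
  have h3 : ((-⌊σ⌋).toNat : ℤ) = -⌊σ⌋ := Int.toNat_of_nonneg (by omega)
  have h4 : (((-⌊σ⌋).toNat : ℝ)) = -(⌊σ⌋ : ℝ) := by
    have := congrArg (fun z : ℤ => (z : ℝ)) h3
    push_cast at this
    exact_mod_cast this
  refine ⟨by omega, h4, ?_, ?_⟩
  · rw [h4]; have := Int.floor_le σ; linarith
  · rw [h4]; have := Int.lt_floor_add_one σ; linarith

lemma memOn_univ_iff (f : ℝ → ℝ) (t₀ σ s' : ℝ) :
    PseudoMemOn Set.univ f t₀ σ s' ↔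
      (if 0 ≤ σ then Q t₀ s' f σ
       else Q t₀ s' (iterInt t₀ (fun s => f s - f t₀) (-⌊σ⌋).toNat)
          (σ + ((-⌊σ⌋).toNat : ℝ))) := by
  unfold PseudoMemOn Q
  split_ifs <;> simp [Set.inter_univ]

/-- pointwise bound from Q at t₀, when F t₀ = 0 -/
lemma q_point {t₀ s' a : ℝ} {F : ℝ → ℝ} (hQ : Q t₀ s' F a) (hF0 : F t₀ = 0) :
    ∃ C > (0:ℝ), ∃ ρ > (0:ℝ), ∀ s ∈ Metric.ball t₀ ρ, |F s| ≤ C * |s - t₀| ^ (a - s') := by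
  obtain ⟨C, hC, ρ, hρ, H⟩ := hQ
  refine ⟨C, hC, ρ, hρ, ?_⟩
  intro s hs
  rcases eq_or_ne s t₀ with rfl | hst
  · rw [hF0]; simp only [abs_zero]; positivity
  · have hst' : (0:ℝ) < |s - t₀| := abs_pos.mpr (sub_ne_zero.mpr hst)
    have ht₀ : t₀ ∈ Metric.ball t₀ ρ := Metric.mem_ball_self hρ
    have := H s hs t₀ ht₀
    rw [hF0, sub_zero, sub_self, abs_zero, add_zero] at this
    calc |F s| ≤ C * |s - t₀| ^ a * |s - t₀| ^ (-s') := this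
      _ = C * |s - t₀| ^ (a - s') := by
          rw [mul_assoc, ← Real.rpow_add hst', ← sub_eq_add_neg]

/-- universal membership: any continuous function is in the space for σ < 0, σ ≤ s' -/
lemma memOn_univ_of_neg (f : ℝ → ℝ) (hf : Continuous f) (t₀ s' σ : ℝ) (hσ : σ < 0)
    (hσs : σ ≤ s') : PseudoMemOn Set.univ f t₀ σ s' := by
  rw [memOn_univ_iff, if_neg (not_le.mpr hσ)]
  obtain ⟨hm1, hmval, hfr0, hfr1⟩ := floor_neg_facts hσ
  set m := (-⌊σ⌋).toNat
  set h : ℝ → ℝ := fun s => f s - f t₀ with hh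
  have hch : Continuous h := hf.sub continuous_const
  obtain ⟨K, hK⟩ := (isCompact_closedBall t₀ 1).exists_bound_of_continuousOn hch.continuousOn
  have hb : ∀ s ∈ Metric.ball t₀ 1, |h s| ≤ (max K 0 + 1) * |s - t₀| ^ (0:ℝ) := by
    intro s hs
    rw [Real.rpow_zero, mul_one]
    have := hK s (Metric.ball_subset_closedBall hs)
    rw [Real.norm_eq_abs] at this
    have : |h s| ≤ K := this
    have h2 : K ≤ max K 0 + 1 := by
      have := le_max_left K (0:ℝ); linarith
    linarith
  apply q_iter h hch t₀ 1 (max K 0 + 1) 0 s' (σ + (m:ℝ)) m hm1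
    le_rfl (by positivity) one_pos (by linarith) ?_ hb
  have : (m:ℝ) = -(⌊σ⌋:ℝ) := hmval
  push_cast
  rw [this]
  linarith

/-- monotonicity for nonnegative target -/
lemma memOn_mono_nonneg (f : ℝ → ℝ) (t₀ s' τ σ : ℝ) (h0 : 0 ≤ τ) (hτσ : τ ≤ σ)
    (h : PseudoMemOn Set.univ f t₀ σ s') : PseudoMemOn Set.univ f t₀ τ s' := by
  rw [memOn_univ_iff, if_pos (le_trans h0 hτσ)] at h
  rw [memOn_univ_iff, if_pos h0]
  exact q_mono hτσ h

/-- monotonicity for negative target, assuming s' < 0 -/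
lemma memOn_mono_neg (f : ℝ → ℝ) (hf : Continuous f) (t₀ s' τ σ : ℝ) (hτ : τ < 0)
    (hs' : s' < 0) (hτσ : τ ≤ σ) (h : PseudoMemOn Set.univ f t₀ σ s') :
    PseudoMemOn Set.univ f t₀ τ s' := by
  obtain ⟨hm1, hmval, hfr0, hfr1⟩ := floor_neg_facts hτ
  rw [memOn_univ_iff, if_neg (not_le.mpr hτ)]
  have hch : Continuous (fun s => f s - f t₀) := hf.sub continuous_const
  rcases le_or_gt 0 σ with hσ0 | hσ0
  · -- σ ≥ 0 : pointwise bound with exponent σ - s'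
    rw [memOn_univ_iff, if_pos hσ0] at h
    have hQ : Q t₀ s' (fun s => f s - f t₀) σ := by
      obtain ⟨C, hC, ρ, hρ, H⟩ := h
      refine ⟨C, hC, ρ, hρ, fun u hu v hv => ?_⟩
      show |f u - f t₀ - (f v - f t₀)| ≤ _
      rw [sub_sub_sub_cancel_right]
      exact H u hu v hv
    have hpt := q_point hQ (by simp)
    obtain ⟨C, hC, ρ, hρ, hb⟩ := hpt
    apply q_iter (fun s => f s - f t₀) hch t₀ ρ C (σ - s') s' (τ + ((-⌊τ⌋).toNat : ℝ))
      (-⌊τ⌋).toNat hm1 (by linarith) hC.le hρ (by linarith) ?_ hb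
    rw [hmval]
    have := Int.floor_le τ
    linarith
  · -- σ < 0
    obtain ⟨hn1, hnval, hgr0, hgr1⟩ := floor_neg_facts hσ0
    rw [memOn_univ_iff, if_neg (not_le.mpr hσ0)] at h
    have hmn : (-⌊σ⌋).toNat ≤ (-⌊τ⌋).toNat := by
      have : (⌊τ⌋ : ℤ) ≤ ⌊σ⌋ := Int.floor_le_floor hτσ
      omega
    rcases eq_or_lt_of_le hmn with heq | hlt
    · -- same level: rescale
      rw [← heq]
      have hle : τ + (((-⌊σ⌋).toNat : ℕ):ℝ) ≤ σ + (((-⌊σ⌋).toNat : ℕ):ℝ) := by linarith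
      exact q_mono hle h
    · -- strict: integrate up
      have hF0 : iterInt t₀ (fun s => f s - f t₀) (-⌊σ⌋).toNat t₀ = 0 := by
        have hk : ∃ k, (-⌊σ⌋).toNat = k + 1 := ⟨(-⌊σ⌋).toNat - 1, by omega⟩
        obtain ⟨k, hk⟩ := hk
        rw [hk]
        exact iterInt_base t₀ _ k
      have hpt := q_point h hF0
      obtain ⟨C, hC, ρ, hρ, hb⟩ := hpt
      have hcast : (((-⌊τ⌋).toNat - (-⌊σ⌋).toNat : ℕ):ℝ)
          = (((-⌊τ⌋).toNat : ℕ):ℝ) - (((-⌊σ⌋).toNat : ℕ):ℝ) := by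
        push_cast [Nat.cast_sub hmn]
        ring
      have hiter : Q t₀ s' (iterInt t₀ (iterInt t₀ (fun s => f s - f t₀) (-⌊σ⌋).toNat)
          ((-⌊τ⌋).toNat - (-⌊σ⌋).toNat)) (τ + ((-⌊τ⌋).toNat : ℝ)) := by
        apply q_iter _ (iterInt_continuous t₀ _ hch _) t₀ ρ C
          (σ + ((-⌊σ⌋).toNat : ℝ) - s') s' _ _ (by omega) (by linarith) hC.le hρ
          (by linarith) ?_ hb
        rw [hcast]
        linarith
      have hcomp : iterInt t₀ (fun s => f s - f t₀) (-⌊τ⌋).toNat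
          = iterInt t₀ (iterInt t₀ (fun s => f s - f t₀) (-⌊σ⌋).toNat)
              ((-⌊τ⌋).toNat - (-⌊σ⌋).toNat) := by
        funext s
        rw [← iterInt_comp t₀ _ (-⌊σ⌋).toNat ((-⌊τ⌋).toNat - (-⌊σ⌋).toNat) s]
        congr 1
        omega
      rw [hcomp]
      exact hiter

/-- additivity of membership -/
lemma memOn_add (f g : ℝ → ℝ) (hf : Continuous f) (hg : Continuous g) (t₀ σ s' : ℝ)
    (h1 : PseudoMemOn Set.univ f t₀ σ s') (h2 : PseudoMemOn Set.univ g t₀ σ s') :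
    PseudoMemOn Set.univ (fun u => f u + g u) t₀ σ s' := by
  rcases le_or_gt 0 σ with hσ | hσ
  · rw [memOn_univ_iff, if_pos hσ] at h1 h2 ⊢
    exact q_add h1 h2
  · rw [memOn_univ_iff, if_neg (not_le.mpr hσ)] at h1 h2 ⊢
    have heq : iterInt t₀ (fun s => f s + g s - (f t₀ + g t₀)) (-⌊σ⌋).toNat
        = fun s => iterInt t₀ (fun x => f x - f t₀) (-⌊σ⌋).toNat s
            + iterInt t₀ (fun x => g x - g t₀) (-⌊σ⌋).toNat s := by
      funext s
      have hl : (fun s => f s + g s - (f t₀ + g t₀))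
          = fun x => (f x - f t₀) + (g x - g t₀) := by funext x; ring
      rw [hl, iterInt_add t₀ (fun x => f x - f t₀) (fun x => g x - g t₀) (hf.sub continuous_const) (hg.sub continuous_const)]
    rw [heq]
    exact q_add h1 h2

/-- negation -/
lemma memOn_neg (f : ℝ → ℝ) (t₀ σ s' : ℝ)
    (h : PseudoMemOn Set.univ f t₀ σ s') : PseudoMemOn Set.univ (fun u => -(f u)) t₀ σ s' := by
  rcases le_or_gt 0 σ with hσ | hσ
  · rw [memOn_univ_iff, if_pos hσ] at h ⊢
    exact q_neg h
  · rw [memOn_univ_iff, if_neg (not_le.mpr hσ)] at h ⊢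
    have heq : iterInt t₀ (fun s => -f s - -f t₀) (-⌊σ⌋).toNat
        = fun s => -(iterInt t₀ (fun x => f x - f t₀) (-⌊σ⌋).toNat s) := by
      funext s
      have hl : (fun s => -f s - -f t₀) = fun x => -((f x - f t₀)) := by funext x; ring
      rw [hl, iterInt_neg t₀ _]
    rw [heq]
    exact q_neg h
lemma le_frontier_of_mem {f : ℝ → ℝ} {t s' σ : ℝ} (h : PseudoMemOn Set.univ f t σ s') :
    (σ : EReal) ≤ pseudoFrontierOn Set.univ f t s' :=
  le_sSup ⟨σ, rfl, h⟩

lemma exists_mem_of_lt_frontier {f : ℝ → ℝ} {t s' : ℝ} {c : EReal}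
    (h : c < pseudoFrontierOn Set.univ f t s') :
    ∃ σ : ℝ, c < (σ:EReal) ∧ PseudoMemOn Set.univ f t σ s' := by
  obtain ⟨x, hx, hcx⟩ := lt_sSup_iff.mp h
  obtain ⟨σ, rfl, hσ⟩ := hx
  exact ⟨σ, hcx, hσ⟩

/-- a membership of f at a common level above a threshold -/
lemma combine {f g : ℝ → ℝ} (hf : Continuous f) (hg : Continuous g) {t s' : ℝ} {c : ℝ}
    (hcf : (c:EReal) < pseudoFrontierOn Set.univ f t s')
    (hcg : (c:EReal) < pseudoFrontierOn Set.univ g t s') :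
    ∃ σ : ℝ, c ≤ σ ∧ PseudoMemOn Set.univ f t σ s' ∧ PseudoMemOn Set.univ g t σ s' := by
  by_cases hcase : c < 0 ∧ c < s'
  · exact ⟨c, le_refl _, memOn_univ_of_neg f hf t s' c hcase.1 hcase.2.le,
      memOn_univ_of_neg g hg t s' c hcase.1 hcase.2.le⟩
  · obtain ⟨σf, hcσf, hmf⟩ := exists_mem_of_lt_frontier hcf
    obtain ⟨σg, hcσg, hmg⟩ := exists_mem_of_lt_frontier hcg
    have hcσf' : c < σf := by exact_mod_cast hcσf
    have hcσg' : c < σg := by exact_mod_cast hcσg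
    rcases le_or_gt 0 (min σf σg) with hμ | hμ
    · refine ⟨max c 0, le_max_left _ _, ?_, ?_⟩
      · exact memOn_mono_nonneg f t s' _ σf (le_max_right _ _)
          (max_le hcσf'.le (le_trans hμ (min_le_left _ _))) hmf
      · exact memOn_mono_nonneg g t s' _ σg (le_max_right _ _)
          (max_le hcσg'.le (le_trans hμ (min_le_right _ _))) hmg
    · have hc0 : ¬ (0 ≤ c) := by
        intro h0
        have : 0 ≤ min σf σg := le_trans h0 (le_min hcσf'.le hcσg'.le)
        linarith
      push_neg at hcase hc0
      have hs'c : s' ≤ c := hcase hc0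
      have hs0 : s' < 0 := lt_of_le_of_lt hs'c hc0
      refine ⟨min σf σg, (le_min hcσf'.le hcσg'.le), ?_, ?_⟩
      · exact memOn_mono_neg f hf t s' _ σf hμ hs0 (min_le_left _ _) hmf
      · exact memOn_mono_neg g hg t s' _ σg hμ hs0 (min_le_right _ _) hmg

/-- key upper bound: if frontier f < frontier g then frontier (f+g) ≤ frontier f -/
lemma frontier_add_le {f g : ℝ → ℝ} (hf : Continuous f) (hg : Continuous g) {t s' : ℝ}
    (hAB : pseudoFrontierOn Set.univ f t s' < pseudoFrontierOn Set.univ g t s') :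
    pseudoFrontierOn Set.univ (fun u => f u + g u) t s' ≤ pseudoFrontierOn Set.univ f t s' := by
  set A := pseudoFrontierOn Set.univ f t s' with hA
  apply sSup_le
  rintro x ⟨σ, rfl, hmem⟩
  by_contra hcon
  push_neg at hcon
  -- hcon : A < σ
  obtain ⟨σg, hAσg, hmg⟩ := exists_mem_of_lt_frontier hAB
  have hco : ((min σ σg : ℝ) : EReal) = min ((σ:EReal)) ((σg:EReal)) := by
    rcases le_total σ σg with h | h
    · rw [min_eq_left h, min_eq_left (by exact_mod_cast h : (σ:EReal) ≤ (σg:EReal))]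
    · rw [min_eq_right h, min_eq_right (by exact_mod_cast h : (σg:EReal) ≤ (σ:EReal))]
  have hAσg' : A < ((min σ σg : ℝ) : EReal) := by
    rw [hco]; exact lt_min hcon hAσg
  by_cases h1 : A < ((min 0 s' : ℝ) : EReal)
  · obtain ⟨τ, hτ1, hτ2⟩ := EReal.exists_between_coe_real h1
    have hτ2' : τ < min 0 s' := by exact_mod_cast hτ2
    have := le_frontier_of_mem
      (memOn_univ_of_neg f hf t s' τ (lt_of_lt_of_le hτ2' (min_le_left _ _))
        (le_of_lt (lt_of_lt_of_le hτ2' (min_le_right _ _))))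
    exact absurd (lt_of_lt_of_le hτ1 this) (lt_irrefl A)
  · push_neg at h1
    set τ := min σ σg with hτdef
    have hmem_sum_g : PseudoMemOn Set.univ (fun u => f u + g u) t τ s'
        ∧ PseudoMemOn Set.univ g t τ s' := by
      rcases le_or_gt 0 τ with hτ0 | hτ0
      · exact ⟨memOn_mono_nonneg _ t s' τ σ hτ0 (min_le_left _ _) hmem,
          memOn_mono_nonneg g t s' τ σg hτ0 (min_le_right _ _) hmg⟩
      · have hs0 : s' < 0 := by
          by_contra hs0
          push_neg at hs0
          have hmin : min 0 s' = 0 := min_eq_left hs0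
          rw [hmin] at h1
          have : ((0:ℝ) : EReal) < ((τ:ℝ) : EReal) := lt_of_le_of_lt h1 hAσg'
          have : (0:ℝ) < τ := by exact_mod_cast this
          linarith
        exact ⟨memOn_mono_neg _ (hf.add hg) t s' τ σ hτ0 hs0 (min_le_left _ _) hmem,
          memOn_mono_neg g hg t s' τ σg hτ0 hs0 (min_le_right _ _) hmg⟩
    have hmemf : PseudoMemOn Set.univ f t τ s' := by
      have hneg := memOn_neg g t τ s' hmem_sum_g.2
      have hsum := memOn_add (fun u => f u + g u) (fun u => -(g u)) (hf.add hg) hg.neg t τ s' hmem_sum_g.1 hneg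
      have heq : (fun u => (fun u => f u + g u) u + -(g u)) = f := by
        funext u; simp
      rwa [heq] at hsum
    exact absurd (lt_of_lt_of_le hAσg' (le_frontier_of_mem hmemf)) (lt_irrefl A)

/-- the pseudo 2-microlocal frontier of a sum is at least the minimum of the
frontiers, with equality when the two frontiers differ. -/
theorem pseudoFrontier_add (f g : ℝ → ℝ) (hf : Continuous f) (hg : Continuous g)
    (t s' : ℝ) :
    min (pseudoFrontierOn Set.univ f t s') (pseudoFrontierOn Set.univ g t s')
        ≤ pseudoFrontierOn Set.univ (fun u => f u + g u) t s' ∧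
      (pseudoFrontierOn Set.univ f t s' ≠ pseudoFrontierOn Set.univ g t s' →
        pseudoFrontierOn Set.univ (fun u => f u + g u) t s'
          = min (pseudoFrontierOn Set.univ f t s') (pseudoFrontierOn Set.univ g t s')) := by
  have part1 : min (pseudoFrontierOn Set.univ f t s') (pseudoFrontierOn Set.univ g t s')
      ≤ pseudoFrontierOn Set.univ (fun u => f u + g u) t s' := by
    by_contra hlt
    push_neg at hlt
    obtain ⟨c, hc1, hc2⟩ := EReal.exists_between_coe_real hlt
    have hcA : (c:EReal) < pseudoFrontierOn Set.univ f t s' :=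
      lt_of_lt_of_le hc2 (min_le_left _ _)
    have hcB : (c:EReal) < pseudoFrontierOn Set.univ g t s' :=
      lt_of_lt_of_le hc2 (min_le_right _ _)
    obtain ⟨σ, hcσ, hmf, hmg⟩ := combine hf hg hcA hcB
    have hmem := memOn_add f g hf hg t σ s' hmf hmg
    have h1 : (σ:EReal) ≤ pseudoFrontierOn Set.univ (fun u => f u + g u) t s' :=
      le_frontier_of_mem hmem
    have h2 : (c:EReal) ≤ (σ:EReal) := by exact_mod_cast hcσ
    exact absurd (lt_of_le_of_lt (le_trans h2 h1) hc1) (lt_irrefl _)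
  refine ⟨part1, fun hne => ?_⟩
  rcases lt_or_gt_of_ne hne with hAB | hBA
  · refine le_antisymm ?_ part1
    have := frontier_add_le hf hg hAB
    exact le_min this (le_trans this hAB.le)
  · refine le_antisymm ?_ part1
    have hcomm : (fun u => f u + g u) = (fun u => g u + f u) := by
      funext u; ring
    have := frontier_add_le hg hf hBA
    rw [hcomm]
    exact le_min (le_trans this hBA.le) this
end
end

section
/- Let V : [0,∞) → [0,∞) be continuous and non-decreasing, let h : [0,∞) → ℝ be continuous, and define A(t) = ∫_{(0,t]} h(s)² dμ_V(s), where μ_V is the Lebesgue–Stieltjes measure associated with V. Fix t ∈ [0,∞) with h(t) ≠ 0. Then for every s' ≥ −ᾱ_{A,t}, the pseudo 2-microlocal frontiers satisfy Σ_{A,t}(s') = Σ_{V,t}(s'). -/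
open MeasureTheory Metric Set Filter

noncomputable section

lemma memOn_neg_s7 (f : ℝ → ℝ) (hf : Monotone f) (t : ℝ) (_ht : 0 ≤ t)
    (σ s' β K ρ₂ : ℝ) (hσ1 : -1 < σ) (hσ0 : σ < 0) (hβ0 : 0 ≤ β) (hβ : σ - s' ≤ β)
    (hK : 0 < K) (hρ₂ : 0 < ρ₂)
    (H : ∀ s ∈ Metric.ball t ρ₂ ∩ Set.Ici 0, |f s - f t| ≤ K * |s - t| ^ β) :
    PseudoMemOn (Set.Ici 0) f t σ s' := by
  have hfl : ⌊σ⌋ = -1 := by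
    rw [Int.floor_eq_iff]
    constructor <;> push_cast <;> linarith
  have hfloor : (-⌊σ⌋).toNat = 1 := by rw [hfl]; rfl
  unfold PseudoMemOn
  rw [if_neg (not_le.2 hσ0)]
  simp only [hfloor, iterInt, Nat.cast_one]
  refine ⟨K, hK, min (ρ₂ / 2) 2⁻¹, by positivity, ?_⟩
  rintro u ⟨hu, hu0⟩ v ⟨hv, hv0⟩
  rw [mem_ball, Real.dist_eq] at hu hv
  have hu' : |u - t| < ρ₂ / 2 := lt_of_lt_of_le hu (min_le_left _ _)
  have hv' : |v - t| < ρ₂ / 2 := lt_of_lt_of_le hv (min_le_left _ _)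
  have hu2 : |u - t| < 2⁻¹ := lt_of_lt_of_le hu (min_le_right _ _)
  have hv2 : |v - t| < 2⁻¹ := lt_of_lt_of_le hv (min_le_right _ _)
  set R := |u - t| + |v - t| with hRdef
  have hRρ₂ : R < ρ₂ := by simp only [hRdef]; linarith
  have hR1 : R ≤ 1 := by simp only [hRdef]; linarith
  have hR0 : 0 ≤ R := by positivity
  rcases eq_or_ne u v with rfl | huv
  · simp only [sub_self, abs_zero]
    positivity
  · have hint : ∀ a b : ℝ, IntervalIntegrable (fun s => f s - f t) volume a b :=
      fun a b => Monotone.intervalIntegrable (fun x y hxy => sub_le_sub_right (hf hxy) _)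
    have hdiff : ((∫ s in t..u, (f s - f t)) - ∫ s in t..v, (f s - f t))
        = ∫ s in v..u, (f s - f t) := by
      rw [← intervalIntegral.integral_add_adjacent_intervals (hint v t) (hint t u),
        intervalIntegral.integral_symm t v]
      ring
    have hle : |u - v| ≤ R := by
      simp only [hRdef]
      calc |u - v| = |(u - t) - (v - t)| := by ring_nf
        _ ≤ |u - t| + |v - t| := abs_sub _ _
    have huvpos : 0 < |u - v| := abs_pos.2 (sub_ne_zero.2 huv)
    have hRpos : 0 < R := lt_of_lt_of_le huvpos hle
    have hbound : ∀ s ∈ Set.uIoc v u, |f s - f t| ≤ K * R ^ β := by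
      intro s hs
      have h2 := neg_abs_le (v - t); have h3 := le_abs_self (u - t)
      have h4 := neg_abs_le (u - t); have h5 := le_abs_self (v - t)
      have h6 := abs_nonneg (u - t); have h7 := abs_nonneg (v - t)
      have hs1 : min v u < s := hs.1
      have hs2 : s ≤ max v u := hs.2
      have hmin : min v u ≤ s := hs1.le
      have hlow : t - R ≤ v ⊓ u := le_inf (by linarith [hRdef]) (by linarith [hRdef])
      have hup : v ⊔ u ≤ t + R := sup_le (by linarith [hRdef]) (by linarith [hRdef])
      have hst : |s - t| ≤ R := by
        rw [abs_le]
        exact ⟨by linarith [le_trans hlow hs1.le], by linarith [le_trans hs2 hup]⟩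
      have hs0 : (0:ℝ) ≤ s := le_trans (le_min hv0 hu0) hmin
      have hsb : s ∈ Metric.ball t ρ₂ ∩ Set.Ici 0 :=
        ⟨by rw [mem_ball, Real.dist_eq]; exact lt_of_le_of_lt hst hRρ₂, hs0⟩
      calc |f s - f t| ≤ K * |s - t| ^ β := H s hsb
        _ ≤ K * R ^ β := by
            exact mul_le_mul_of_nonneg_left (Real.rpow_le_rpow (abs_nonneg _) hst hβ0) hK.le
    have key : |∫ s in v..u, (f s - f t)| ≤ (K * R ^ β) * |u - v| := by
      have := intervalIntegral.norm_integral_le_of_norm_le_const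
        (a := v) (b := u) (f := fun s => f s - f t) (C := K * R ^ β)
        (fun x hx => by simpa using hbound x hx)
      simpa using this
    have hsplit : |u - v| = |u - v| ^ (σ + 1) * |u - v| ^ (-σ) := by
      rw [← Real.rpow_add huvpos]
      norm_num
    have e1 : |u - v| ^ (-σ) ≤ R ^ (-σ) :=
      Real.rpow_le_rpow (abs_nonneg _) hle (by linarith)
    have e2 : R ^ β * R ^ (-σ) = R ^ (β + -σ) := (Real.rpow_add hRpos _ _).symm
    have e3 : R ^ (β + -σ) ≤ R ^ (-s') :=
      Real.rpow_le_rpow_of_exponent_ge hRpos hR1 (by linarith)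
    have p1 : 0 ≤ |u - v| ^ (σ + 1) := Real.rpow_nonneg (abs_nonneg _) _
    have p2 : 0 ≤ R ^ β := Real.rpow_nonneg hR0 _
    rw [hdiff]
    calc |∫ s in v..u, (f s - f t)|
        ≤ (K * R ^ β) * |u - v| := key
      _ = K * R ^ β * (|u - v| ^ (σ + 1) * |u - v| ^ (-σ)) := by rw [← hsplit]
      _ ≤ K * R ^ β * (|u - v| ^ (σ + 1) * R ^ (-σ)) := by
          refine mul_le_mul_of_nonneg_left ?_ (by positivity)
          exact mul_le_mul_of_nonneg_left e1 p1
      _ = K * (R ^ β * R ^ (-σ)) * |u - v| ^ (σ + 1) := by ring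
      _ = K * R ^ (β + -σ) * |u - v| ^ (σ + 1) := by rw [e2]
      _ ≤ K * R ^ (-s') * |u - v| ^ (σ + 1) := by
          refine mul_le_mul_of_nonneg_right (mul_le_mul_of_nonneg_left e3 hK.le) p1
      _ = K * |u - v| ^ (σ + 1) * R ^ (-s') := by ring

lemma memOn_of_comparison (f g : ℝ → ℝ) (t c ρ₀ : ℝ) (hc : 0 < c) (hρ₀ : 0 < ρ₀)
    (hcmp : ∀ u ∈ Metric.ball t ρ₀ ∩ Set.Ici 0, ∀ v ∈ Metric.ball t ρ₀ ∩ Set.Ici 0,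
      |f u - f v| ≤ c * |g u - g v|)
    (σ s' : ℝ) (hσ : 0 ≤ σ) (hg : PseudoMemOn (Set.Ici 0) g t σ s') :
    PseudoMemOn (Set.Ici 0) f t σ s' := by
  unfold PseudoMemOn at hg ⊢
  rw [if_pos hσ] at hg ⊢
  obtain ⟨C, hC, ρ, hρ, hbd⟩ := hg
  refine ⟨c * C, by positivity, min ρ ρ₀, lt_min hρ hρ₀, ?_⟩
  rintro u ⟨hu, hu0⟩ v ⟨hv, hv0⟩
  have hu1 : u ∈ Metric.ball t ρ ∩ Set.Ici 0 :=
    ⟨Metric.ball_subset_ball (min_le_left _ _) hu, hu0⟩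
  have hv1 : v ∈ Metric.ball t ρ ∩ Set.Ici 0 :=
    ⟨Metric.ball_subset_ball (min_le_left _ _) hv, hv0⟩
  have hu2 : u ∈ Metric.ball t ρ₀ ∩ Set.Ici 0 :=
    ⟨Metric.ball_subset_ball (min_le_right _ _) hu, hu0⟩
  have hv2 : v ∈ Metric.ball t ρ₀ ∩ Set.Ici 0 :=
    ⟨Metric.ball_subset_ball (min_le_right _ _) hv, hv0⟩
  calc |f u - f v| ≤ c * |g u - g v| := hcmp u hu2 v hv2
    _ ≤ c * (C * |u - v| ^ σ * (|u - t| + |v - t|) ^ (-s')) :=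
        mul_le_mul_of_nonneg_left (hbd u hu1 v hv1) hc.le
    _ = c * C * |u - v| ^ σ * (|u - t| + |v - t|) ^ (-s') := by ring

/-- for `A(t) = ∫_{(0,t]} h(s)² dμ_V(s)` (with `μ_V` the Lebesgue–Stieltjes
measure of the continuous non-decreasing function `V : [0,∞) → [0,∞)`, encoded here as a
`StieltjesFunction` continuous and nonnegative on `[0,∞)`), at a point `t ≥ 0` with
`h(t) ≠ 0`, the pseudo 2-microlocal frontiers of `A` and `V` coincide for all
`s' ≥ -ᾱ_{A,t}`. -/
theorem pseudoFrontier_stieltjesIntegral_ne_zero (V : StieltjesFunction ℝ)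
    (hVcont : ContinuousOn (fun x => V x) (Set.Ici (0:ℝ)))
    (hVnonneg : ∀ t : ℝ, 0 ≤ t → 0 ≤ V t)
    (h : ℝ → ℝ) (hh : ContinuousOn h (Set.Ici (0:ℝ)))
    (A : ℝ → ℝ) (hA : ∀ t : ℝ, A t = ∫ s in Set.Ioc (0:ℝ) t, (h s) ^ 2 ∂V.measure)
    (t : ℝ) (ht : 0 ≤ t) (hht : h t ≠ 0) :
    ∀ s' : ℝ, -(pseudoPointwiseExpOn (Set.Ici 0) A t) ≤ (s' : EReal) →
      pseudoFrontierOn (Set.Ici 0) A t s'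
        = pseudoFrontierOn (Set.Ici 0) (fun x => V x) t s' := by
  intro s' hs'
  have h2pos : 0 < (h t) ^ 2 := lt_of_le_of_ne (sq_nonneg _) (Ne.symm (pow_ne_zero 2 hht))
  set c₁ : ℝ := (h t) ^ 2 / 4 with hc₁def
  set c₂ : ℝ := 4 * (h t) ^ 2 with hc₂def
  have hc₁pos : 0 < c₁ := by rw [hc₁def]; positivity
  have hc₂pos : 0 < c₂ := by rw [hc₂def]; positivity
  -- bounds on h² near t
  obtain ⟨ρ₀, hρ₀pos, hball⟩ : ∃ ρ₀ > (0:ℝ), ∀ s ∈ Metric.ball t ρ₀ ∩ Set.Ici 0,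
      c₁ ≤ (h s) ^ 2 ∧ (h s) ^ 2 ≤ c₂ := by
    have hct : ContinuousWithinAt h (Set.Ici 0) t := hh t ht
    rw [Metric.continuousWithinAt_iff] at hct
    obtain ⟨δ, hδ, hδ'⟩ := hct (|h t| / 2) (by positivity)
    refine ⟨δ, hδ, ?_⟩
    rintro s ⟨hs1, hs2⟩
    have hd : dist (h s) (h t) < |h t| / 2 :=
      hδ' hs2 (by rwa [mem_ball] at hs1)
    rw [Real.dist_eq] at hd
    have e1 : |h t| - |h s| ≤ |h t - h s| := abs_sub_abs_le_abs_sub _ _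
    have e2 : |h s| - |h t| ≤ |h s - h t| := abs_sub_abs_le_abs_sub _ _
    have e3 : |h t - h s| = |h s - h t| := abs_sub_comm _ _
    have e4 : |h s| ^ 2 = (h s) ^ 2 := sq_abs _
    have e5 : |h t| ^ 2 = (h t) ^ 2 := sq_abs _
    have e6 : 0 ≤ |h s| := abs_nonneg _
    have e7 : 0 ≤ |h t| := abs_nonneg _
    constructor
    · rw [hc₁def]; nlinarith
    · rw [hc₂def]; nlinarith
  -- integrability
  have hinteg : ∀ x : ℝ, IntegrableOn (fun s => (h s) ^ 2) (Set.Ioc 0 x) V.measure := by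
    intro x
    rcases le_or_gt x 0 with hx | hx
    · rw [Set.Ioc_eq_empty (by exact fun hc => absurd (lt_of_lt_of_le hc hx) (lt_irrefl 0))]
      exact integrableOn_empty
    · exact (ContinuousOn.integrableOn_compact isCompact_Icc
        ((hh.mono (Set.Icc_subset_Ici_self)).pow 2)).mono_set Set.Ioc_subset_Icc_self
  -- splitting
  have hsplit : ∀ u v : ℝ, 0 ≤ v → v ≤ u →
      A u - A v = ∫ s in Set.Ioc v u, (h s) ^ 2 ∂V.measure := by
    intro u v hv hvu
    rw [hA u, hA v, ← Set.Ioc_union_Ioc_eq_Ioc hv hvu,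
      MeasureTheory.setIntegral_union (Set.Ioc_disjoint_Ioc_of_le le_rfl) measurableSet_Ioc
        (hinteg v) ((hinteg u).mono_set (Set.Ioc_subset_Ioc_left hv))]
    ring
  -- A monotone
  have hAmono : Monotone A := by
    intro x y hxy
    rw [hA x, hA y]
    refine MeasureTheory.setIntegral_mono_set (hinteg y)
      (Filter.Eventually.of_forall fun s => sq_nonneg _)
      (HasSubset.Subset.eventuallyLE (Set.Ioc_subset_Ioc_right hxy))
  -- two-sided comparison
  have hcomp : ∀ u ∈ Metric.ball t ρ₀ ∩ Set.Ici 0, ∀ v ∈ Metric.ball t ρ₀ ∩ Set.Ici 0,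
      v ≤ u → c₁ * (V u - V v) ≤ A u - A v ∧ A u - A v ≤ c₂ * (V u - V v) := by
    rintro u ⟨hu, hu0⟩ v ⟨hv, hv0⟩ hvu
    have hsub : Set.Ioc v u ⊆ Metric.ball t ρ₀ ∩ Set.Ici 0 := by
      rintro s ⟨hs1, hs2⟩
      rw [mem_ball, Real.dist_eq, abs_lt] at hu hv
      refine ⟨?_, le_trans hv0 hs1.le⟩
      rw [mem_ball, Real.dist_eq, abs_lt]
      exact ⟨by linarith, by linarith⟩
    rw [hsplit u v hv0 hvu]
    have hμ : (V.measure (Set.Ioc v u)).toReal = V u - V v := by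
      rw [StieltjesFunction.measure_Ioc,
        ENNReal.toReal_ofReal (by linarith [V.mono hvu] : (0:ℝ) ≤ V u - V v)]
    have hIu : IntegrableOn (fun s => (h s) ^ 2) (Set.Ioc v u) V.measure :=
      (hinteg u).mono_set (Set.Ioc_subset_Ioc_left hv0)
    have hconst : ∀ c : ℝ, IntegrableOn (fun _ => c) (Set.Ioc v u) V.measure := by
      intro c
      refine (MeasureTheory.integrableOn_const_iff).2 (Or.inr ?_)
      rw [StieltjesFunction.measure_Ioc]
      exact ENNReal.ofReal_lt_top
    constructor
    · calc c₁ * (V u - V v) = ∫ _ in Set.Ioc v u, c₁ ∂V.measure := by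
            rw [MeasureTheory.setIntegral_const, measureReal_def, hμ, smul_eq_mul]; ring
        _ ≤ ∫ s in Set.Ioc v u, (h s) ^ 2 ∂V.measure :=
            setIntegral_mono_on (hconst c₁) hIu measurableSet_Ioc
              (fun s hs => (hball s (hsub hs)).1)
    · calc (∫ s in Set.Ioc v u, (h s) ^ 2 ∂V.measure)
          ≤ ∫ _ in Set.Ioc v u, c₂ ∂V.measure :=
            setIntegral_mono_on hIu (hconst c₂) measurableSet_Ioc
              (fun s hs => (hball s (hsub hs)).2)
        _ = c₂ * (V u - V v) := by rw [MeasureTheory.setIntegral_const, measureReal_def, hμ, smul_eq_mul]; ring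
  -- absolute-value comparisons
  have hAV : ∀ u ∈ Metric.ball t ρ₀ ∩ Set.Ici 0, ∀ v ∈ Metric.ball t ρ₀ ∩ Set.Ici 0,
      |A u - A v| ≤ c₂ * |V u - V v| ∧ |V u - V v| ≤ c₁⁻¹ * |A u - A v| := by
    have key : ∀ u ∈ Metric.ball t ρ₀ ∩ Set.Ici 0, ∀ v ∈ Metric.ball t ρ₀ ∩ Set.Ici 0,
        v ≤ u → |A u - A v| ≤ c₂ * |V u - V v| ∧ |V u - V v| ≤ c₁⁻¹ * |A u - A v| := by
      intro u hu v hv hvu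
      obtain ⟨h1, h2⟩ := hcomp u hu v hv hvu
      have hV0 : (0:ℝ) ≤ V u - V v := by linarith [V.mono hvu]
      have hA0 : (0:ℝ) ≤ A u - A v := sub_nonneg.2 (hAmono hvu)
      rw [abs_of_nonneg hA0, abs_of_nonneg hV0]
      refine ⟨h2, ?_⟩
      have h3 := mul_le_mul_of_nonneg_left h1 (inv_nonneg.2 hc₁pos.le)
      rwa [← mul_assoc, inv_mul_cancel₀ hc₁pos.ne', one_mul] at h3
    intro u hu v hv
    rcases le_total v u with hvu | hvu
    · exact key u hu v hv hvu
    · rw [abs_sub_comm (A u), abs_sub_comm (V u)]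
      exact key v hv u hu hvu
  -- Hölder exponents from the hypothesis
  have hs'2 : ∀ σ : ℝ, σ < 0 → ∃ α : ℝ, σ - s' < α ∧
      Filter.limsup
        (fun ρ : ℝ => ⨆ u ∈ Metric.ball t ρ ∩ Set.Ici 0, ⨆ v ∈ Metric.ball t ρ ∩ Set.Ici 0,
          ENNReal.ofReal (|A u - A v| / ρ ^ α)) (nhdsWithin 0 (Set.Ioi 0)) < ⊤ := by
    intro σ hσ
    have h2 : ((-s' : ℝ) : EReal) ≤ pseudoPointwiseExpOn (Set.Ici 0) A t := by
      rw [EReal.coe_neg]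
      exact EReal.neg_le.1 hs'
    have h1 : ((σ - s' : ℝ) : EReal) < pseudoPointwiseExpOn (Set.Ici 0) A t :=
      lt_of_lt_of_le (by exact_mod_cast (by linarith : σ - s' < -s')) h2
    rw [pseudoPointwiseExpOn, lt_sSup_iff] at h1
    obtain ⟨x, ⟨α, rfl, hlim⟩, hx⟩ := h1
    exact ⟨α, by exact_mod_cast hx, hlim⟩
  -- Hölder-type bounds for A
  have hHold : ∀ σ : ℝ, σ < 0 → ∃ β K ρ₂ : ℝ, 0 ≤ β ∧ σ - s' ≤ β ∧ 0 < K ∧ 0 < ρ₂ ∧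
      ∀ s ∈ Metric.ball t ρ₂ ∩ Set.Ici 0, |A s - A t| ≤ K * |s - t| ^ β := by
    intro σ hσ
    obtain ⟨α, hα1, hα2⟩ := hs'2 σ hσ
    rcases le_or_gt 0 α with hα0 | hα0
    · set L := Filter.limsup
        (fun ρ : ℝ => ⨆ u ∈ Metric.ball t ρ ∩ Set.Ici 0, ⨆ v ∈ Metric.ball t ρ ∩ Set.Ici 0,
          ENNReal.ofReal (|A u - A v| / ρ ^ α)) (nhdsWithin 0 (Set.Ioi 0)) with hLdef
      have hL1 : L < L + 1 := ENNReal.lt_add_right hα2.ne one_ne_zero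
      have hev := Filter.eventually_lt_of_limsup_lt hL1
      rw [eventually_nhdsWithin_iff, Metric.eventually_nhds_iff] at hev
      obtain ⟨ε, hε, hev⟩ := hev
      set M := (L + 1).toReal with hMdef
      have hM0 : 0 ≤ M := ENNReal.toReal_nonneg
      have hM : ∀ ρ : ℝ, 0 < ρ → ρ < ε → ∀ u ∈ Metric.ball t ρ ∩ Set.Ici 0,
          ∀ v ∈ Metric.ball t ρ ∩ Set.Ici 0, |A u - A v| ≤ M * ρ ^ α := by
        intro ρ hρ1 hρ2 u hu v hv
        have h3 := hev (y := ρ) (by rw [Real.dist_eq, sub_zero, abs_of_pos hρ1]; exact hρ2) hρ1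
        have h4 : ENNReal.ofReal (|A u - A v| / ρ ^ α) ≤ L + 1 := by
          refine le_trans (le_trans ?_ (le_biSup _ hu)) h3.le
          exact le_biSup (fun v => ENNReal.ofReal (|A u - A v| / ρ ^ α)) hv
        rw [ENNReal.ofReal_le_iff_le_toReal
          (ENNReal.add_ne_top.2 ⟨hα2.ne, ENNReal.one_ne_top⟩)] at h4
        rw [div_le_iff₀ (Real.rpow_pos_of_pos hρ1 α)] at h4
        exact h4
      refine ⟨α, M * 2 ^ α + 1, ε / 2, hα0, hα1.le, by positivity, by positivity, ?_⟩
      rintro s ⟨hs1, hs2⟩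
      rcases eq_or_ne s t with rfl | hst
      · simp only [sub_self, abs_zero]
        positivity
      · have hd : 0 < |s - t| := abs_pos.2 (sub_ne_zero.2 hst)
        rw [mem_ball, Real.dist_eq] at hs1
        have h5 := hM (2 * |s - t|) (by positivity) (by linarith) s
          ⟨by rw [mem_ball, Real.dist_eq]; linarith, hs2⟩ t
          ⟨by rw [mem_ball, Real.dist_eq, sub_self, abs_zero]; positivity, ht⟩
        rw [Real.mul_rpow (by norm_num) (abs_nonneg _)] at h5
        have h6 : 0 ≤ |s - t| ^ α := Real.rpow_nonneg (abs_nonneg _) _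
        have h7 : 0 ≤ (2:ℝ) ^ α := Real.rpow_nonneg (by norm_num) _
        nlinarith [h5, mul_nonneg (mul_nonneg hM0 h7) h6]
    · refine ⟨0, A (t+1) - A (t-1) + 1, 1, le_rfl, by linarith, ?_, one_pos, ?_⟩
      · have : A (t-1) ≤ A (t+1) := hAmono (by linarith)
        linarith
      · rintro s ⟨hs1, hs2⟩
        rw [mem_ball, Real.dist_eq, abs_lt] at hs1
        rw [Real.rpow_zero, mul_one]
        have hb1 : A s ≤ A (t+1) := hAmono (by linarith)
        have hb2 : A (t-1) ≤ A s := hAmono (by linarith)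
        have hb3 : A (t-1) ≤ A t := hAmono (by linarith)
        have hb4 : A t ≤ A (t+1) := hAmono (by linarith)
        rw [abs_le]
        constructor <;> linarith
  -- memberships for negative σ
  have htball : t ∈ Metric.ball t ρ₀ ∩ Set.Ici 0 := ⟨mem_ball_self hρ₀pos, ht⟩
  have hmemA : ∀ σ : ℝ, -1 < σ → σ < 0 → PseudoMemOn (Set.Ici 0) A t σ s' := by
    intro σ h1 h2
    obtain ⟨β, K, ρ₂, hβ0, hβ, hK, hρ₂, hH⟩ := hHold σ h2
    exact memOn_neg_s7 A hAmono t ht σ s' β K ρ₂ h1 h2 hβ0 hβ hK hρ₂ hH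
  have hmemV : ∀ σ : ℝ, -1 < σ → σ < 0 → PseudoMemOn (Set.Ici 0) (fun x => V x) t σ s' := by
    intro σ h1 h2
    obtain ⟨β, K, ρ₂, hβ0, hβ, hK, hρ₂, hH⟩ := hHold σ h2
    refine memOn_neg_s7 (fun x => V x) V.mono t ht σ s' β (c₁⁻¹ * K) (min ρ₂ ρ₀) h1 h2 hβ0 hβ
      (by positivity) (lt_min hρ₂ hρ₀pos) ?_
    rintro s ⟨hs1, hs2⟩
    have hsball : s ∈ Metric.ball t ρ₀ ∩ Set.Ici 0 :=
      ⟨Metric.ball_subset_ball (min_le_right _ _) hs1, hs2⟩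
    have hsball2 : s ∈ Metric.ball t ρ₂ ∩ Set.Ici 0 :=
      ⟨Metric.ball_subset_ball (min_le_left _ _) hs1, hs2⟩
    calc |(fun x => (V x : ℝ)) s - (fun x => (V x : ℝ)) t| ≤ c₁⁻¹ * |A s - A t| :=
        (hAV s hsball t htball).2
      _ ≤ c₁⁻¹ * (K * |s - t| ^ β) := mul_le_mul_of_nonneg_left (hH s hsball2) (by positivity)
      _ = c₁⁻¹ * K * |s - t| ^ β := by ring
  -- frontiers are nonnegative
  have hfr : ∀ f : ℝ → ℝ, (∀ σ : ℝ, -1 < σ → σ < 0 → PseudoMemOn (Set.Ici 0) f t σ s') →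
      (0 : EReal) ≤ pseudoFrontierOn (Set.Ici 0) f t s' := by
    intro f hf
    by_contra hcon
    push_neg at hcon
    obtain ⟨c, hc1, hc2⟩ := exists_between hcon
    have hhalf : (((-2⁻¹ : ℝ)) : EReal) ≤ pseudoFrontierOn (Set.Ici 0) f t s' :=
      le_sSup ⟨-2⁻¹, rfl, hf (-2⁻¹) (by norm_num) (by norm_num)⟩
    have hcbot : c ≠ ⊥ := by
      intro hb
      rw [hb] at hc1
      exact absurd (lt_of_le_of_lt hhalf hc1) (by simp)
    have hctop : c ≠ ⊤ := by
      intro hb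
      rw [hb] at hc2
      exact absurd hc2 (by simp)
    set σ := c.toReal with hσdef
    have hσeq : (σ : EReal) = c := EReal.coe_toReal hctop hcbot
    have hσ0 : σ < 0 := by
      have h9 : (σ : EReal) < ((0:ℝ) : EReal) := by
        rw [hσeq]
        exact_mod_cast hc2
      exact_mod_cast h9
    have hσ1 : -1 < σ := by
      have h9 : ((-2⁻¹ : ℝ) : EReal) < (σ : EReal) := by
        rw [hσeq]
        exact lt_of_le_of_lt hhalf hc1
      have h10 : (-2⁻¹ : ℝ) < σ := by exact_mod_cast h9
      linarith
    have h10 : (σ : EReal) ≤ pseudoFrontierOn (Set.Ici 0) f t s' :=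
      le_sSup ⟨σ, rfl, hf σ hσ1 hσ0⟩
    rw [hσeq] at h10
    exact absurd (lt_of_le_of_lt h10 hc1) (lt_irrefl c)
  -- comparisons packaged
  have hc₂' : ∀ u ∈ Metric.ball t ρ₀ ∩ Set.Ici 0, ∀ v ∈ Metric.ball t ρ₀ ∩ Set.Ici 0,
      |A u - A v| ≤ c₂ * |(fun x => (V x : ℝ)) u - (fun x => (V x : ℝ)) v| :=
    fun u hu v hv => (hAV u hu v hv).1
  have hc₁' : ∀ u ∈ Metric.ball t ρ₀ ∩ Set.Ici 0, ∀ v ∈ Metric.ball t ρ₀ ∩ Set.Ici 0,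
      |(fun x => (V x : ℝ)) u - (fun x => (V x : ℝ)) v| ≤ c₁⁻¹ * |A u - A v| :=
    fun u hu v hv => (hAV u hu v hv).2
  -- conclusion
  apply le_antisymm
  · rw [show pseudoFrontierOn (Set.Ici 0) A t s'
        = sSup {x : EReal | ∃ σ : ℝ, x = (σ : EReal) ∧ PseudoMemOn (Set.Ici 0) A t σ s'}
      from rfl]
    apply sSup_le
    rintro x ⟨σ, rfl, hmem⟩
    rcases le_or_gt 0 σ with hσ | hσ
    · exact le_sSup ⟨σ, rfl, memOn_of_comparison (fun x => V x) A t c₁⁻¹ ρ₀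
        (by positivity) hρ₀pos hc₁' σ s' hσ hmem⟩
    · refine le_trans ?_ (hfr _ hmemV)
      exact_mod_cast hσ.le
  · rw [show pseudoFrontierOn (Set.Ici 0) (fun x => (V x : ℝ)) t s'
        = sSup {x : EReal | ∃ σ : ℝ, x = (σ : EReal)
            ∧ PseudoMemOn (Set.Ici 0) (fun x => (V x : ℝ)) t σ s'}
      from rfl]
    apply sSup_le
    rintro x ⟨σ, rfl, hmem⟩
    rcases le_or_gt 0 σ with hσ | hσ
    · exact le_sSup ⟨σ, rfl, memOn_of_comparison A (fun x => V x) t c₂ ρ₀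
        hc₂pos hρ₀pos hc₂' σ s' hσ hmem⟩
    · refine le_trans ?_ (hfr _ hmemA)
      exact_mod_cast hσ.le

end
end
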